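/- arXiv:1403.1625 — 8 statements merged into one kernel-verified Lean document; each statement's English description precedes it below -/
import Mathlib

section
/- Let N ≥ 1 and let Q = (q_{ij}) be a symmetric N×N real matrix. For each n ≥ 1 define the symmetric n×n matrix Q_n = (q̃_{ij})_{i,j∈[n]} by q̃_{ij} := q_{ī j̄}, where ī, j̄ ∈ [N] are determined by i ≡ ī (mod N) and j ≡ j̄ (mod N). Let t be a complex-valued function on pair partitions satisfying hypotheses (i)–(iii) of the context. For a pair partition V define t^{*n}_{Q_n}(V) := n^{−|V|} · Σ_{c : V → [n]} ( Π_{((p,p')∈cr(V)} q̃_{c(p),c(p')} ) · ( Π_{b∈[n]} t(c^{−1}(b)) ), and t_Q(V) := N^{−|V|} · Σ_{d : V → [N]} Π_{((p,p')∈cr(V)} q_{d(p),d(p')}. Then for every pair partition V, t^{*n}_{Q_n}(V) converges to t_Q(V) as n → ∞. -/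
open Finset Filter

/-- `V` is a pair partition (of its underlying finite point set): pairs `(l,r)` with
`l < r` and pairwise distinct entries. -/
def IsPP (V : Finset (ℕ × ℕ)) : Prop :=
  (∀ p ∈ V, p.1 < p.2) ∧
  (∀ p ∈ V, ∀ q ∈ V, p ≠ q → p.1 ≠ q.1 ∧ p.1 ≠ q.2 ∧ p.2 ≠ q.1 ∧ p.2 ≠ q.2)

/-- The underlying point set of a pair partition. -/
def ppPoints (V : Finset (ℕ × ℕ)) : Finset ℕ :=
  V.image Prod.fst ∪ V.image Prod.snd

/-- The set of crossings `cr(V) = {((a₁,z₁),(a₂,z₂)) ∈ V × V : a₁ < a₂ < z₁ < z₂}`. -/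
def ppCrossings (V : Finset (ℕ × ℕ)) : Finset ((ℕ × ℕ) × (ℕ × ℕ)) :=
  (V ×ˢ V).filter fun pq => pq.1.1 < pq.2.1 ∧ pq.2.1 < pq.1.2 ∧ pq.1.2 < pq.2.2

/-- The value of a coloring `c : V → [n]` on a pair `p`, extended by `0` off `V`. -/
def colorOf (V : Finset (ℕ × ℕ)) (n : ℕ)
    (c : {p // p ∈ V} → {b // b ∈ Finset.Icc 1 n}) (p : ℕ × ℕ) : ℕ :=
  if h : p ∈ V then (c ⟨p, h⟩ : ℕ) else 0

/-- `t^{*n}_{Q_n}(V) := n^{-|V|} Σ_{c : V → [n]} (Π_{(p,p') ∈ cr(V)} q̃_{c(p),c(p')})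
(Π_{b ∈ [n]} t(c^{-1}(b)))`. -/
noncomputable def tQn (t : Finset (ℕ × ℕ) → ℂ) (qt : ℕ → ℕ → ℝ) (n : ℕ)
    (V : Finset (ℕ × ℕ)) : ℂ :=
  (n : ℂ)⁻¹ ^ V.card *
    ∑ c : {p // p ∈ V} → {b // b ∈ Finset.Icc 1 n},
      (∏ x ∈ ppCrossings V, ((qt (colorOf V n c x.1) (colorOf V n c x.2) : ℝ) : ℂ)) *
        ∏ b ∈ Finset.Icc 1 n, t (V.filter fun p => colorOf V n c p = b)

/-- `t_Q(V) := N^{-|V|} Σ_{d : V → [N]} Π_{(p,p') ∈ cr(V)} q_{d(p),d(p')}`. -/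
noncomputable def tQlim (q : ℕ → ℕ → ℝ) (N : ℕ) (V : Finset (ℕ × ℕ)) : ℂ :=
  (N : ℂ)⁻¹ ^ V.card *
    ∑ d : {p // p ∈ V} → {b // b ∈ Finset.Icc 1 N},
      ∏ x ∈ ppCrossings V, ((q (colorOf V N d x.1) (colorOf V N d x.2) : ℝ) : ℂ)

/-!
Write the summand of `t^{*n}_{Q_n}(V)` as `F(c̄) · G(c)`: the crossing weight `F` depends only on
the reduction `c̄ : V → [N]` of the colouring `c : V → [n]` modulo `N`, and
`G(c) = ∏_b t(c⁻¹(b))`. Each `d : V → [N]` is the reduction of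
`∏_p #{b ∈ [n] : b̄ = d(p)} ∼ (n/N)^{|V|}` colourings, so `n^{-|V|} ∑_c F(c̄) → t_Q(V)`.
For injective `c` every colour class is a single pair or empty, so `G(c) = 1` by normalization;
the other colourings form a fraction `1 - n(n-1)⋯(n-|V|+1)/n^{|V|} → 0` of all of them and
carry uniformly bounded terms, so `n^{-|V|} ∑_c F(c̄)(G(c) - 1) → 0`.
-/

section Counting

open Function

variable {α β : Type*} [Fintype α] [DecidableEq α] [Fintype β]

theorem card_filter_not_injective [DecidableEq β] :
    #{c : α → β | ¬Injective c} = Fintype.card β ^ Fintype.card α -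
      (Fintype.card β).descFactorial (Fintype.card α) := by
  have hinj : #{c : α → β | Injective c} = (Fintype.card β).descFactorial (Fintype.card α) := by
    rw [← Fintype.card_subtype, Fintype.card_congr (Equiv.subtypeInjectiveEquivEmbedding α β),
      Fintype.card_embedding_eq]
  rw [filter_not, card_sdiff_of_subset (filter_subset _ _), hinj, card_univ, Fintype.card_fun]

theorem sum_comp_eq_sum_prod_card_fiber {γ M : Type*} [Fintype γ] [DecidableEq γ]
    [AddCommMonoid M] (r : β → γ) (A : (α → γ) → M) :
    ∑ c : α → β, A (r ∘ c) = ∑ d : α → γ, (∏ a, #{b | r b = d a}) • A d := by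
  rw [← sum_fiberwise univ (r ∘ ·)]
  refine sum_congr rfl fun d _ => ?_
  have hfiber : ({c : α → β | r ∘ c = d} : Finset _) =
      Fintype.piFinset fun a => {b | r b = d a} := by
    ext c
    simp [funext_iff]
  rw [sum_congr rfl fun c hc => congrArg A (mem_filter.mp hc).2, sum_const, hfiber,
    Fintype.card_piFinset]

end Counting

theorem tendsto_descFactorial_div_pow (k : ℕ) :
    Tendsto (fun n : ℕ => (n.descFactorial k : ℝ) / n ^ k) atTop (nhds 1) := by
  have hbase : Tendsto (fun n : ℕ => ((n + 1 - k : ℕ) : ℝ) / n) atTop (nhds 1) := by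
    have h := (tendsto_const_div_atTop_nhds_zero_nat ((k : ℝ) - 1)).const_sub 1
    rw [sub_zero] at h
    refine h.congr' ?_
    filter_upwards [eventually_ge_atTop (max k 1)] with n hn
    have hn0 : (n : ℝ) ≠ 0 := by norm_cast; omega
    rw [Nat.cast_sub (by omega)]
    field_simp
    push_cast
    ring
  refine tendsto_of_tendsto_of_tendsto_of_le_of_le' (by simpa using hbase.pow k)
    tendsto_const_nhds ?_ ?_
  · filter_upwards [eventually_ge_atTop 1] with n hn
    rw [div_pow, div_le_div_iff_of_pos_right (by positivity)]
    exact_mod_cast Nat.pow_sub_le_descFactorial n k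
  · exact Eventually.of_forall fun n =>
      div_le_one_of_le₀ (mod_cast Nat.descFactorial_le_pow n k) (by positivity)

section Averages

open Function

variable {α : Type*} [Fintype α] [DecidableEq α] {β : ℕ → Type*} [∀ n, Fintype (β n)]

theorem norm_sum_le_card_not_injective_mul {β E : Type*} [Fintype β] [DecidableEq β]
    [SeminormedAddCommGroup E] {f : (α → β) → E} {C : ℝ} (hC : ∀ c, ‖f c‖ ≤ C)
    (hf : ∀ c, Injective c → f c = 0) :
    ‖∑ c, f c‖ ≤ #{c : α → β | ¬Injective c} * C := by
  rw [← sum_filter_of_ne fun c _ hc => mt (hf c) hc]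
  exact (norm_sum_le _ _).trans (by simpa using sum_le_card_nsmul _ _ C fun c _ => hC c)

theorem tendsto_inv_pow_mul_sum_of_eq_zero_of_injective {𝕜 : Type*} [RCLike 𝕜]
    [∀ n, DecidableEq (β n)] (hβ : ∀ n, Fintype.card (β n) = n)
    {f : ∀ n, (α → β n) → 𝕜} {C : ℝ} (hC : ∀ n c, ‖f n c‖ ≤ C)
    (hf : ∀ n c, Injective c → f n c = 0) :
    Tendsto (fun n : ℕ => (n : 𝕜)⁻¹ ^ Fintype.card α * ∑ c, f n c) atTop (nhds 0) := by
  set k := Fintype.card α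
  have hbound : Tendsto (fun n : ℕ => C * (1 - (n.descFactorial k : ℝ) / n ^ k)) atTop
      (nhds 0) := by
    simpa using ((tendsto_descFactorial_div_pow k).const_sub 1).const_mul C
  refine squeeze_zero_norm' ?_ hbound
  filter_upwards [eventually_ge_atTop 1] with n hn
  have hcard := card_filter_not_injective (α := α) (β := β n)
  rw [hβ] at hcard
  rw [norm_mul, norm_pow, norm_inv, RCLike.norm_natCast]
  calc ((n : ℝ)⁻¹) ^ k * ‖∑ c, f n c‖
      ≤ ((n : ℝ)⁻¹) ^ k * (#{c : α → β n | ¬Injective c} * C) :=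
        mul_le_mul_of_nonneg_left (norm_sum_le_card_not_injective_mul (hC n) (hf n))
          (by positivity)
    _ = C * (1 - (n.descFactorial k : ℝ) / n ^ k) := by
        rw [hcard, Nat.cast_sub (Nat.descFactorial_le_pow n k), inv_pow]
        push_cast
        field_simp

theorem tendsto_inv_pow_mul_sum_comp {𝕜 γ : Type*} [Field 𝕜] [TopologicalSpace 𝕜]
    [IsTopologicalRing 𝕜] [Fintype γ] [DecidableEq γ] (r : ∀ n, β n → γ) {w : γ → 𝕜}
    (hr : ∀ j, Tendsto (fun n : ℕ => (#{b | r n b = j} : 𝕜) / n) atTop (nhds (w j)))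
    (A : (α → γ) → 𝕜) :
    Tendsto (fun n : ℕ => (n : 𝕜)⁻¹ ^ Fintype.card α * ∑ c : α → β n, A (r n ∘ c)) atTop
      (nhds (∑ d, (∏ a, w (d a)) * A d)) := by
  have hsum : ∀ n : ℕ, (n : 𝕜)⁻¹ ^ Fintype.card α * ∑ c : α → β n, A (r n ∘ c) =
      ∑ d : α → γ, (∏ a, (#{b | r n b = d a} : 𝕜) / n) * A d := by
    intro n
    rw [sum_comp_eq_sum_prod_card_fiber, mul_sum]
    refine sum_congr rfl fun d _ => ?_
    simp only [nsmul_eq_mul, Nat.cast_prod, div_eq_mul_inv, prod_mul_distrib, prod_const,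
      card_univ]
    ring
  simp only [hsum]
  exact tendsto_finsetSum _ fun d _ =>
    (tendsto_finsetProd _ fun a _ => hr (d a)).mul_const _

end Averages

theorem tendsto_count_modEq_div {N : ℕ} (hN : 0 < N) (v : ℕ) :
    Tendsto (fun n : ℕ => (Nat.count (· ≡ v [MOD N]) n : ℝ) / n) atTop (nhds (N : ℝ)⁻¹) := by
  rw [tendsto_iff_norm_sub_tendsto_zero]
  refine squeeze_zero' (Eventually.of_forall fun _ => norm_nonneg _) ?_
    (tendsto_const_div_atTop_nhds_zero_nat 1)
  filter_upwards [eventually_ge_atTop 1] with n hn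
  have hN' : (0 : ℝ) < N := by exact_mod_cast hN
  have hn' : (0 : ℝ) < n := by exact_mod_cast hn
  have hle : ((n / N : ℕ) : ℝ) ≤ n / N := Nat.cast_div_le
  have hgt : (n : ℝ) / N - 1 < (n / N : ℕ) := by
    have h : (n : ℝ) < (n / N : ℕ) * N + N := by exact_mod_cast Nat.lt_div_mul_add hN
    rw [div_sub_one hN'.ne', div_lt_iff₀ hN']
    linarith
  have hcount : |(Nat.count (· ≡ v [MOD N]) n : ℝ) - n / N| ≤ 1 := by
    rw [Nat.count_modEq_card n hN, abs_le]
    split_ifs <;> push_cast <;> constructor <;> linarith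
  rw [Real.norm_eq_abs, show (Nat.count (· ≡ v [MOD N]) n : ℝ) / n - (N : ℝ)⁻¹ =
    ((Nat.count (· ≡ v [MOD N]) n : ℝ) - n / N) / n by field_simp, abs_div, abs_of_pos hn']
  exact div_le_div_of_nonneg_right hcount hn'.le

def residue {N : ℕ} (hN : 0 < N) (b : ℕ) : {j // j ∈ Icc 1 N} :=
  ⟨(b - 1) % N + 1, mem_Icc.mpr ⟨Nat.le_add_left _ _, Nat.mod_lt _ hN⟩⟩

theorem card_filter_residue_eq_count {N : ℕ} (hN : 0 < N) (n : ℕ) (j : {j // j ∈ Icc 1 N}) :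
    #{b : {b // b ∈ Finset.Icc (1 : ℕ) n} | residue hN b = j} =
      Nat.count (· ≡ (j : ℕ) - 1 [MOD N]) n := by
  obtain ⟨j, hj⟩ := j
  rw [mem_Icc] at hj
  have hres : ∀ b, residue hN b = ⟨j, mem_Icc.mpr hj⟩ ↔ (b - 1) % N = j - 1 := fun b => by
    simp only [residue, Subtype.mk.injEq]
    omega
  rw [Nat.count_eq_card_filter_range]
  refine card_bij' (fun b _ => (b : ℕ) - 1) (fun a ha => ⟨a + 1, ?_⟩) ?_ ?_ ?_ ?_
  · simp only [mem_filter, mem_range] at ha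
    simp only [mem_Icc]
    omega
  · intro b hb
    simp only [mem_filter, mem_univ, true_and, hres] at hb
    simp only [mem_filter, mem_range, Nat.ModEq, Nat.mod_eq_of_lt (by omega : j - 1 < N)]
    have := mem_Icc.mp b.2
    omega
  · intro a ha
    simp only [mem_filter, mem_univ, true_and, hres]
    simp only [mem_filter, mem_range, Nat.ModEq, Nat.mod_eq_of_lt (by omega : j - 1 < N)] at ha
    simpa using ha.2
  · intro b _
    have := mem_Icc.mp b.2
    ext
    simp only
    omega
  · intro a _
    simp

section ColorClasses

variable {V : Finset (ℕ × ℕ)} {n : ℕ} (c : {p // p ∈ V} → {b // b ∈ Finset.Icc 1 n})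

def colorClass (b : ℕ) : Finset (ℕ × ℕ) :=
  V.filter fun p => colorOf V n c p = b

theorem mem_colorClass {p : ℕ × ℕ} {b : ℕ} :
    p ∈ colorClass c b ↔ ∃ h : p ∈ V, (c ⟨p, h⟩ : ℕ) = b := by
  rw [colorClass, mem_filter]
  unfold colorOf
  exact ⟨fun ⟨h, hb⟩ => ⟨h, by rwa [dif_pos h] at hb⟩, fun ⟨h, hb⟩ => ⟨h, by rwa [dif_pos h]⟩⟩

theorem colorClass_eq_empty {b : ℕ} (hb : ∀ a, (c a : ℕ) ≠ b) : colorClass c b = ∅ :=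
  eq_empty_of_forall_notMem fun _ hp =>
    let ⟨_, hcb⟩ := (mem_colorClass c).mp hp
    hb _ hcb

theorem colorClass_eq_singleton (hc : Function.Injective c) (a : {p // p ∈ V}) :
    colorClass c (c a) = {a.1} := by
  ext p
  rw [mem_colorClass, mem_singleton]
  constructor
  · rintro ⟨h, hca⟩
    exact congrArg Subtype.val (hc (Subtype.ext hca))
  · rintro rfl
    exact ⟨a.2, rfl⟩

def colorClassWeight (t : Finset (ℕ × ℕ) → ℂ) : ℂ :=
  ∏ b ∈ Finset.Icc 1 n, t (colorClass c b)

variable {t : Finset (ℕ × ℕ) → ℂ} (hempty : t ∅ = 1)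
include hempty

theorem colorClassWeight_eq_one_of_injective (hone : ∀ a b : ℕ, a < b → t {(a, b)} = 1)
    (hV : IsPP V) (hc : Function.Injective c) : colorClassWeight c t = 1 := by
  refine prod_eq_one fun b _ => ?_
  by_cases hb : ∃ a, (c a : ℕ) = b
  · obtain ⟨a, rfl⟩ := hb
    rw [colorClass_eq_singleton c hc]
    exact hone _ _ (hV.1 _ a.2)
  · rw [not_exists] at hb
    rw [colorClass_eq_empty c hb, hempty]

theorem norm_colorClassWeight_le {B : ℝ} (hB : 1 ≤ B) (ht : ∀ W ⊆ V, ‖t W‖ ≤ B) :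
    ‖colorClassWeight c t‖ ≤ B ^ V.card := by
  set T := univ.image fun a => (c a : ℕ)
  have hT : T ⊆ Finset.Icc 1 n := image_subset_iff.mpr fun a _ => (c a).2
  rw [colorClassWeight, ← prod_subset hT fun b _ hb => by
    rw [colorClass_eq_empty c fun a h => hb (mem_image.mpr ⟨a, mem_univ _, h⟩), hempty],
    norm_prod]
  calc ∏ b ∈ T, ‖t (colorClass c b)‖ ≤ ∏ _b ∈ T, B :=
        prod_le_prod (fun _ _ => norm_nonneg _) fun _ _ => ht _ (filter_subset _ _)
    _ = B ^ #T := prod_const B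
    _ ≤ B ^ V.card := pow_le_pow_right₀ hB (card_image_le.trans (by simp))

end ColorClasses

def crossingWeight (q : ℕ → ℕ → ℝ) (V : Finset (ℕ × ℕ)) (N : ℕ)
    (d : {p // p ∈ V} → {b // b ∈ Finset.Icc 1 N}) : ℂ :=
  ∏ x ∈ ppCrossings V, ((q (colorOf V N d x.1) (colorOf V N d x.2) : ℝ) : ℂ)

section Reduction

variable {N : ℕ} (hN : 0 < N) (q : ℕ → ℕ → ℝ) {V : Finset (ℕ × ℕ)}
include hN

theorem tQn_eq_sum_crossingWeight_residue_mul (t : Finset (ℕ × ℕ) → ℂ) (n : ℕ) :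
    tQn t (fun i j => q ((i - 1) % N + 1) ((j - 1) % N + 1)) n V =
      (n : ℂ)⁻¹ ^ V.card * ∑ c : {p // p ∈ V} → {b // b ∈ Finset.Icc 1 n},
        crossingWeight q V N (fun a => residue hN (c a)) * colorClassWeight c t := by
  have hcolor (c : {p // p ∈ V} → {b // b ∈ Finset.Icc 1 n}) {p : ℕ × ℕ} (hp : p ∈ V) :
      colorOf V N (fun a => residue hN (c a)) p = (colorOf V n c p - 1) % N + 1 := by
    simp only [colorOf, dif_pos hp, residue]
  refine congrArg _ (sum_congr rfl fun c _ => congrArg (· * _) (prod_congr rfl fun x hx => ?_))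
  obtain ⟨hx₁, hx₂⟩ := mem_product.mp (mem_filter.mp hx).1
  rw [hcolor c hx₁, hcolor c hx₂]

theorem tendsto_inv_pow_mul_sum_crossingWeight_residue :
    Tendsto (fun n : ℕ => (n : ℂ)⁻¹ ^ V.card *
        ∑ c : {p // p ∈ V} → {b // b ∈ Finset.Icc 1 n},
          crossingWeight q V N (fun a => residue hN (c a)))
      atTop (nhds (tQlim q N V)) := by
  have hdensity (j : {j // j ∈ Finset.Icc 1 N}) : Tendsto
      (fun n : ℕ => (#{b : {b // b ∈ Finset.Icc (1 : ℕ) n} | residue hN b = j} : ℂ) / n)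
      atTop (nhds (N : ℂ)⁻¹) := by
    have h := (tendsto_count_modEq_div hN ((j : ℕ) - 1)).ofReal
    push_cast at h
    exact h.congr fun n => by rw [← card_filter_residue_eq_count hN n j]
  have h := tendsto_inv_pow_mul_sum_comp (β := fun n => {b // b ∈ Finset.Icc 1 n})
    (fun n b => residue hN b) hdensity (crossingWeight q V N)
  rw [Fintype.card_coe] at h
  have hlim : tQlim q N V = ∑ d, (∏ _a : {p // p ∈ V}, (N : ℂ)⁻¹) * crossingWeight q V N d := by
    simp [tQlim, crossingWeight, mul_sum]
  exact hlim ▸ h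

theorem tendsto_inv_pow_mul_sum_crossingWeight_residue_mul_sub_one {t : Finset (ℕ × ℕ) → ℂ}
    (hone : ∀ a b : ℕ, a < b → t {(a, b)} = 1) (hempty : t ∅ = 1) (hV : IsPP V) :
    Tendsto (fun n : ℕ => (n : ℂ)⁻¹ ^ V.card *
        ∑ c : {p // p ∈ V} → {b // b ∈ Finset.Icc 1 n},
          crossingWeight q V N (fun a => residue hN (c a)) * (colorClassWeight c t - 1))
      atTop (nhds 0) := by
  obtain ⟨Cq, hCq⟩ := Finite.exists_le fun d => ‖crossingWeight q V N d‖
  obtain ⟨Ct, hCt⟩ := Finite.exists_le fun W : V.powerset => ‖t W‖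
  have hG (n : ℕ) (c : {p // p ∈ V} → {b // b ∈ Finset.Icc 1 n}) :
      ‖colorClassWeight c t - 1‖ ≤ max 1 Ct ^ V.card + 1 :=
    (norm_sub_le _ _).trans <| by
      rw [norm_one]
      gcongr
      exact norm_colorClassWeight_le c hempty (le_max_left _ _)
        fun W hW => (hCt ⟨W, mem_powerset.mpr hW⟩).trans (le_max_right _ _)
  rw [← Fintype.card_coe V]
  refine tendsto_inv_pow_mul_sum_of_eq_zero_of_injective (by simp)
    (C := Cq * (max 1 Ct ^ V.card + 1)) (fun n c => ?_) (fun n c hc => ?_)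
  · rw [norm_mul]
    exact mul_le_mul (hCq _) (hG n c) (norm_nonneg _)
      ((norm_nonneg _).trans (hCq fun a => residue hN (c a)))
  · rw [colorClassWeight_eq_one_of_injective c hempty hone hV hc, sub_self, mul_zero]

end Reduction

theorem tendsto_tQn_tQlim_general (N : ℕ) (hN : 1 ≤ N) (q : ℕ → ℕ → ℝ)
    (t : Finset (ℕ × ℕ) → ℂ)
    (hone : ∀ a b : ℕ, a < b → t {(a, b)} = 1)
    (hempty : t ∅ = 1)
    (V : Finset (ℕ × ℕ)) (hV : IsPP V) :
    Tendsto
      (fun n : ℕ => tQn t (fun i j => q ((i - 1) % N + 1) ((j - 1) % N + 1)) n V)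
      atTop (nhds (tQlim q N V)) := by
  have h := (tendsto_inv_pow_mul_sum_crossingWeight_residue hN q (V := V)).add
    (tendsto_inv_pow_mul_sum_crossingWeight_residue_mul_sub_one hN q hone hempty hV)
  rw [add_zero] at h
  refine h.congr fun n => ?_
  rw [tQn_eq_sum_crossingWeight_residue_mul hN, ← mul_add, ← sum_add_distrib]
  congr 1
  exact sum_congr rfl fun c _ => by ring

/-- Central Limit Theorem: let `N ≥ 1`, `Q = (q_{ij})` a symmetric
`N × N` real matrix, and `q̃_{ij} := q_{ī j̄}` with `ī, j̄ ∈ [N]`, `i ≡ ī`, `j ≡ j̄`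
(mod `N`).  Let `t` be a function on pair partitions which is invariant under
order-preserving bijections, multiplicative, and normalized (`t` of a single pair is
`1`).  Then for every pair partition `V`, `t^{*n}_{Q_n}(V) → t_Q(V)` as `n → ∞`. -/
theorem tendsto_tQn_tQlim (N : ℕ) (hN : 1 ≤ N) (q : ℕ → ℕ → ℝ)
    (hsym : ∀ i ∈ Finset.Icc 1 N, ∀ j ∈ Finset.Icc 1 N, q i j = q j i)
    (t : Finset (ℕ × ℕ) → ℂ)
    (hinv : ∀ V : Finset (ℕ × ℕ), IsPP V → ∀ φ : ℕ → ℕ,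
      StrictMonoOn φ (ppPoints V : Set ℕ) →
      t (V.image fun p => (φ p.1, φ p.2)) = t V)
    (hmul : ∀ k l n : ℕ, 1 ≤ k → k ≤ l → l ≤ n →
      ∀ V₁ V₂ : Finset (ℕ × ℕ), IsPP V₁ → IsPP V₂ →
      ppPoints V₁ = Finset.Icc 1 k ∪ Finset.Icc l n →
      ppPoints V₂ = Finset.Icc (k + 1) (l - 1) →
      t (V₁ ∪ V₂) = t V₁ * t V₂)
    (hone : ∀ a b : ℕ, a < b → t {(a, b)} = 1)
    (hempty : t ∅ = 1)
    (V : Finset (ℕ × ℕ)) (hV : IsPP V) :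
    Tendsto
      (fun n : ℕ => tQn t (fun i j => q ((i - 1) % N + 1) ((j - 1) % N + 1)) n V)
      atTop (nhds (tQlim q N V)) :=
  tendsto_tQn_tQlim_general N hN q t hone hempty V hV
end

section
/- Let (V,c) be a 2-colored pair partition of [2m]. If k ∈ D and k' ∈ I(k), then p^{−c(k)}(k') < r(k) ≤ p^{c(k)}(k'). -/
open Finset

/-- `V` is a pair partition of `[2m] = {1,…,2m}`: a set of pairs `(l,r)` with `l < r`
whose entries are pairwise distinct and together exhaust `[2m]`. -/
def IsPairPartition (m : ℕ) (V : Finset (ℕ × ℕ)) : Prop :=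
  (∀ p ∈ V, p.1 < p.2 ∧ 1 ≤ p.1 ∧ p.2 ≤ 2 * m) ∧
  (∀ k : ℕ, 1 ≤ k → k ≤ 2 * m → ∃! p : ℕ × ℕ, p ∈ V ∧ (p.1 = k ∨ p.2 = k))

/-- `c : ℕ → ℤ` encodes a 2-coloring of the pair partition `V` via the induced point
coloring: it is constant on each pair and takes values in `{-1,1}` on `[2m]`. -/
def IsColoring (m : ℕ) (V : Finset (ℕ × ℕ)) (c : ℕ → ℤ) : Prop :=
  (∀ p ∈ V, c p.1 = c p.2) ∧ (∀ k : ℕ, 1 ≤ k → k ≤ 2 * m → c k = 1 ∨ c k = -1)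

/-- `p^b(u)`: the number of pairs `(l,r) ∈ V` with `l ≤ u ≤ r` of color `b`. -/
def pcount (V : Finset (ℕ × ℕ)) (c : ℕ → ℤ) (b : ℤ) (u : ℕ) : ℕ :=
  (V.filter fun p => p.1 ≤ u ∧ u ≤ p.2 ∧ c p.1 = b).card

/-- `r(u) := p^{c(u)}(u)`. -/
def rcount (V : Finset (ℕ × ℕ)) (c : ℕ → ℤ) (u : ℕ) : ℕ :=
  pcount V c (c u) u

/-- `k` is a left point of `V`. -/
def isLeftPt (V : Finset (ℕ × ℕ)) (k : ℕ) : Prop := ∃ p ∈ V, p.1 = k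

/-- `k` is a right point of `V`. -/
def isRightPt (V : Finset (ℕ × ℕ)) (k : ℕ) : Prop := ∃ p ∈ V, p.2 = k

/-- `k ∈ D`, i.e. `r(k) > p^{-c(k)}(k)`. -/
def inDom (V : Finset (ℕ × ℕ)) (c : ℕ → ℤ) (k : ℕ) : Prop :=
  pcount V c (-(c k)) k < rcount V c k

/-- `Z : ℕ → ℕ` is the map of the paper: for `k ∈ [2m]`, `Z k` is the least
`k' > k` in `[2m]` with `r(k') = r(k)` when `k ∈ L_V ∩ D` or `k ∈ R_V ∩ S`, and the
greatest `k' < k` in `[2m]` with `r(k') = r(k)` when `k ∈ R_V ∩ D` or `k ∈ L_V ∩ S`. -/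
def IsZmap (m : ℕ) (V : Finset (ℕ × ℕ)) (c : ℕ → ℤ) (Z : ℕ → ℕ) : Prop :=
  ∀ k : ℕ, 1 ≤ k → k ≤ 2 * m →
    (((isLeftPt V k ∧ inDom V c k) ∨ (isRightPt V k ∧ ¬ inDom V c k)) →
      IsLeast {k' : ℕ | (1 ≤ k' ∧ k' ≤ 2 * m) ∧ k < k' ∧ rcount V c k' = rcount V c k} (Z k)) ∧
    (((isRightPt V k ∧ inDom V c k) ∨ (isLeftPt V k ∧ ¬ inDom V c k)) →
      IsGreatest {k' : ℕ | (1 ≤ k' ∧ k' ≤ 2 * m) ∧ k' < k ∧ rcount V c k' = rcount V c k} (Z k))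

section Aux

variable {m : ℕ} {V : Finset (ℕ × ℕ)} {c : ℕ → ℤ}

lemma pairUnique (hV : IsPairPartition m V) {p q : ℕ × ℕ} {u : ℕ}
    (hp : p ∈ V) (hq : q ∈ V) (hpu : p.1 = u ∨ p.2 = u) (hqu : q.1 = u ∨ q.2 = u) :
    p = q := by
  obtain ⟨h1, h2, h3⟩ := hV.1 p hp
  have hu1 : 1 ≤ u := by rcases hpu with h | h <;> omega
  have hu2 : u ≤ 2 * m := by rcases hpu with h | h <;> omega
  obtain ⟨r, _, hrU⟩ := hV.2 u hu1 hu2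
  rw [hrU p ⟨hp, hpu⟩, hrU q ⟨hq, hqu⟩]

lemma not_left_right (hV : IsPairPartition m V) (k : ℕ) :
    ¬(isLeftPt V k ∧ isRightPt V k) := by
  rintro ⟨⟨p, hpV, hp1⟩, ⟨q, hqV, hq2⟩⟩
  have heq := pairUnique hV hpV hqV (Or.inl hp1) (Or.inr hq2)
  have hlt := (hV.1 p hpV).1
  rw [← heq] at hq2
  omega

lemma card_right_le_one (hV : IsPairPartition m V) (u : ℕ) (b : ℤ) :
    (V.filter fun p => p.2 = u ∧ c p.1 = b).card ≤ 1 := by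
  apply Finset.card_le_one.mpr
  intro p hp q hq
  simp only [mem_filter] at hp hq
  exact pairUnique hV hp.1 hq.1 (Or.inr hp.2.1) (Or.inr hq.2.1)

lemma card_left_le_one (hV : IsPairPartition m V) (u : ℕ) (b : ℤ) :
    (V.filter fun p => p.1 = u ∧ c p.1 = b).card ≤ 1 := by
  apply Finset.card_le_one.mpr
  intro p hp q hq
  simp only [mem_filter] at hp hq
  exact pairUnique hV hp.1 hq.1 (Or.inl hp.2.1) (Or.inl hq.2.1)

lemma pcount_balance (hV : IsPairPartition m V) (b : ℤ) (u : ℕ) :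
    pcount V c b (u+1) + (V.filter fun p => p.2 = u ∧ c p.1 = b).card
      = pcount V c b u + (V.filter fun p => p.1 = u+1 ∧ c p.1 = b).card := by
  classical
  unfold pcount
  set A := V.filter (fun p => p.1 ≤ u ∧ u ≤ p.2 ∧ c p.1 = b) with hA
  set B := V.filter (fun p => p.1 ≤ u+1 ∧ u+1 ≤ p.2 ∧ c p.1 = b) with hB
  have hAB : A \ B = V.filter fun p => p.2 = u ∧ c p.1 = b := by
    ext p
    simp only [hA, hB, mem_sdiff, mem_filter, not_and]
    constructor
    · rintro ⟨⟨hpV, h1, h2, h3⟩, hn⟩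
      refine ⟨hpV, ?_, h3⟩
      by_contra hne
      exact (hn hpV (by omega) (by omega)) h3
    · rintro ⟨hpV, h2, h3⟩
      have hlt := (hV.1 p hpV).1
      exact ⟨⟨hpV, by omega, by omega, h3⟩, fun _ _ h _ => by omega⟩
  have hBA : B \ A = V.filter fun p => p.1 = u+1 ∧ c p.1 = b := by
    ext p
    simp only [hA, hB, mem_sdiff, mem_filter, not_and]
    constructor
    · rintro ⟨⟨hpV, h1, h2, h3⟩, hn⟩
      refine ⟨hpV, ?_, h3⟩
      by_contra hne
      exact (hn hpV (by omega) (by omega)) h3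
    · rintro ⟨hpV, h1, h3⟩
      have hlt := (hV.1 p hpV).1
      exact ⟨⟨hpV, by omega, by omega, h3⟩, fun _ h _ _ => by omega⟩
  have h1 := Finset.card_sdiff_add_card (s := A) (t := B)
  have h2 := Finset.card_sdiff_add_card (s := B) (t := A)
  rw [Finset.union_comm] at h2
  rw [← hAB, ← hBA]
  omega

lemma pcount_dec (hV : IsPairPartition m V) {b : ℤ} {u : ℕ}
    (h : pcount V c b (u+1) < pcount V c b u) :
    (∃ p ∈ V, p.2 = u ∧ c p.1 = b) ∧ pcount V c b u = pcount V c b (u+1) + 1 := by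
  have hb := pcount_balance (c := c) hV b u
  have h1 := card_right_le_one (c := c) hV u b
  have h2 := card_left_le_one (c := c) hV (u+1) b
  have hpos : 0 < (V.filter fun p => p.2 = u ∧ c p.1 = b).card := by omega
  obtain ⟨p, hp⟩ := Finset.card_pos.mp hpos
  simp only [mem_filter] at hp
  exact ⟨⟨p, hp.1, hp.2⟩, by omega⟩

lemma pcount_inc (hV : IsPairPartition m V) {b : ℤ} {u : ℕ}
    (h : pcount V c b u < pcount V c b (u+1)) :
    (∃ p ∈ V, p.1 = u+1 ∧ c p.1 = b) ∧ pcount V c b (u+1) = pcount V c b u + 1 := by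
  have hb := pcount_balance (c := c) hV b u
  have h1 := card_right_le_one (c := c) hV u b
  have h2 := card_left_le_one (c := c) hV (u+1) b
  have hpos : 0 < (V.filter fun p => p.1 = u+1 ∧ c p.1 = b).card := by omega
  obtain ⟨p, hp⟩ := Finset.card_pos.mp hpos
  simp only [mem_filter] at hp
  exact ⟨⟨p, hp.1, hp.2⟩, by omega⟩

lemma left_interval (hV : IsPairPartition m V) (hc : IsColoring m V c)
    {Z : ℕ → ℕ} (hZ : IsZmap m V c Z)
    (k : ℕ) (hk1 : 1 ≤ k) (hk2 : k ≤ 2 * m) (hkL : isLeftPt V k) (hkD : inDom V c k) :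
    ∀ j, k ≤ j → j < Z k →
      rcount V c k ≤ pcount V c (c k) j ∧ pcount V c (-(c k)) j < rcount V c k := by
  obtain ⟨⟨⟨hZ1, hZ2⟩, hkZ, _⟩, hlb⟩ := (hZ k hk1 hk2).1 (Or.inl ⟨hkL, hkD⟩)
  intro j
  induction j with
  | zero => intro h1 _; omega
  | succ j ih =>
    intro hkj hjZ
    rcases eq_or_lt_of_le hkj with heq | hlt
    · rw [← heq]
      exact ⟨le_rfl, hkD⟩
    · have hkj' : k ≤ j := by omega
      obtain ⟨ih1, ih2⟩ := ih hkj' (by omega)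
      constructor
      · by_contra hlt2
        push_neg at hlt2
        have hdec : pcount V c (c k) (j+1) < pcount V c (c k) j :=
          lt_of_lt_of_le hlt2 ih1
        obtain ⟨⟨p, hpV, hp2, hpc⟩, hstep⟩ := pcount_dec hV hdec
        by_cases hjk : j = k
        · exact not_left_right hV k ⟨hkL, ⟨p, hpV, by rw [hjk] at hp2; exact hp2⟩⟩
        · have hcj : c j = c k := by rw [← hp2, ← hc.1 p hpV]; exact hpc
          have hpeq : pcount V c (c k) j = rcount V c k := by omega
          have hr : rcount V c j = rcount V c k := by unfold rcount; rw [hcj]; exact hpeq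
          have := hlb ⟨⟨by omega, by omega⟩, by omega, hr⟩
          omega
      · by_contra hge
        push_neg at hge
        have hinc : pcount V c (-(c k)) j < pcount V c (-(c k)) (j+1) :=
          lt_of_lt_of_le ih2 hge
        obtain ⟨⟨p, hpV, hp1, hpc⟩, hstep⟩ := pcount_inc hV hinc
        have hcj : c (j+1) = -(c k) := by rw [← hp1]; exact hpc
        have hpeq : pcount V c (-(c k)) (j+1) = rcount V c k := by omega
        have hr : rcount V c (j+1) = rcount V c k := by unfold rcount; rw [hcj]; exact hpeq
        have := hlb ⟨⟨by omega, by omega⟩, by omega, hr⟩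
        omega

lemma right_interval (hV : IsPairPartition m V) (hc : IsColoring m V c)
    {Z : ℕ → ℕ} (hZ : IsZmap m V c Z)
    (k : ℕ) (hk1 : 1 ≤ k) (hk2 : k ≤ 2 * m) (hkR : isRightPt V k) (hkD : inDom V c k) :
    ∀ i j, j + i = k → Z k < j →
      rcount V c k ≤ pcount V c (c k) j ∧ pcount V c (-(c k)) j < rcount V c k := by
  obtain ⟨⟨⟨hZ1, hZ2⟩, hZk, _⟩, hub⟩ := (hZ k hk1 hk2).2 (Or.inl ⟨hkR, hkD⟩)
  intro i
  induction i with
  | zero =>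
    intro j hj _
    have : j = k := by omega
    rw [this]
    exact ⟨le_rfl, hkD⟩
  | succ i ih =>
    intro j hj hZj
    obtain ⟨ih1, ih2⟩ := ih (j+1) (by omega) (by omega)
    have hjk : j < k := by omega
    constructor
    · by_contra hlt2
      push_neg at hlt2
      have hinc : pcount V c (c k) j < pcount V c (c k) (j+1) :=
        lt_of_lt_of_le hlt2 ih1
      obtain ⟨⟨p, hpV, hp1, hpc⟩, hstep⟩ := pcount_inc hV hinc
      by_cases hjk1 : j + 1 = k
      · exact not_left_right hV k ⟨⟨p, hpV, by rw [hjk1] at hp1; exact hp1⟩, hkR⟩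
      · have hcj : c (j+1) = c k := by rw [← hp1]; exact hpc
        have hpeq : pcount V c (c k) (j+1) = rcount V c k := by omega
        have hr : rcount V c (j+1) = rcount V c k := by unfold rcount; rw [hcj]; exact hpeq
        have := hub ⟨⟨by omega, by omega⟩, by omega, hr⟩
        omega
    · by_contra hge
      push_neg at hge
      have hdec : pcount V c (-(c k)) (j+1) < pcount V c (-(c k)) j :=
        lt_of_lt_of_le ih2 hge
      obtain ⟨⟨p, hpV, hp2, hpc⟩, hstep⟩ := pcount_dec hV hdec
      have hcj : c j = -(c k) := by rw [← hp2, ← hc.1 p hpV]; exact hpc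
      have hpeq : pcount V c (-(c k)) j = rcount V c k := by omega
      have hr : rcount V c j = rcount V c k := by unfold rcount; rw [hcj]; exact hpeq
      have := hub ⟨⟨by omega, by omega⟩, by omega, hr⟩
      omega

end Aux

/-- if `k ∈ D` and `k'` lies strictly between `k` and `Z(k)`, then
`p^{-c(k)}(k') < r(k) ≤ p^{c(k)}(k')`. -/
theorem dom_interval (m : ℕ) (hm : 1 ≤ m) (V : Finset (ℕ × ℕ)) (c : ℕ → ℤ)
    (hV : IsPairPartition m V) (hc : IsColoring m V c)
    (Z : ℕ → ℕ) (hZ : IsZmap m V c Z)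
    (k : ℕ) (hk1 : 1 ≤ k) (hk2 : k ≤ 2 * m) (hkD : inDom V c k)
    (k' : ℕ) (hk' : (k < k' ∧ k' < Z k) ∨ (Z k < k' ∧ k' < k)) :
    pcount V c (-(c k)) k' < rcount V c k ∧ rcount V c k ≤ pcount V c (c k) k' := by
  obtain ⟨p, ⟨hpV, hpk⟩, _⟩ := hV.2 k hk1 hk2
  rcases hpk with h1 | h2
  · have hkL : isLeftPt V k := ⟨p, hpV, h1⟩
    have hkZ : k < Z k := ((hZ k hk1 hk2).1 (Or.inl ⟨hkL, hkD⟩)).1.2.1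
    rcases hk' with ⟨ha, hb⟩ | ⟨ha, hb⟩
    · obtain ⟨q1, q2⟩ := left_interval hV hc hZ k hk1 hk2 hkL hkD k' (le_of_lt ha) hb
      exact ⟨q2, q1⟩
    · omega
  · have hkR : isRightPt V k := ⟨p, hpV, h2⟩
    have hZk : Z k < k := ((hZ k hk1 hk2).2 (Or.inl ⟨hkR, hkD⟩)).1.2.1
    rcases hk' with ⟨ha, hb⟩ | ⟨ha, hb⟩
    · omega
    · obtain ⟨q1, q2⟩ := right_interval hV hc hZ k hk1 hk2 hkR hkD (k - k') k' (by omega) ha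
      exact ⟨q2, q1⟩
end

section
/- Let (V,c) be a 2-colored pair partition of [2m] and k ∈ [2m]. (1) If k ∈ D, then Z(k) ∈ D if and only if c(k) = c(Z(k)). (2) If k ∈ S, then Z(k) ∈ S if and only if c(k) = c(Z(k)). -/
open Finset

section Aux

attribute [local instance] Classical.propDecidable
variable {m : ℕ} {V : Finset (ℕ × ℕ)} {c : ℕ → ℤ}

lemma touch_unique (hV : IsPairPartition m V) {k : ℕ} (hk1 : 1 ≤ k) (hk2 : k ≤ 2*m)
    {p q : ℕ × ℕ} (hp : p ∈ V) (hq : q ∈ V) (hpk : p.1 = k ∨ p.2 = k)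
    (hqk : q.1 = k ∨ q.2 = k) : p = q := by
  obtain ⟨w, _, hw⟩ := hV.2 k hk1 hk2
  rw [hw p ⟨hp, hpk⟩, hw q ⟨hq, hqk⟩]

lemma left_or_right (hV : IsPairPartition m V) {k : ℕ} (hk1 : 1 ≤ k) (hk2 : k ≤ 2*m) :
    isLeftPt V k ∨ isRightPt V k := by
  obtain ⟨p, ⟨hp, hpk⟩, _⟩ := hV.2 k hk1 hk2
  rcases hpk with h | h
  · exact Or.inl ⟨p, hp, h⟩
  · exact Or.inr ⟨p, hp, h⟩

lemma not_left_and_right (hV : IsPairPartition m V) {k : ℕ} (hk1 : 1 ≤ k) (hk2 : k ≤ 2*m) :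
    ¬ (isLeftPt V k ∧ isRightPt V k) := by
  rintro ⟨⟨p, hp, hp1⟩, ⟨q, hq, hq2⟩⟩
  have hpq := touch_unique hV hk1 hk2 hp hq (Or.inl hp1) (Or.inr hq2)
  subst hpq
  have := (hV.1 p hp).1
  omega

lemma card_right (hV : IsPairPartition m V) (hc : IsColoring m V c) (b : ℤ) {v : ℕ}
    (hv1 : 1 ≤ v) (hv2 : v ≤ 2*m) :
    (V.filter fun p => p.2 = v ∧ c p.1 = b).card
      = if isRightPt V v ∧ c v = b then 1 else 0 := by
  split_ifs with h
  · obtain ⟨⟨p, hp, hp2⟩, hcv⟩ := h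
    rw [show (V.filter fun p => p.2 = v ∧ c p.1 = b) = {p} from ?_, card_singleton]
    ext q
    simp only [mem_filter, mem_singleton]
    constructor
    · rintro ⟨hq, hq2, _⟩
      exact touch_unique hV hv1 hv2 hq hp (Or.inr hq2) (Or.inr hp2)
    · rintro rfl
      exact ⟨hp, hp2, by rw [hc.1 _ hp, hp2, hcv]⟩
  · rw [card_eq_zero, filter_eq_empty_iff]
    rintro q hq ⟨hq2, hqb⟩
    exact h ⟨⟨q, hq, hq2⟩, by rw [← hq2, ← hc.1 q hq]; exact hqb⟩

lemma card_left (hV : IsPairPartition m V) (hc : IsColoring m V c) (b : ℤ) {v : ℕ}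
    (hv1 : 1 ≤ v) (hv2 : v ≤ 2*m) :
    (V.filter fun p => p.1 = v ∧ c p.1 = b).card
      = if isLeftPt V v ∧ c v = b then 1 else 0 := by
  split_ifs with h
  · obtain ⟨⟨p, hp, hp1⟩, hcv⟩ := h
    rw [show (V.filter fun p => p.1 = v ∧ c p.1 = b) = {p} from ?_, card_singleton]
    ext q
    simp only [mem_filter, mem_singleton]
    constructor
    · rintro ⟨hq, hq1, _⟩
      exact touch_unique hV hv1 hv2 hq hp (Or.inl hq1) (Or.inl hp1)
    · rintro rfl
      exact ⟨hp, hp1, by rw [hp1, hcv]⟩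
  · rw [card_eq_zero, filter_eq_empty_iff]
    rintro q hq ⟨hq1, hqb⟩
    exact h ⟨⟨q, hq, hq1⟩, by rw [← hq1]; exact hqb⟩

lemma pcount_step (hV : IsPairPartition m V) (hc : IsColoring m V c) (b : ℤ) {v : ℕ}
    (hv1 : 1 ≤ v) (hv2 : v + 1 ≤ 2*m) :
    pcount V c b (v+1) + (if isRightPt V v ∧ c v = b then 1 else 0)
      = pcount V c b v + (if isLeftPt V (v+1) ∧ c (v+1) = b then 1 else 0) := by
  classical
  rw [← card_right hV hc b hv1 (by omega), ← card_left hV hc b (by omega) hv2]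
  unfold pcount
  rw [← card_union_of_disjoint, ← card_union_of_disjoint, ← filter_or, ← filter_or]
  · apply congrArg
    apply filter_congr
    intro p hp
    have h1 := (hV.1 p hp).1
    by_cases hb : c p.1 = b <;> simp only [hb] <;> simp <;> omega
  · rw [Finset.disjoint_filter]
    rintro p _ ⟨h1, _⟩ ⟨h2, _⟩
    omega
  · rw [Finset.disjoint_filter]
    rintro p _ ⟨_, h1, _⟩ ⟨h2, _⟩
    omega

lemma pcount_incr (hV : IsPairPartition m V) (hc : IsColoring m V c) (b : ℤ) {v : ℕ}
    (hv1 : 1 ≤ v) (hv2 : v + 1 ≤ 2*m) (h : pcount V c b v < pcount V c b (v+1)) :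
    isLeftPt V (v+1) ∧ c (v+1) = b ∧ pcount V c b (v+1) = pcount V c b v + 1 := by
  have hs := pcount_step hV hc b hv1 hv2
  by_cases h2 : isLeftPt V (v+1) ∧ c (v+1) = b
  · rw [if_pos h2] at hs
    refine ⟨h2.1, h2.2, ?_⟩
    split_ifs at hs <;> omega
  · rw [if_neg h2] at hs
    exfalso; split_ifs at hs <;> omega

lemma pcount_decr (hV : IsPairPartition m V) (hc : IsColoring m V c) (b : ℤ) {v : ℕ}
    (hv1 : 1 ≤ v) (hv2 : v + 1 ≤ 2*m) (h : pcount V c b (v+1) < pcount V c b v) :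
    isRightPt V v ∧ c v = b ∧ pcount V c b v = pcount V c b (v+1) + 1 := by
  have hs := pcount_step hV hc b hv1 hv2
  by_cases h2 : isRightPt V v ∧ c v = b
  · rw [if_pos h2] at hs
    refine ⟨h2.1, h2.2, ?_⟩
    split_ifs at hs <;> omega
  · rw [if_neg h2] at hs
    exfalso; split_ifs at hs <;> omega

lemma cross_up (f : ℕ → ℕ) (r : ℕ) : ∀ b a : ℕ, a ≤ b → f a < r → r ≤ f b →
    ∃ u, a ≤ u ∧ u < b ∧ f u < r ∧ r ≤ f (u+1) := by
  intro b
  induction b with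
  | zero =>
    intro a h1 h2 h3
    have : a = 0 := by omega
    subst this; omega
  | succ n ih =>
    intro a h1 h2 h3
    have ha : a ≤ n := by
      by_contra h'
      have : a = n + 1 := by omega
      subst this; omega
    by_cases h : r ≤ f n
    · obtain ⟨u, hu1, hu2, hu3, hu4⟩ := ih a ha h2 h
      exact ⟨u, hu1, by omega, hu3, hu4⟩
    · exact ⟨n, ha, by omega, by omega, h3⟩

lemma cross_down (f : ℕ → ℕ) (r : ℕ) (b a : ℕ) (hab : a ≤ b) (ha : r ≤ f a) (hb : f b < r) :
    ∃ u, a ≤ u ∧ u < b ∧ r ≤ f u ∧ f (u+1) < r := by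
  obtain ⟨u, h1, h2, h3, h4⟩ := cross_up (fun n => r - f n) 1 b a hab
    (by show r - f a < 1; omega) (by show 1 ≤ r - f b; omega)
  have h3' : r - f u < 1 := h3
  have h4' : 1 ≤ r - f (u+1) := h4
  exact ⟨u, h1, h2, by omega, by omega⟩

lemma exists_up (hV : IsPairPartition m V) (hc : IsColoring m V c) (b : ℤ) {r a b' : ℕ}
    (ha1 : 1 ≤ a) (hb2 : b' ≤ 2*m) (hab : a ≤ b')
    (ha : pcount V c b a < r) (hb : r ≤ pcount V c b b') :
    ∃ w, a < w ∧ w ≤ b' ∧ isLeftPt V w ∧ c w = b ∧ pcount V c b w = r := by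
  obtain ⟨u, h1, h2, h3, h4⟩ := cross_up (pcount V c b) r b' a hab ha hb
  have h5 := pcount_incr hV hc b (v := u) (by omega) (by omega) (by omega)
  exact ⟨u+1, by omega, by omega, h5.1, h5.2.1, by omega⟩

lemma exists_down (hV : IsPairPartition m V) (hc : IsColoring m V c) (b : ℤ) {r a b' : ℕ}
    (ha1 : 1 ≤ a) (hb2 : b' ≤ 2*m) (hab : a ≤ b')
    (ha : r ≤ pcount V c b a) (hb : pcount V c b b' < r) :
    ∃ w, a ≤ w ∧ w < b' ∧ isRightPt V w ∧ c w = b ∧ pcount V c b w = r := by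
  obtain ⟨u, h1, h2, h3, h4⟩ := cross_down (pcount V c b) r b' a hab ha hb
  have h5 := pcount_decr hV hc b (v := u) (by omega) (by omega) (by omega)
  exact ⟨u, h1, h2, h5.1, h5.2.1, by omega⟩

end Aux

/-- if `k ∈ D` then `Z(k) ∈ D ↔ c(k) = c(Z(k))`; if `k ∈ S` then
`Z(k) ∈ S ↔ c(k) = c(Z(k))`. -/


theorem Z_dom_sub (m : ℕ) (hm : 1 ≤ m) (V : Finset (ℕ × ℕ)) (c : ℕ → ℤ)
    (hV : IsPairPartition m V) (hc : IsColoring m V c)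
    (Z : ℕ → ℕ) (hZ : IsZmap m V c Z)
    (k : ℕ) (hk1 : 1 ≤ k) (hk2 : k ≤ 2 * m) :
    (inDom V c k → (inDom V c (Z k) ↔ c k = c (Z k))) ∧
    (¬ inDom V c k → (¬ inDom V c (Z k) ↔ c k = c (Z k))) := by
  have hck : c k = 1 ∨ c k = -1 := hc.2 k hk1 hk2
  have hLR := left_or_right hV hk1 hk2
  constructor
  · intro hD
    have hD' : pcount V c (-(c k)) k < pcount V c (c k) k := hD
    rcases hLR with hL | hR
    · -- k ∈ L ∩ D : forward
      obtain ⟨⟨⟨hz1, hz2⟩, hkz, hrz⟩, hmin⟩ := (hZ k hk1 hk2).1 (Or.inl ⟨hL, hD⟩)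
      have hrz' : pcount V c (c (Z k)) (Z k) = pcount V c (c k) k := hrz
      have hcz : c (Z k) = c k ∨ c (Z k) = -(c k) := by
        rcases hc.2 (Z k) hz1 hz2 with h | h <;> rcases hck with h' | h' <;> omega
      rcases hcz with hcc | hcc
      · refine iff_of_true ?_ hcc.symm
        show pcount V c (-(c (Z k))) (Z k) < pcount V c (c (Z k)) (Z k)
        rw [hcc] at hrz' ⊢
        rw [hrz']
        by_contra h'
        push_neg at h'
        obtain ⟨w, hw1, hw2, hwL, hwc, hwp⟩ :=
          exists_up hV hc (-(c k)) hk1 hz2 (le_of_lt hkz) hD' h'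
        have hwr : rcount V c w = rcount V c k := by
          show pcount V c (c w) w = pcount V c (c k) k
          rw [hwc]; exact hwp
        have hle := hmin ⟨⟨by omega, by omega⟩, hw1, hwr⟩
        have hwz : w = Z k := le_antisymm hw2 hle
        rw [hwz] at hwc
        rcases hck with h | h <;> omega
      · have hne : c k ≠ c (Z k) := by rcases hck with h | h <;> omega
        refine iff_of_false ?_ hne
        show ¬ pcount V c (-(c (Z k))) (Z k) < pcount V c (c (Z k)) (Z k)
        rw [hcc] at hrz'
        rw [hcc, neg_neg, hrz']
        intro h'
        obtain ⟨w, hw1, hw2, hwR, hwc, hwp⟩ :=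
          exists_down hV hc (c k) hk1 hz2 (le_of_lt hkz) le_rfl h'
        rcases eq_or_lt_of_le hw1 with heq | hlt
        · exact not_left_and_right hV hk1 hk2 ⟨hL, heq ▸ hwR⟩
        · have hwr : rcount V c w = rcount V c k := by
            show pcount V c (c w) w = pcount V c (c k) k
            rw [hwc]; exact hwp
          have hle := hmin ⟨⟨by omega, by omega⟩, hlt, hwr⟩
          omega
    · -- k ∈ R ∩ D : backward
      obtain ⟨⟨⟨hz1, hz2⟩, hzk, hrz⟩, hmax⟩ := (hZ k hk1 hk2).2 (Or.inl ⟨hR, hD⟩)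
      have hrz' : pcount V c (c (Z k)) (Z k) = pcount V c (c k) k := hrz
      have hcz : c (Z k) = c k ∨ c (Z k) = -(c k) := by
        rcases hc.2 (Z k) hz1 hz2 with h | h <;> rcases hck with h' | h' <;> omega
      rcases hcz with hcc | hcc
      · refine iff_of_true ?_ hcc.symm
        show pcount V c (-(c (Z k))) (Z k) < pcount V c (c (Z k)) (Z k)
        rw [hcc] at hrz' ⊢
        rw [hrz']
        by_contra h'
        push_neg at h'
        obtain ⟨w, hw1, hw2, hwR, hwc, hwp⟩ :=
          exists_down hV hc (-(c k)) hz1 hk2 (le_of_lt hzk) h' hD'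
        rcases eq_or_lt_of_le hw1 with heq | hlt
        · rw [← heq] at hwc
          rcases hck with h | h <;> omega
        · have hwr : rcount V c w = rcount V c k := by
            show pcount V c (c w) w = pcount V c (c k) k
            rw [hwc]; exact hwp
          have hle := hmax ⟨⟨by omega, by omega⟩, hw2, hwr⟩
          omega
      · have hne : c k ≠ c (Z k) := by rcases hck with h | h <;> omega
        refine iff_of_false ?_ hne
        show ¬ pcount V c (-(c (Z k))) (Z k) < pcount V c (c (Z k)) (Z k)
        rw [hcc] at hrz'
        rw [hcc, neg_neg, hrz']
        intro h'
        obtain ⟨w, hw1, hw2, hwL, hwc, hwp⟩ :=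
          exists_up hV hc (c k) hz1 hk2 (le_of_lt hzk) h' le_rfl
        rcases eq_or_lt_of_le hw2 with heq | hlt
        · exact not_left_and_right hV hk1 hk2 ⟨heq ▸ hwL, hR⟩
        · have hwr : rcount V c w = rcount V c k := by
            show pcount V c (c w) w = pcount V c (c k) k
            rw [hwc]; exact hwp
          have hle := hmax ⟨⟨by omega, by omega⟩, hlt, hwr⟩
          omega
  · intro hS
    have hS' : pcount V c (c k) k ≤ pcount V c (-(c k)) k := by
      have := hS; unfold inDom rcount at this; omega
    rcases hLR with hL | hR
    · -- k ∈ L ∩ S : backward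
      obtain ⟨⟨⟨hz1, hz2⟩, hzk, hrz⟩, hmax⟩ := (hZ k hk1 hk2).2 (Or.inr ⟨hL, hS⟩)
      have hrz' : pcount V c (c (Z k)) (Z k) = pcount V c (c k) k := hrz
      have hcz : c (Z k) = c k ∨ c (Z k) = -(c k) := by
        rcases hc.2 (Z k) hz1 hz2 with h | h <;> rcases hck with h' | h' <;> omega
      rcases hcz with hcc | hcc
      · refine iff_of_true ?_ hcc.symm
        show ¬ pcount V c (-(c (Z k))) (Z k) < pcount V c (c (Z k)) (Z k)
        rw [hcc] at hrz' ⊢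
        rw [hrz']
        intro h'
        obtain ⟨w, hw1, hw2, hwL, hwc, hwp⟩ :=
          exists_up hV hc (-(c k)) hz1 hk2 (le_of_lt hzk) h' hS'
        rcases eq_or_lt_of_le hw2 with heq | hlt
        · rw [heq] at hwc
          rcases hck with h | h <;> omega
        · have hwr : rcount V c w = rcount V c k := by
            show pcount V c (c w) w = pcount V c (c k) k
            rw [hwc]; exact hwp
          have hle := hmax ⟨⟨by omega, by omega⟩, hlt, hwr⟩
          omega
      · have hne : c k ≠ c (Z k) := by rcases hck with h | h <;> omega
        refine iff_of_false ?_ hne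
        refine not_not_intro ?_
        show pcount V c (-(c (Z k))) (Z k) < pcount V c (c (Z k)) (Z k)
        rw [hcc] at hrz'
        rw [hcc, neg_neg, hrz']
        by_contra h'
        push_neg at h'
        obtain ⟨j, rfl⟩ : ∃ j, k = j + 1 := ⟨k - 1, by omega⟩
        have hj1 : 1 ≤ j := by omega
        have hs := pcount_step hV hc (c (j+1)) (v := j) hj1 hk2
        rw [if_pos (show isLeftPt V (j+1) ∧ c (j+1) = c (j+1) from ⟨hL, rfl⟩)] at hs
        by_cases hR1 : isRightPt V j ∧ c j = c (j+1)
        · rw [if_pos hR1] at hs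
          have hwr : rcount V c j = rcount V c (j+1) := by
            show pcount V c (c j) j = pcount V c (c (j+1)) (j+1)
            rw [hR1.2]; omega
          have hzle := hmax ⟨⟨by omega, by omega⟩, by omega, hwr⟩
          have hzj : Z (j+1) = j := by omega
          rw [hzj] at hcc
          rcases hck with h | h <;> omega
        · rw [if_neg hR1] at hs
          have hzj : Z (j+1) < j := by
            by_contra hcon
            have hzeq : Z (j+1) = j := by omega
            rw [hzeq] at h'
            omega
          obtain ⟨w, hw1, hw2, hwR, hwc, hwp⟩ :=
            exists_down hV hc (c (j+1)) hz1 (by omega) (le_of_lt hzj) h' (by omega)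
          rcases eq_or_lt_of_le hw1 with heq | hlt
          · rw [← heq] at hwc
            rcases hck with h | h <;> omega
          · have hwr : rcount V c w = rcount V c (j+1) := by
              show pcount V c (c w) w = pcount V c (c (j+1)) (j+1)
              rw [hwc]; exact hwp
            have hle := hmax ⟨⟨by omega, by omega⟩, by omega, hwr⟩
            omega
    · -- k ∈ R ∩ S : forward
      obtain ⟨⟨⟨hz1, hz2⟩, hkz, hrz⟩, hmin⟩ := (hZ k hk1 hk2).1 (Or.inr ⟨hR, hS⟩)
      have hrz' : pcount V c (c (Z k)) (Z k) = pcount V c (c k) k := hrz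
      have hcz : c (Z k) = c k ∨ c (Z k) = -(c k) := by
        rcases hc.2 (Z k) hz1 hz2 with h | h <;> rcases hck with h' | h' <;> omega
      rcases hcz with hcc | hcc
      · refine iff_of_true ?_ hcc.symm
        show ¬ pcount V c (-(c (Z k))) (Z k) < pcount V c (c (Z k)) (Z k)
        rw [hcc] at hrz' ⊢
        rw [hrz']
        intro h'
        obtain ⟨w, hw1, hw2, hwR, hwc, hwp⟩ :=
          exists_down hV hc (-(c k)) hk1 hz2 (le_of_lt hkz) hS' h'
        rcases eq_or_lt_of_le hw1 with heq | hlt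
        · rw [← heq] at hwc
          rcases hck with h | h <;> omega
        · have hwr : rcount V c w = rcount V c k := by
            show pcount V c (c w) w = pcount V c (c k) k
            rw [hwc]; exact hwp
          have hle := hmin ⟨⟨by omega, by omega⟩, hlt, hwr⟩
          omega
      · have hne : c k ≠ c (Z k) := by rcases hck with h | h <;> omega
        refine iff_of_false ?_ hne
        refine not_not_intro ?_
        show pcount V c (-(c (Z k))) (Z k) < pcount V c (c (Z k)) (Z k)
        rw [hcc] at hrz'
        rw [hcc, neg_neg, hrz']
        by_contra h'
        push_neg at h'
        have hs := pcount_step hV hc (c k) (v := k) hk1 (by omega)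
        rw [if_pos ⟨hR, rfl⟩] at hs
        by_cases hL1 : isLeftPt V (k+1) ∧ c (k+1) = c k
        · rw [if_pos hL1] at hs
          have hwr : rcount V c (k+1) = rcount V c k := by
            show pcount V c (c (k+1)) (k+1) = pcount V c (c k) k
            rw [hL1.2]; omega
          have hzle := hmin ⟨⟨by omega, by omega⟩, by omega, hwr⟩
          have hzk1 : Z k = k + 1 := by omega
          rw [hzk1] at hcc
          rcases hck with h | h <;> omega
        · rw [if_neg hL1] at hs
          have hzk1 : k + 1 < Z k := by
            by_contra hcon
            have hzeq : Z k = k + 1 := by omega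
            rw [hzeq] at h'
            omega
          obtain ⟨w, hw1, hw2, hwL, hwc, hwp⟩ :=
            exists_up hV hc (c k) (a := k+1) (b' := Z k) (by omega) hz2 (by omega) (by omega) h'
          have hwr : rcount V c w = rcount V c k := by
            show pcount V c (c w) w = pcount V c (c k) k
            rw [hwc]; exact hwp
          have hle := hmin ⟨⟨by omega, by omega⟩, by omega, hwr⟩
          have hwz : w = Z k := le_antisymm hw2 hle
          rw [hwz] at hwc
          rcases hck with h | h <;> omega
end

section
/- Let (V,c) be a 2-colored pair partition of [2m] and k ∈ [2m]. (1) If k ∈ L_V, then Z(k) ∈ L_V if and only if c(Z(k)) = −c(k). (2) If k ∈ R_V, then Z(k) ∈ R_V if and only if c(Z(k)) = −c(k). -/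
open Finset

-- auxiliary defs
def eS (V : Finset (ℕ × ℕ)) (c : ℕ → ℤ) (b : ℤ) (u : ℕ) : ℕ :=
  (V.filter fun p => p.1 = u ∧ c p.1 = b).card

def eE (V : Finset (ℕ × ℕ)) (c : ℕ → ℤ) (b : ℤ) (u : ℕ) : ℕ :=
  (V.filter fun p => p.2 = u ∧ c p.1 = b).card

lemma pair_mem_range (m : ℕ) (V : Finset (ℕ × ℕ)) (hV : IsPairPartition m V)
    {p : ℕ × ℕ} (hp : p ∈ V) : p.1 < p.2 ∧ 1 ≤ p.1 ∧ p.2 ≤ 2 * m := hV.1 p hp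

lemma notLR (m : ℕ) (V : Finset (ℕ × ℕ)) (hV : IsPairPartition m V) {u : ℕ}
    (h1 : isLeftPt V u) (h2 : isRightPt V u) : False := by
  obtain ⟨p, hp, hp1⟩ := h1
  obtain ⟨q, hq, hq2⟩ := h2
  have hpb := hV.1 p hp
  have hu1 : 1 ≤ u := hp1 ▸ hpb.2.1
  have hu2 : u ≤ 2 * m := by
    have := hV.1 q hq; omega
  obtain ⟨x, _, hx⟩ := hV.2 u hu1 hu2
  have hpq : p = q := by
    have h1 := hx p ⟨hp, Or.inl hp1⟩
    have h2 := hx q ⟨hq, Or.inr hq2⟩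
    rw [h1, h2]
  rw [hpq] at hp1
  have := hV.1 q hq
  omega

lemma LorR (m : ℕ) (V : Finset (ℕ × ℕ)) (hV : IsPairPartition m V) {u : ℕ}
    (h1 : 1 ≤ u) (h2 : u ≤ 2 * m) : isLeftPt V u ∨ isRightPt V u := by
  obtain ⟨p, ⟨hp, hp'⟩, _⟩ := hV.2 u h1 h2
  rcases hp' with h | h
  · exact Or.inl ⟨p, hp, h⟩
  · exact Or.inr ⟨p, hp, h⟩

lemma step (m : ℕ) (V : Finset (ℕ × ℕ)) (c : ℕ → ℤ) (hV : IsPairPartition m V)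
    (b : ℤ) (u : ℕ) :
    pcount V c b (u + 1) + eE V c b u = pcount V c b u + eS V c b (u + 1) := by
  classical
  unfold pcount eE eS
  rw [← card_union_of_disjoint, ← card_union_of_disjoint]
  · congr 1
    ext p
    simp only [mem_union, mem_filter]
    constructor
    · rintro (⟨hp, h1, h2, h3⟩ | ⟨hp, h1, h2⟩)
      · rcases Nat.lt_or_ge p.1 (u+1) with h | h
        · exact Or.inl ⟨hp, by omega, by omega, h3⟩
        · exact Or.inr ⟨hp, by omega, h3⟩
      · have := hV.1 p hp
        exact Or.inl ⟨hp, by omega, by omega, h2⟩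
    · rintro (⟨hp, h1, h2, h3⟩ | ⟨hp, h1, h2⟩)
      · rcases Nat.lt_or_ge u p.2 with h | h
        · exact Or.inl ⟨hp, by omega, by omega, h3⟩
        · exact Or.inr ⟨hp, by omega, h3⟩
      · have := hV.1 p hp
        exact Or.inl ⟨hp, by omega, by omega, h2⟩
  · rw [disjoint_left]
    intro p hp hq
    simp only [mem_filter] at hp hq
    omega
  · rw [disjoint_left]
    intro p hp hq
    simp only [mem_filter] at hp hq
    omega

lemma eS_le_one (m : ℕ) (V : Finset (ℕ × ℕ)) (c : ℕ → ℤ) (hV : IsPairPartition m V)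
    (b : ℤ) (u : ℕ) : eS V c b u ≤ 1 := by
  classical
  apply card_le_one.2
  intro p hp q hq
  simp only [mem_filter] at hp hq
  have hb := hV.1 p hp.1
  have hu1 : 1 ≤ u := hp.2.1 ▸ hb.2.1
  have hu2 : u ≤ 2 * m := by have := hV.1 p hp.1; omega
  obtain ⟨x, _, hx⟩ := hV.2 u hu1 hu2
  rw [hx p ⟨hp.1, Or.inl hp.2.1⟩, hx q ⟨hq.1, Or.inl hq.2.1⟩]

lemma eE_le_one (m : ℕ) (V : Finset (ℕ × ℕ)) (c : ℕ → ℤ) (hV : IsPairPartition m V)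
    (b : ℤ) (u : ℕ) : eE V c b u ≤ 1 := by
  classical
  apply card_le_one.2
  intro p hp q hq
  simp only [mem_filter] at hp hq
  have hb := hV.1 p hp.1
  have hu1 : 1 ≤ u := by omega
  have hu2 : u ≤ 2 * m := by omega
  obtain ⟨x, _, hx⟩ := hV.2 u hu1 hu2
  rw [hx p ⟨hp.1, Or.inr hp.2.1⟩, hx q ⟨hq.1, Or.inr hq.2.1⟩]

open Finset

lemma eS_eq_one (V : Finset (ℕ × ℕ)) (c : ℕ → ℤ) {b : ℤ} {u : ℕ}
    (m : ℕ) (hV : IsPairPartition m V)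
    (h : isLeftPt V u) (hc : c u = b) : eS V c b u = 1 := by
  classical
  obtain ⟨p, hp, hp1⟩ := h
  have hmem : p ∈ V.filter fun p => p.1 = u ∧ c p.1 = b := by
    simp only [mem_filter]
    exact ⟨hp, hp1, by rw [hp1, hc]⟩
  have h1 : 1 ≤ eS V c b u := card_pos.2 ⟨p, hmem⟩
  have h2 := eS_le_one m V c hV b u
  omega

lemma eS_eq_zero (V : Finset (ℕ × ℕ)) (c : ℕ → ℤ) (b : ℤ) {u : ℕ}
    (h : ¬ isLeftPt V u) : eS V c b u = 0 := by
  classical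
  rw [eS, card_eq_zero, filter_eq_empty_iff]
  intro p hp hcon
  exact h ⟨p, hp, hcon.1⟩

lemma of_eS_pos (V : Finset (ℕ × ℕ)) (c : ℕ → ℤ) {b : ℤ} {u : ℕ}
    (h : 0 < eS V c b u) : isLeftPt V u ∧ c u = b := by
  classical
  obtain ⟨p, hp⟩ := card_pos.1 h
  simp only [mem_filter] at hp
  exact ⟨⟨p, hp.1, hp.2.1⟩, hp.2.1 ▸ hp.2.2⟩

lemma eE_eq_one (V : Finset (ℕ × ℕ)) (c : ℕ → ℤ) {b : ℤ} {u : ℕ}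
    (m : ℕ) (hV : IsPairPartition m V) (hcol : ∀ p ∈ V, c p.1 = c p.2)
    (h : isRightPt V u) (hc : c u = b) : eE V c b u = 1 := by
  classical
  obtain ⟨p, hp, hp2⟩ := h
  have hmem : p ∈ V.filter fun p => p.2 = u ∧ c p.1 = b := by
    simp only [mem_filter]
    exact ⟨hp, hp2, by rw [hcol p hp, hp2, hc]⟩
  have h1 : 1 ≤ eE V c b u := card_pos.2 ⟨p, hmem⟩
  have h2 := eE_le_one m V c hV b u
  omega

lemma eE_eq_zero (V : Finset (ℕ × ℕ)) (c : ℕ → ℤ) (b : ℤ) {u : ℕ}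
    (h : ¬ isRightPt V u) : eE V c b u = 0 := by
  classical
  rw [eE, card_eq_zero, filter_eq_empty_iff]
  intro p hp hcon
  exact h ⟨p, hp, hcon.1⟩

lemma of_eE_pos (V : Finset (ℕ × ℕ)) (c : ℕ → ℤ) {b : ℤ} {u : ℕ}
    (hcol : ∀ p ∈ V, c p.1 = c p.2)
    (h : 0 < eE V c b u) : isRightPt V u ∧ c u = b := by
  classical
  obtain ⟨p, hp⟩ := card_pos.1 h
  simp only [mem_filter] at hp
  refine ⟨⟨p, hp.1, hp.2.1⟩, ?_⟩
  rw [← hp.2.1, ← hcol p hp.1]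
  exact hp.2.2

/-- forward barrier: values stay `< r` if no left `b`-point attains `r`. -/
lemma walk_up (m : ℕ) (V : Finset (ℕ × ℕ)) (c : ℕ → ℤ) (hV : IsPairPartition m V)
    (b : ℤ) (r a e : ℕ) (ha : pcount V c b a < r)
    (hbar : ∀ u, a < u → u ≤ e → isLeftPt V u → c u = b → pcount V c b u ≠ r) :
    ∀ u, a ≤ u → u ≤ e → pcount V c b u < r := by
  intro u hu
  induction u, hu using Nat.le_induction with
  | base => intro _; exact ha
  | succ n hn ih =>
    intro hne
    have ihn := ih (by omega)
    have hstep := step m V c hV b n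
    have h1 := eS_le_one m V c hV b (n+1)
    have h2 := eE_le_one m V c hV b n
    by_contra hcon
    push_neg at hcon
    have hval : pcount V c b (n+1) = r := by omega
    have hpos : 0 < eS V c b (n+1) := by omega
    obtain ⟨hL, hcc⟩ := of_eS_pos V c hpos
    exact hbar (n+1) (by omega) hne hL hcc hval

/-- forward barrier: values stay `≥ r` if no right `b`-point attains `r`. -/
lemma walk_down (m : ℕ) (V : Finset (ℕ × ℕ)) (c : ℕ → ℤ) (hV : IsPairPartition m V)
    (hcol : ∀ p ∈ V, c p.1 = c p.2)
    (b : ℤ) (r a e : ℕ) (ha : r ≤ pcount V c b a)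
    (hbar : ∀ u, a ≤ u → u < e → isRightPt V u → c u = b → pcount V c b u ≠ r) :
    ∀ u, a ≤ u → u ≤ e → r ≤ pcount V c b u := by
  intro u hu
  induction u, hu using Nat.le_induction with
  | base => intro _; exact ha
  | succ n hn ih =>
    intro hne
    have ihn := ih (by omega)
    have hstep := step m V c hV b n
    have h1 := eS_le_one m V c hV b (n+1)
    have h2 := eE_le_one m V c hV b n
    by_contra hcon
    push_neg at hcon
    have hval : pcount V c b n = r := by omega
    have hpos : 0 < eE V c b n := by omega
    obtain ⟨hR, hcc⟩ := of_eE_pos V c hcol hpos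
    exact hbar n (by omega) (by omega) hR hcc hval

lemma eS_eq_zero' (V : Finset (ℕ × ℕ)) (c : ℕ → ℤ) {b : ℤ} {u : ℕ}
    (h : c u ≠ b) : eS V c b u = 0 := by
  by_contra hcon
  exact h (of_eS_pos V c (Nat.pos_of_ne_zero hcon)).2

lemma eE_eq_zero' (V : Finset (ℕ × ℕ)) (c : ℕ → ℤ) {b : ℤ} {u : ℕ}
    (hcol : ∀ p ∈ V, c p.1 = c p.2) (h : c u ≠ b) : eE V c b u = 0 := by
  by_contra hcon
  exact h (of_eE_pos V c hcol (Nat.pos_of_ne_zero hcon)).2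

/-- Case k ∈ L ∩ D, Z least: Z k cannot be a left point of the same color. -/
lemma LD_left (m : ℕ) (V : Finset (ℕ × ℕ)) (c : ℕ → ℤ) (hV : IsPairPartition m V)
    (hcol : ∀ p ∈ V, c p.1 = c p.2) (k k' : ℕ) (hk1 : 1 ≤ k)
    (hLk : isLeftPt V k) (hkk' : k < k') (hk'2 : k' ≤ 2 * m)
    (hmin : ∀ u, k < u → u < k' → rcount V c u ≠ rcount V c k)
    (hLk' : isLeftPt V k') (hck' : c k' = c k)
    (hrk' : rcount V c k' = rcount V c k) : False := by
  have hfk' : pcount V c (c k) k' = rcount V c k := by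
    rw [← hrk']; unfold rcount; rw [hck']
  have hdown : ∀ u, k ≤ u → u ≤ k' - 1 → rcount V c k ≤ pcount V c (c k) u := by
    apply walk_down m V c hV hcol (c k) (rcount V c k) k (k'-1) le_rfl
    intro u h1 h2 hR hcu heq
    rcases Nat.eq_or_lt_of_le h1 with h | h
    · rw [← h] at hR; exact notLR m V hV hLk hR
    · exact hmin u h (by omega) (by unfold rcount; rw [hcu]; exact heq)
  have hfk1 : rcount V c k ≤ pcount V c (c k) (k'-1) := hdown (k'-1) (by omega) le_rfl
  have hstep := step m V c hV (c k) (k'-1)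
  rw [show k' - 1 + 1 = k' by omega] at hstep
  have heS : eS V c (c k) k' = 1 := eS_eq_one V c m hV hLk' hck'
  have heE_le := eE_le_one m V c hV (c k) (k'-1)
  have hpos : 0 < eE V c (c k) (k'-1) := by omega
  obtain ⟨hR, hcc⟩ := of_eE_pos V c hcol hpos
  have hvl : pcount V c (c k) (k'-1) = rcount V c k := by omega
  by_cases h : k' - 1 = k
  · rw [h] at hR; exact notLR m V hV hLk hR
  · exact hmin (k'-1) (by omega) (by omega)
      (by unfold rcount; rw [hcc]; exact hvl)

/-- Case k ∈ L ∩ D, Z least: Z k cannot be a right point of the opposite color. -/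
lemma LD_right (m : ℕ) (V : Finset (ℕ × ℕ)) (c : ℕ → ℤ) (hV : IsPairPartition m V)
    (hcol : ∀ p ∈ V, c p.1 = c p.2) (k k' : ℕ) (hk1 : 1 ≤ k)
    (hD : pcount V c (-(c k)) k < rcount V c k) (hkk' : k < k') (hk'2 : k' ≤ 2 * m)
    (hmin : ∀ u, k < u → u < k' → rcount V c u ≠ rcount V c k)
    (hRk' : isRightPt V k') (hck' : c k' = -(c k))
    (hrk' : rcount V c k' = rcount V c k) : False := by
  have hgk' : pcount V c (-(c k)) k' = rcount V c k := by
    rw [← hrk']; unfold rcount; rw [hck']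
  have hup : ∀ u, k ≤ u → u ≤ k' → pcount V c (-(c k)) u < rcount V c k := by
    apply walk_up m V c hV (-(c k)) (rcount V c k) k k' hD
    intro u h1 h2 hL hcu heq
    rcases Nat.eq_or_lt_of_le h2 with h | h
    · rw [h] at hL; exact notLR m V hV hL hRk'
    · exact hmin u h1 h (by unfold rcount; rw [hcu]; exact heq)
  have := hup k' (by omega) le_rfl
  omega

/-- Case k ∈ R ∩ S, Z least: Z k cannot be a right point of the same color. -/
lemma RS_right (m : ℕ) (V : Finset (ℕ × ℕ)) (c : ℕ → ℤ) (hV : IsPairPartition m V)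
    (hcol : ∀ p ∈ V, c p.1 = c p.2) (k k' : ℕ) (hk1 : 1 ≤ k)
    (hRk : isRightPt V k) (hkk' : k < k') (hk'2 : k' ≤ 2 * m)
    (hmin : ∀ u, k < u → u < k' → rcount V c u ≠ rcount V c k)
    (hRk' : isRightPt V k') (hck' : c k' = c k)
    (hrk' : rcount V c k' = rcount V c k) : False := by
  have hfk : pcount V c (c k) k = rcount V c k := rfl
  have hfk' : pcount V c (c k) k' = rcount V c k := by
    rw [← hrk']; unfold rcount; rw [hck']
  have hstep0 := step m V c hV (c k) k
  have heE0 : eE V c (c k) k = 1 := eE_eq_one V c m hV hcol hRk rfl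
  have heS0 := eS_le_one m V c hV (c k) (k+1)
  have heSk' : eS V c (c k) k' = 0 :=
    eS_eq_zero V c (c k) (fun hL => notLR m V hV hL hRk')
  by_cases hadj : k' = k + 1
  · rw [hadj] at hfk' heSk'
    omega
  · have h1 : pcount V c (c k) (k+1) < rcount V c k := by
      by_contra hcon
      push_neg at hcon
      have hpos : 0 < eS V c (c k) (k+1) := by omega
      obtain ⟨hL, hcc⟩ := of_eS_pos V c hpos
      exact hmin (k+1) (by omega) (by omega)
        (by unfold rcount; rw [hcc]; omega)
    have hup := walk_up m V c hV (c k) (rcount V c k) (k+1) (k'-1) h1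
      (fun u hu1 hu2 hL hcu heq =>
        hmin u (by omega) (by omega) (by unfold rcount; rw [hcu]; exact heq))
    have h2 := hup (k'-1) (by omega) le_rfl
    have hstep1 := step m V c hV (c k) (k'-1)
    rw [show k' - 1 + 1 = k' by omega] at hstep1
    omega

/-- Case k ∈ R ∩ S, Z least: Z k cannot be a left point of the opposite color. -/
lemma RS_left (m : ℕ) (V : Finset (ℕ × ℕ)) (c : ℕ → ℤ) (hV : IsPairPartition m V)
    (hcol : ∀ p ∈ V, c p.1 = c p.2) (k k' : ℕ) (hk1 : 1 ≤ k)
    (hcne : c k ≠ -(c k))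
    (hS : rcount V c k ≤ pcount V c (-(c k)) k) (hkk' : k < k') (hk'2 : k' ≤ 2 * m)
    (hmin : ∀ u, k < u → u < k' → rcount V c u ≠ rcount V c k)
    (hLk' : isLeftPt V k') (hck' : c k' = -(c k))
    (hrk' : rcount V c k' = rcount V c k) : False := by
  have hfk : pcount V c (c k) k = rcount V c k := rfl
  have hgk' : pcount V c (-(c k)) k' = rcount V c k := by
    rw [← hrk']; unfold rcount; rw [hck']
  have hstep0 := step m V c hV (-(c k)) k
  have heE0 : eE V c (-(c k)) k = 0 := eE_eq_zero' V c hcol hcne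
  have heSk' : eS V c (-(c k)) k' = 1 := eS_eq_one V c m hV hLk' hck'
  have heS0 := eS_le_one m V c hV (-(c k)) (k+1)
  by_cases hadj : k' = k + 1
  · rw [hadj] at hgk' heSk'
    omega
  · have h1 : rcount V c k ≤ pcount V c (-(c k)) (k+1) := by omega
    have hdown := walk_down m V c hV hcol (-(c k)) (rcount V c k) (k+1) (k'-1) h1
      (fun u hu1 hu2 hR hcu heq =>
        hmin u (by omega) (by omega) (by unfold rcount; rw [hcu]; exact heq))
    have h2 := hdown (k'-1) (by omega) le_rfl
    have hstep1 := step m V c hV (-(c k)) (k'-1)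
    rw [show k' - 1 + 1 = k' by omega] at hstep1
    have heE1 := eE_le_one m V c hV (-(c k)) (k'-1)
    have hpos : 0 < eE V c (-(c k)) (k'-1) := by omega
    obtain ⟨hR, hcc⟩ := of_eE_pos V c hcol hpos
    exact hmin (k'-1) (by omega) (by omega)
      (by unfold rcount; rw [hcc]; omega)

/-- Case k ∈ L ∩ S, Z greatest: Z k cannot be a left point of the same color. -/
lemma LS_left (m : ℕ) (V : Finset (ℕ × ℕ)) (c : ℕ → ℤ) (hV : IsPairPartition m V)
    (hcol : ∀ p ∈ V, c p.1 = c p.2) (k k' : ℕ) (hk'1 : 1 ≤ k')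
    (hLk : isLeftPt V k) (hkk' : k' < k) (hk2 : k ≤ 2 * m)
    (hmax : ∀ u, k' < u → u < k → rcount V c u ≠ rcount V c k)
    (hLk' : isLeftPt V k') (hck' : c k' = c k)
    (hrk' : rcount V c k' = rcount V c k) : False := by
  have hfk : pcount V c (c k) k = rcount V c k := rfl
  have hfk' : pcount V c (c k) k' = rcount V c k := by
    rw [← hrk']; unfold rcount; rw [hck']
  have hstep0 := step m V c hV (c k) k'
  have heEk' : eE V c (c k) k' = 0 :=
    eE_eq_zero V c (c k) (fun hR => notLR m V hV hLk' hR)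
  have heSk : eS V c (c k) k = 1 := eS_eq_one V c m hV hLk rfl
  by_cases hadj : k = k' + 1
  · rw [← hadj] at hstep0
    omega
  · have h1 : rcount V c k ≤ pcount V c (c k) (k'+1) := by omega
    have hdown := walk_down m V c hV hcol (c k) (rcount V c k) (k'+1) (k-1) h1
      (fun u hu1 hu2 hR hcu heq =>
        hmax u (by omega) (by omega) (by unfold rcount; rw [hcu]; exact heq))
    have h2 := hdown (k-1) (by omega) le_rfl
    have hstep1 := step m V c hV (c k) (k-1)
    rw [show k - 1 + 1 = k by omega] at hstep1
    have heE1 := eE_le_one m V c hV (c k) (k-1)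
    have hpos : 0 < eE V c (c k) (k-1) := by omega
    obtain ⟨hR, hcc⟩ := of_eE_pos V c hcol hpos
    exact hmax (k-1) (by omega) (by omega)
      (by unfold rcount; rw [hcc]; omega)

/-- Case k ∈ L ∩ S, Z greatest: Z k cannot be a right point of the opposite color. -/
lemma LS_right (m : ℕ) (V : Finset (ℕ × ℕ)) (c : ℕ → ℤ) (hV : IsPairPartition m V)
    (hcol : ∀ p ∈ V, c p.1 = c p.2) (k k' : ℕ) (hk'1 : 1 ≤ k')
    (hcne : c k ≠ -(c k))
    (hS : rcount V c k ≤ pcount V c (-(c k)) k) (hkk' : k' < k) (hk2 : k ≤ 2 * m)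
    (hmax : ∀ u, k' < u → u < k → rcount V c u ≠ rcount V c k)
    (hRk' : isRightPt V k') (hck' : c k' = -(c k))
    (hrk' : rcount V c k' = rcount V c k) : False := by
  have hfk : pcount V c (c k) k = rcount V c k := rfl
  have hgk' : pcount V c (-(c k)) k' = rcount V c k := by
    rw [← hrk']; unfold rcount; rw [hck']
  have hstep0 := step m V c hV (-(c k)) k'
  have heEk' : eE V c (-(c k)) k' = 1 := eE_eq_one V c m hV hcol hRk' hck'
  have heSk : eS V c (-(c k)) k = 0 := eS_eq_zero' V c hcne
  have heS0 := eS_le_one m V c hV (-(c k)) (k'+1)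
  by_cases hadj : k = k' + 1
  · rw [← hadj] at hstep0
    omega
  · have h1 : pcount V c (-(c k)) (k'+1) < rcount V c k := by
      by_contra hcon
      push_neg at hcon
      have hpos : 0 < eS V c (-(c k)) (k'+1) := by omega
      obtain ⟨hL, hcc⟩ := of_eS_pos V c hpos
      exact hmax (k'+1) (by omega) (by omega)
        (by unfold rcount; rw [hcc]; omega)
    have hup := walk_up m V c hV (-(c k)) (rcount V c k) (k'+1) (k-1) h1
      (fun u hu1 hu2 hL hcu heq =>
        hmax u (by omega) (by omega) (by unfold rcount; rw [hcu]; exact heq))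
    have h2 := hup (k-1) (by omega) le_rfl
    have hstep1 := step m V c hV (-(c k)) (k-1)
    rw [show k - 1 + 1 = k by omega] at hstep1
    omega

/-- Case k ∈ R ∩ D, Z greatest: Z k cannot be a right point of the same color. -/
lemma RD_right (m : ℕ) (V : Finset (ℕ × ℕ)) (c : ℕ → ℤ) (hV : IsPairPartition m V)
    (hcol : ∀ p ∈ V, c p.1 = c p.2) (k k' : ℕ) (hk'1 : 1 ≤ k')
    (hRk : isRightPt V k) (hkk' : k' < k) (hk2 : k ≤ 2 * m)
    (hmax : ∀ u, k' < u → u < k → rcount V c u ≠ rcount V c k)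
    (hRk' : isRightPt V k') (hck' : c k' = c k)
    (hrk' : rcount V c k' = rcount V c k) : False := by
  have hfk : pcount V c (c k) k = rcount V c k := rfl
  have hfk' : pcount V c (c k) k' = rcount V c k := by
    rw [← hrk']; unfold rcount; rw [hck']
  have hstep0 := step m V c hV (c k) k'
  have heEk' : eE V c (c k) k' = 1 := eE_eq_one V c m hV hcol hRk' hck'
  have heSk : eS V c (c k) k = 0 :=
    eS_eq_zero V c (c k) (fun hL => notLR m V hV hL hRk)
  have heS0 := eS_le_one m V c hV (c k) (k'+1)
  by_cases hadj : k = k' + 1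
  · rw [← hadj] at hstep0
    omega
  · have h1 : pcount V c (c k) (k'+1) < rcount V c k := by
      by_contra hcon
      push_neg at hcon
      have hpos : 0 < eS V c (c k) (k'+1) := by omega
      obtain ⟨hL, hcc⟩ := of_eS_pos V c hpos
      exact hmax (k'+1) (by omega) (by omega)
        (by unfold rcount; rw [hcc]; omega)
    have hup := walk_up m V c hV (c k) (rcount V c k) (k'+1) (k-1) h1
      (fun u hu1 hu2 hL hcu heq =>
        hmax u (by omega) (by omega) (by unfold rcount; rw [hcu]; exact heq))
    have h2 := hup (k-1) (by omega) le_rfl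
    have hstep1 := step m V c hV (c k) (k-1)
    rw [show k - 1 + 1 = k by omega] at hstep1
    omega

/-- Case k ∈ R ∩ D, Z greatest: Z k cannot be a left point of the opposite color. -/
lemma RD_left (m : ℕ) (V : Finset (ℕ × ℕ)) (c : ℕ → ℤ) (hV : IsPairPartition m V)
    (hcol : ∀ p ∈ V, c p.1 = c p.2) (k k' : ℕ) (hk'1 : 1 ≤ k')
    (hcne : c k ≠ -(c k))
    (hD : pcount V c (-(c k)) k < rcount V c k) (hkk' : k' < k) (hk2 : k ≤ 2 * m)
    (hmax : ∀ u, k' < u → u < k → rcount V c u ≠ rcount V c k)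
    (hLk' : isLeftPt V k') (hck' : c k' = -(c k))
    (hrk' : rcount V c k' = rcount V c k) : False := by
  have hfk : pcount V c (c k) k = rcount V c k := rfl
  have hgk' : pcount V c (-(c k)) k' = rcount V c k := by
    rw [← hrk']; unfold rcount; rw [hck']
  have hstep0 := step m V c hV (-(c k)) k'
  have heEk' : eE V c (-(c k)) k' = 0 :=
    eE_eq_zero V c (-(c k)) (fun hR => notLR m V hV hLk' hR)
  have heSk : eS V c (-(c k)) k = 0 := eS_eq_zero' V c hcne
  by_cases hadj : k = k' + 1
  · rw [← hadj] at hstep0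
    omega
  · have h1 : rcount V c k ≤ pcount V c (-(c k)) (k'+1) := by omega
    have hdown := walk_down m V c hV hcol (-(c k)) (rcount V c k) (k'+1) (k-1) h1
      (fun u hu1 hu2 hR hcu heq =>
        hmax u (by omega) (by omega) (by unfold rcount; rw [hcu]; exact heq))
    have h2 := hdown (k-1) (by omega) le_rfl
    have hstep1 := step m V c hV (-(c k)) (k-1)
    rw [show k - 1 + 1 = k by omega] at hstep1
    have heE1 := eE_le_one m V c hV (-(c k)) (k-1)
    have hpos : 0 < eE V c (-(c k)) (k-1) := by omega
    obtain ⟨hR, hcc⟩ := of_eE_pos V c hcol hpos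
    exact hmax (k-1) (by omega) (by omega)
      (by unfold rcount; rw [hcc]; omega)

/-- if `k ∈ L_V` then `Z(k) ∈ L_V ↔ c(Z(k)) = -c(k)`; if `k ∈ R_V` then
`Z(k) ∈ R_V ↔ c(Z(k)) = -c(k)`. -/
theorem Z_left_right (m : ℕ) (hm : 1 ≤ m) (V : Finset (ℕ × ℕ)) (c : ℕ → ℤ)
    (hV : IsPairPartition m V) (hc : IsColoring m V c)
    (Z : ℕ → ℕ) (hZ : IsZmap m V c Z)
    (k : ℕ) (hk1 : 1 ≤ k) (hk2 : k ≤ 2 * m) :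
    (isLeftPt V k → (isLeftPt V (Z k) ↔ c (Z k) = -(c k))) ∧
    (isRightPt V k → (isRightPt V (Z k) ↔ c (Z k) = -(c k))) := by
  have hcol := hc.1
  have hcv := hc.2 k hk1 hk2
  have hcne : c k ≠ -(c k) := by rcases hcv with h | h <;> rw [h] <;> norm_num
  obtain ⟨hZ1, hZ2⟩ := hZ k hk1 hk2
  constructor
  · intro hLk
    by_cases hD : inDom V c k
    · obtain ⟨⟨⟨hz1, hz2⟩, hkz, hrz⟩, hlb⟩ := hZ1 (Or.inl ⟨hLk, hD⟩)
      have hmin : ∀ u, k < u → u < Z k → rcount V c u ≠ rcount V c k := by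
        intro u h1 h2 heq
        have := hlb (show u ∈ _ from ⟨⟨by omega, by omega⟩, h1, heq⟩)
        omega
      have hcvz := hc.2 (Z k) hz1 hz2
      constructor
      · intro hLz
        by_contra hne
        have hcz : c (Z k) = c k := by
          rcases hcvz with h | h <;> rcases hcv with h' | h' <;> omega
        exact LD_left m V c hV hcol k (Z k) hk1 hLk hkz hz2 hmin hLz hcz hrz
      · intro hcz
        by_contra hnL
        have hRz : isRightPt V (Z k) := (LorR m V hV hz1 hz2).resolve_left hnL
        exact LD_right m V c hV hcol k (Z k) hk1 hD hkz hz2 hmin hRz hcz hrz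
    · obtain ⟨⟨⟨hz1, hz2⟩, hzk, hrz⟩, hub⟩ := hZ2 (Or.inr ⟨hLk, hD⟩)
      have hmax : ∀ u, Z k < u → u < k → rcount V c u ≠ rcount V c k := by
        intro u h1 h2 heq
        have := hub (show u ∈ _ from ⟨⟨by omega, by omega⟩, h2, heq⟩)
        omega
      have hS : rcount V c k ≤ pcount V c (-(c k)) k := by
        unfold inDom at hD; omega
      have hcvz := hc.2 (Z k) hz1 hz2
      constructor
      · intro hLz
        by_contra hne
        have hcz : c (Z k) = c k := by
          rcases hcvz with h | h <;> rcases hcv with h' | h' <;> omega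
        exact LS_left m V c hV hcol k (Z k) hz1 hLk hzk hk2 hmax hLz hcz hrz
      · intro hcz
        by_contra hnL
        have hRz : isRightPt V (Z k) := (LorR m V hV hz1 hz2).resolve_left hnL
        exact LS_right m V c hV hcol k (Z k) hz1 hcne hS hzk hk2 hmax hRz hcz hrz
  · intro hRk
    by_cases hD : inDom V c k
    · obtain ⟨⟨⟨hz1, hz2⟩, hzk, hrz⟩, hub⟩ := hZ2 (Or.inl ⟨hRk, hD⟩)
      have hmax : ∀ u, Z k < u → u < k → rcount V c u ≠ rcount V c k := by
        intro u h1 h2 heq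
        have := hub (show u ∈ _ from ⟨⟨by omega, by omega⟩, h2, heq⟩)
        omega
      have hcvz := hc.2 (Z k) hz1 hz2
      constructor
      · intro hRz
        by_contra hne
        have hcz : c (Z k) = c k := by
          rcases hcvz with h | h <;> rcases hcv with h' | h' <;> omega
        exact RD_right m V c hV hcol k (Z k) hz1 hRk hzk hk2 hmax hRz hcz hrz
      · intro hcz
        by_contra hnR
        have hLz : isLeftPt V (Z k) := (LorR m V hV hz1 hz2).resolve_right hnR
        exact RD_left m V c hV hcol k (Z k) hz1 hcne hD hzk hk2 hmax hLz hcz hrz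
    · obtain ⟨⟨⟨hz1, hz2⟩, hkz, hrz⟩, hlb⟩ := hZ1 (Or.inr ⟨hRk, hD⟩)
      have hmin : ∀ u, k < u → u < Z k → rcount V c u ≠ rcount V c k := by
        intro u h1 h2 heq
        have := hlb (show u ∈ _ from ⟨⟨by omega, by omega⟩, h1, heq⟩)
        omega
      have hS : rcount V c k ≤ pcount V c (-(c k)) k := by
        unfold inDom at hD; omega
      have hcvz := hc.2 (Z k) hz1 hz2
      constructor
      · intro hRz
        by_contra hne
        have hcz : c (Z k) = c k := by
          rcases hcvz with h | h <;> rcases hcv with h' | h' <;> omega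
        exact RS_right m V c hV hcol k (Z k) hk1 hRk hkz hz2 hmin hRz hcz hrz
      · intro hcz
        by_contra hnR
        have hLz : isLeftPt V (Z k) := (LorR m V hV hz1 hz2).resolve_right hnR
        exact RS_left m V c hV hcol k (Z k) hk1 hcne hS hkz hz2 hmin hLz hcz hrz
end

section
/- Let (V,c) be a 2-colored pair partition of [2m]. Then for every k ∈ [2m], Z(Z(k)) = k. -/
open Finset

-- ===== auxiliary development =====

namespace ZAux

/-- number of left points `≤ u` of color `b` -/
def lcnt (V : Finset (ℕ × ℕ)) (c : ℕ → ℤ) (b : ℤ) (u : ℕ) : ℕ :=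
  (V.filter fun p => c p.1 = b ∧ p.1 ≤ u).card

/-- number of right points `≤ u` of color `b` -/
def rcnt (V : Finset (ℕ × ℕ)) (c : ℕ → ℤ) (b : ℤ) (u : ℕ) : ℕ :=
  (V.filter fun p => c p.1 = b ∧ p.2 ≤ u).card

/-- height of the color-`b` path after position `u` -/
def hgt (V : Finset (ℕ × ℕ)) (c : ℕ → ℤ) (b : ℤ) (u : ℕ) : ℤ :=
  (lcnt V c b u : ℤ) - (rcnt V c b u : ℤ)

/-- the state used in the alternation argument -/
def nval (V : Finset (ℕ × ℕ)) (c : ℕ → ℤ) (t : ℕ) (u : ℕ) : ℕ :=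
  (if (t : ℤ) ≤ hgt V c 1 u then 1 else 0) + (if (t : ℤ) ≤ hgt V c (-1) u then 1 else 0)

variable {m : ℕ} {V : Finset (ℕ × ℕ)} {c : ℕ → ℤ}

lemma pcount_split (hV : IsPairPartition m V) {u : ℕ} (hu : 1 ≤ u) (b : ℤ) :
    lcnt V c b u = pcount V c b u + rcnt V c b (u - 1) := by
  have hset : V.filter (fun p => c p.1 = b ∧ p.1 ≤ u) =
      V.filter (fun p => p.1 ≤ u ∧ u ≤ p.2 ∧ c p.1 = b) ∪
      V.filter (fun p => c p.1 = b ∧ p.2 ≤ u - 1) := by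
    ext q
    simp only [mem_filter, mem_union]
    constructor
    · rintro ⟨hq, hb, h1⟩
      rcases le_or_gt u q.2 with h | h
      · exact Or.inl ⟨hq, h1, h, hb⟩
      · exact Or.inr ⟨hq, hb, by omega⟩
    · rintro (⟨hq, h1, _, hb⟩ | ⟨hq, hb, h2⟩)
      · exact ⟨hq, hb, h1⟩
      · have := (hV.1 q hq).1
        exact ⟨hq, hb, by omega⟩
  have hdisj : Disjoint (V.filter (fun p => p.1 ≤ u ∧ u ≤ p.2 ∧ c p.1 = b))
      (V.filter (fun p => c p.1 = b ∧ p.2 ≤ u - 1)) := by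
    rw [Finset.disjoint_left]
    rintro q hq1 hq2
    simp only [mem_filter] at hq1 hq2
    omega
  rw [lcnt, hset, card_union_of_disjoint hdisj]
  rfl

lemma step_left (hV : IsPairPartition m V) {u : ℕ} {p0 : ℕ × ℕ} (hu : 1 ≤ u)
    (hp0 : p0 ∈ V) (hl : p0.1 = u) (huniq : ∀ q ∈ V, (q.1 = u ∨ q.2 = u) → q = p0) (b : ℤ) :
    lcnt V c b u = lcnt V c b (u - 1) + (if c u = b then 1 else 0) ∧
    rcnt V c b u = rcnt V c b (u - 1) := by
  constructor
  · have hsplit : V.filter (fun p => c p.1 = b ∧ p.1 ≤ u) =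
        V.filter (fun p => c p.1 = b ∧ p.1 ≤ u - 1) ∪ V.filter (fun p => c p.1 = b ∧ p.1 = u) := by
      ext q
      simp only [mem_filter, mem_union]
      constructor
      · rintro ⟨hq, hb, h1⟩
        rcases eq_or_ne q.1 u with h | h
        · exact Or.inr ⟨hq, hb, h⟩
        · exact Or.inl ⟨hq, hb, by omega⟩
      · rintro (⟨hq, hb, h1⟩ | ⟨hq, hb, h1⟩)
        · exact ⟨hq, hb, by omega⟩
        · exact ⟨hq, hb, by omega⟩
    have hdisj : Disjoint (V.filter (fun p => c p.1 = b ∧ p.1 ≤ u - 1))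
        (V.filter (fun p => c p.1 = b ∧ p.1 = u)) := by
      rw [Finset.disjoint_left]
      rintro q hq1 hq2
      simp only [mem_filter] at hq1 hq2
      omega
    have hpt : (V.filter (fun p => c p.1 = b ∧ p.1 = u)) = if c u = b then {p0} else ∅ := by
      split_ifs with hcb
      · ext q
        simp only [mem_filter, mem_singleton]
        constructor
        · rintro ⟨hq, _, h1⟩
          exact huniq q hq (Or.inl h1)
        · rintro rfl
          exact ⟨hp0, by rw [hl]; exact hcb, hl⟩
      · ext q
        simp only [mem_filter, notMem_empty, iff_false]
        rintro ⟨hq, hb', h1⟩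
        rw [h1] at hb'
        exact hcb hb'
    rw [lcnt, hsplit, card_union_of_disjoint hdisj, hpt]
    split_ifs <;> simp [lcnt]
  · have : V.filter (fun p => c p.1 = b ∧ p.2 ≤ u) = V.filter (fun p => c p.1 = b ∧ p.2 ≤ u - 1) := by
      ext q
      simp only [mem_filter]
      constructor
      · rintro ⟨hq, hb, h2⟩
        refine ⟨hq, hb, ?_⟩
        rcases eq_or_ne q.2 u with h | h
        · have hq0 := huniq q hq (Or.inr h)
          subst hq0
          have := (hV.1 q hq).1
          omega
        · omega
      · rintro ⟨hq, hb, h2⟩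
        exact ⟨hq, hb, by omega⟩
    rw [rcnt, this]
    rfl

lemma step_right (hV : IsPairPartition m V) (hc : IsColoring m V c) {u : ℕ} {p0 : ℕ × ℕ}
    (hu : 1 ≤ u) (hp0 : p0 ∈ V) (hr : p0.2 = u)
    (huniq : ∀ q ∈ V, (q.1 = u ∨ q.2 = u) → q = p0) (b : ℤ) :
    lcnt V c b u = lcnt V c b (u - 1) ∧
    rcnt V c b u = rcnt V c b (u - 1) + (if c u = b then 1 else 0) := by
  constructor
  · have : V.filter (fun p => c p.1 = b ∧ p.1 ≤ u) = V.filter (fun p => c p.1 = b ∧ p.1 ≤ u - 1) := by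
      ext q
      simp only [mem_filter]
      constructor
      · rintro ⟨hq, hb, h1⟩
        refine ⟨hq, hb, ?_⟩
        rcases eq_or_ne q.1 u with h | h
        · have hq0 := huniq q hq (Or.inl h)
          subst hq0
          have := (hV.1 q hq).1
          omega
        · omega
      · rintro ⟨hq, hb, h1⟩
        exact ⟨hq, hb, by omega⟩
    rw [lcnt, this]
    rfl
  · have hsplit : V.filter (fun p => c p.1 = b ∧ p.2 ≤ u) =
        V.filter (fun p => c p.1 = b ∧ p.2 ≤ u - 1) ∪ V.filter (fun p => c p.1 = b ∧ p.2 = u) := by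
      ext q
      simp only [mem_filter, mem_union]
      constructor
      · rintro ⟨hq, hb, h1⟩
        rcases eq_or_ne q.2 u with h | h
        · exact Or.inr ⟨hq, hb, h⟩
        · exact Or.inl ⟨hq, hb, by omega⟩
      · rintro (⟨hq, hb, h1⟩ | ⟨hq, hb, h1⟩)
        · exact ⟨hq, hb, by omega⟩
        · exact ⟨hq, hb, by omega⟩
    have hdisj : Disjoint (V.filter (fun p => c p.1 = b ∧ p.2 ≤ u - 1))
        (V.filter (fun p => c p.1 = b ∧ p.2 = u)) := by
      rw [Finset.disjoint_left]
      rintro q hq1 hq2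
      simp only [mem_filter] at hq1 hq2
      omega
    have hcol : c p0.1 = c u := by
      rw [hc.1 p0 hp0, hr]
    have hpt : (V.filter (fun p => c p.1 = b ∧ p.2 = u)) = if c u = b then {p0} else ∅ := by
      split_ifs with hcb
      · ext q
        simp only [mem_filter, mem_singleton]
        constructor
        · rintro ⟨hq, _, h1⟩
          exact huniq q hq (Or.inr h1)
        · rintro rfl
          exact ⟨hp0, by rw [hcol]; exact hcb, hr⟩
      · ext q
        simp only [mem_filter, notMem_empty, iff_false]
        rintro ⟨hq, hb', h1⟩
        have hq0 := huniq q hq (Or.inr h1)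
        subst hq0
        rw [hcol] at hb'
        exact hcb hb'
    rw [rcnt, hsplit, card_union_of_disjoint hdisj, hpt]
    split_ifs <;> simp [rcnt]

end ZAux

namespace ZAux

variable {m : ℕ} {V : Finset (ℕ × ℕ)} {c : ℕ → ℤ}

lemma profile_left (hV : IsPairPartition m V) {u : ℕ} {p0 : ℕ × ℕ} (hu : 1 ≤ u)
    (hp0 : p0 ∈ V) (hl : p0.1 = u) (huniq : ∀ q ∈ V, (q.1 = u ∨ q.2 = u) → q = p0) (b : ℤ) :
    hgt V c b u = hgt V c b (u - 1) + (if c u = b then 1 else 0) ∧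
    (pcount V c b u : ℤ) = hgt V c b u := by
  obtain ⟨h1, h2⟩ := step_left hV hu hp0 hl huniq (c := c) b
  have h0 := pcount_split hV (c := c) hu b
  constructor
  · rw [hgt, hgt, h1, h2]
    split_ifs <;> push_cast <;> ring
  · rw [hgt, h0, h2]
    push_cast
    ring

lemma profile_right (hV : IsPairPartition m V) (hc : IsColoring m V c) {u : ℕ} {p0 : ℕ × ℕ}
    (hu : 1 ≤ u) (hp0 : p0 ∈ V) (hr : p0.2 = u)
    (huniq : ∀ q ∈ V, (q.1 = u ∨ q.2 = u) → q = p0) (b : ℤ) :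
    hgt V c b u = hgt V c b (u - 1) - (if c u = b then 1 else 0) ∧
    (pcount V c b u : ℤ) = hgt V c b (u - 1) := by
  obtain ⟨h1, h2⟩ := step_right hV hc hu hp0 hr huniq b
  have h0 := pcount_split hV (c := c) hu b
  constructor
  · rw [hgt, hgt, h1, h2]
    split_ifs <;> push_cast <;> ring
  · have : (pcount V c b u : ℤ) = (lcnt V c b u : ℤ) - (rcnt V c b (u-1) : ℤ) := by
      rw [h0]; push_cast; ring
    rw [this, h1, hgt]

lemma nval_eq_of_iff {t : ℕ} {u v : ℕ}
    (h1 : ((t : ℤ) ≤ hgt V c 1 u ↔ (t : ℤ) ≤ hgt V c 1 v))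
    (h2 : ((t : ℤ) ≤ hgt V c (-1) u ↔ (t : ℤ) ≤ hgt V c (-1) v)) :
    nval V c t u = nval V c t v := by
  rw [nval, nval]
  split_ifs <;> tauto

lemma nval_decomp {b0 : ℤ} (hb0 : b0 = 1 ∨ b0 = -1) (t u : ℕ) :
    nval V c t u = (if (t : ℤ) ≤ hgt V c b0 u then 1 else 0) +
      (if (t : ℤ) ≤ hgt V c (-b0) u then 1 else 0) := by
  rcases hb0 with h | h <;> subst h <;> simp [nval, add_comm] <;> norm_num

/-- non-class points do not change the state -/
lemma nval_const_step (hV : IsPairPartition m V) (hc : IsColoring m V c) {u : ℕ}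
    (hu1 : 1 ≤ u) (hu2 : u ≤ 2 * m) (t : ℕ) (ht : rcount V c u ≠ t) :
    nval V c t u = nval V c t (u - 1) := by
  obtain ⟨p0, ⟨hp0, hp0k⟩, huniq'⟩ := hV.2 u hu1 hu2
  have huniq : ∀ q ∈ V, (q.1 = u ∨ q.2 = u) → q = p0 := fun q hq h => huniq' q ⟨hq, h⟩
  have key : ∀ b : ℤ, ((t : ℤ) ≤ hgt V c b u ↔ (t : ℤ) ≤ hgt V c b (u - 1)) := by
    intro b
    rcases hp0k with hl | hr
    · obtain ⟨hstep, hpc⟩ := profile_left hV hu1 hp0 hl huniq (c := c) b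
      by_cases hcb : c u = b
      · have hcc : c p0.1 = c u := by rw [hl]
        have hne : hgt V c b u ≠ (t : ℤ) := by
          intro h
          apply ht
          have : (pcount V c b u : ℤ) = (t : ℤ) := by rw [hpc, h]
          have hbt : pcount V c b u = t := by exact_mod_cast this
          rw [rcount, hcb]
          exact hbt
        rw [hstep]
        split_ifs <;> omega
      · rw [hstep]
        split_ifs <;> omega
    · obtain ⟨hstep, hpc⟩ := profile_right hV hc hu1 hp0 hr huniq b
      by_cases hcb : c u = b
      · have hne : hgt V c b (u - 1) ≠ (t : ℤ) := by
          intro h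
          apply ht
          have : (pcount V c b u : ℤ) = (t : ℤ) := by rw [hpc, h]
          have hbt : pcount V c b u = t := by exact_mod_cast this
          rw [rcount, hcb]
          exact hbt
        rw [hstep]
        split_ifs <;> omega
      · rw [hstep]
        split_ifs <;> omega
  exact nval_eq_of_iff (key 1) (key (-1))

end ZAux

namespace ZAux

variable {m : ℕ} {V : Finset (ℕ × ℕ)} {c : ℕ → ℤ}

lemma class_char (hV : IsPairPartition m V) (hc : IsColoring m V c) {u : ℕ}
    (hu1 : 1 ≤ u) (hu2 : u ≤ 2 * m) {t : ℕ} (ht : rcount V c u = t) :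
    (((isLeftPt V u ∧ inDom V c u) ∨ (isRightPt V u ∧ ¬ inDom V c u)) ↔ nval V c t u = 1) ∧
    (((isRightPt V u ∧ inDom V c u) ∨ (isLeftPt V u ∧ ¬ inDom V c u)) ↔ nval V c t (u - 1) = 1) := by
  obtain ⟨p0, ⟨hp0, hp0k⟩, huniq'⟩ := hV.2 u hu1 hu2
  have huniq : ∀ q ∈ V, (q.1 = u ∨ q.2 = u) → q = p0 := fun q hq h => huniq' q ⟨hq, h⟩
  have hb0 : c u = 1 ∨ c u = -1 := hc.2 u hu1 hu2
  have hbne : c u ≠ -(c u) := by rcases hb0 with h | h <;> rw [h] <;> norm_num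
  rw [rcount] at ht
  have htz : (pcount V c (c u) u : ℤ) = (t : ℤ) := by exact_mod_cast ht
  have hd_u := nval_decomp (V := V) (c := c) hb0 t u
  have hd_u1 := nval_decomp (V := V) (c := c) hb0 t (u - 1)
  rcases hp0k with hl | hr
  · -- u is a left point
    have hL : isLeftPt V u := ⟨p0, hp0, hl⟩
    have hR : ¬ isRightPt V u := by
      rintro ⟨q, hq, hq2⟩
      have hq0 := huniq q hq (Or.inr hq2)
      subst hq0
      have := (hV.1 q hq).1
      omega
    obtain ⟨hstep_own, hpc_own⟩ := profile_left hV hu1 hp0 hl huniq (c := c) (c u)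
    obtain ⟨hstep_oth, hpc_oth⟩ := profile_left hV hu1 hp0 hl huniq (c := c) (-(c u))
    rw [if_pos rfl] at hstep_own
    rw [if_neg hbne] at hstep_oth
    have hown_u : hgt V c (c u) u = (t : ℤ) := by rw [← hpc_own]; exact htz
    have hown_u1 : hgt V c (c u) (u - 1) = (t : ℤ) - 1 := by omega
    have hoth_eq : hgt V c (-(c u)) u = hgt V c (-(c u)) (u - 1) := by omega
    have hdom : inDom V c u ↔ hgt V c (-(c u)) u < (t : ℤ) := by
      rw [inDom, rcount, ← Nat.cast_lt (α := ℤ), htz, hpc_oth]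
    constructor
    · have hnv : nval V c t u = 1 + (if (t : ℤ) ≤ hgt V c (-(c u)) u then 1 else 0) := by
        rw [hd_u, hown_u, if_pos le_rfl]
      rw [hnv]
      constructor
      · rintro (⟨-, hd⟩ | ⟨hr', -⟩)
        · rw [hdom] at hd
          rw [if_neg (by omega)]
        · exact absurd hr' hR
      · intro h
        left
        refine ⟨hL, ?_⟩
        rw [hdom]
        by_contra hcon
        push_neg at hcon
        rw [if_pos hcon] at h
        omega
    · have hnv : nval V c t (u - 1) = (if (t : ℤ) ≤ hgt V c (-(c u)) u then 1 else 0) := by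
        rw [hd_u1, hown_u1, if_neg (by omega), ← hoth_eq, zero_add]
      rw [hnv]
      constructor
      · rintro (⟨hr', -⟩ | ⟨-, hd⟩)
        · exact absurd hr' hR
        · rw [hdom] at hd
          push_neg at hd
          rw [if_pos hd]
      · intro h
        right
        refine ⟨hL, ?_⟩
        rw [hdom]
        by_contra hcon
        rw [if_neg (by omega)] at h
        omega
  · -- u is a right point
    have hRt : isRightPt V u := ⟨p0, hp0, hr⟩
    have hL : ¬ isLeftPt V u := by
      rintro ⟨q, hq, hq1⟩
      have hq0 := huniq q hq (Or.inl hq1)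
      subst hq0
      have := (hV.1 q hq).1
      omega
    obtain ⟨hstep_own, hpc_own⟩ := profile_right hV hc hu1 hp0 hr huniq (c u)
    obtain ⟨hstep_oth, hpc_oth⟩ := profile_right hV hc hu1 hp0 hr huniq (-(c u))
    rw [if_pos rfl] at hstep_own
    rw [if_neg hbne] at hstep_oth
    have hown_u1 : hgt V c (c u) (u - 1) = (t : ℤ) := by rw [← hpc_own]; exact htz
    have hown_u : hgt V c (c u) u = (t : ℤ) - 1 := by omega
    have hoth_eq : hgt V c (-(c u)) u = hgt V c (-(c u)) (u - 1) := by omega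
    have hdom : inDom V c u ↔ hgt V c (-(c u)) (u - 1) < (t : ℤ) := by
      rw [inDom, rcount, ← Nat.cast_lt (α := ℤ), htz, hpc_oth]
    constructor
    · have hnv : nval V c t u = (if (t : ℤ) ≤ hgt V c (-(c u)) (u - 1) then 1 else 0) := by
        rw [hd_u, hown_u, if_neg (by omega), hoth_eq, zero_add]
      rw [hnv]
      constructor
      · rintro (⟨hl', -⟩ | ⟨-, hd⟩)
        · exact absurd hl' hL
        · rw [hdom] at hd
          push_neg at hd
          rw [if_pos hd]
      · intro h
        right
        refine ⟨hRt, ?_⟩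
        rw [hdom]
        by_contra hcon
        rw [if_neg (by omega)] at h
        omega
    · have hnv : nval V c t (u - 1) = 1 + (if (t : ℤ) ≤ hgt V c (-(c u)) (u - 1) then 1 else 0) := by
        rw [hd_u1, hown_u1, if_pos le_rfl]
      rw [hnv]
      constructor
      · rintro (⟨-, hd⟩ | ⟨hl', -⟩)
        · rw [hdom] at hd
          rw [if_neg (by omega)]
        · exact absurd hl' hL
      · intro h
        left
        refine ⟨hRt, ?_⟩
        rw [hdom]
        by_contra hcon
        push_neg at hcon
        rw [if_pos hcon] at h
        omega

end ZAux

namespace ZAux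

variable {m : ℕ} {V : Finset (ℕ × ℕ)} {c : ℕ → ℤ}

lemma nval_const (hV : IsPairPartition m V) (hc : IsColoring m V c) (t : ℕ) {a b : ℕ}
    (hab : a ≤ b) (hb2m : b ≤ 2 * m)
    (h : ∀ j, a < j → j ≤ b → rcount V c j ≠ t) : nval V c t b = nval V c t a := by
  induction b with
  | zero =>
    have : a = 0 := by omega
    rw [this]
  | succ n ih =>
    rcases eq_or_lt_of_le hab with he | hlt
    · rw [he]
    · have h1 : nval V c t (n + 1) = nval V c t n := by
        have := nval_const_step hV hc (u := n + 1) (by omega) hb2m t (h (n + 1) (by omega) le_rfl)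
        simpa using this
      rw [h1]
      exact ih (by omega) (by omega) (fun j hj1 hj2 => h j hj1 (by omega))

end ZAux


/-- `Z(Z(k)) = k` for every `k ∈ [2m]`. -/
theorem Z_involutive (m : ℕ) (hm : 1 ≤ m) (V : Finset (ℕ × ℕ)) (c : ℕ → ℤ)
    (hV : IsPairPartition m V) (hc : IsColoring m V c)
    (Z : ℕ → ℕ) (hZ : IsZmap m V c Z)
    (k : ℕ) (hk1 : 1 ≤ k) (hk2 : k ≤ 2 * m) :
    Z (Z k) = k := by
  obtain ⟨p0, ⟨hp0, hp0k⟩, huniq'⟩ := hV.2 k hk1 hk2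
  have hFB : ((isLeftPt V k ∧ inDom V c k) ∨ (isRightPt V k ∧ ¬ inDom V c k)) ∨
      ((isRightPt V k ∧ inDom V c k) ∨ (isLeftPt V k ∧ ¬ inDom V c k)) := by
    by_cases hd : inDom V c k
    · rcases hp0k with hl | hr
      · exact Or.inl (Or.inl ⟨⟨p0, hp0, hl⟩, hd⟩)
      · exact Or.inr (Or.inl ⟨⟨p0, hp0, hr⟩, hd⟩)
    · rcases hp0k with hl | hr
      · exact Or.inr (Or.inr ⟨⟨p0, hp0, hl⟩, hd⟩)
      · exact Or.inl (Or.inr ⟨⟨p0, hp0, hr⟩, hd⟩)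
  rcases hFB with hF | hB
  · -- forward case
    obtain ⟨⟨⟨h1', h2'⟩, hlt, hr'⟩, hmin⟩ := (hZ k hk1 hk2).1 hF
    have hnk : ZAux.nval V c (rcount V c k) k = 1 :=
      ((ZAux.class_char hV hc hk1 hk2 rfl).1).mp hF
    have hnogap : ∀ j, k < j → j ≤ Z k - 1 → rcount V c j ≠ rcount V c k := by
      intro j hj1 hj2 hrj
      have hmem : j ∈ {k' : ℕ | (1 ≤ k' ∧ k' ≤ 2 * m) ∧ k < k' ∧ rcount V c k' = rcount V c k} :=
        ⟨⟨by omega, by omega⟩, hj1, hrj⟩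
      have := hmin hmem
      omega
    have hconst : ZAux.nval V c (rcount V c k) (Z k - 1) = ZAux.nval V c (rcount V c k) k :=
      ZAux.nval_const hV hc _ (by omega) (by omega) hnogap
    have hB' := ((ZAux.class_char hV hc h1' h2' hr').2).mpr (by rw [hconst]; exact hnk)
    obtain ⟨⟨⟨g1, g2⟩, glt, gr⟩, gmax⟩ := (hZ (Z k) h1' h2').2 hB'
    have hk_le : k ≤ Z (Z k) := gmax ⟨⟨hk1, hk2⟩, hlt, hr'.symm⟩
    have hnot : ¬ (k < Z (Z k)) := by
      intro hlt2
      have := hmin (⟨⟨g1, g2⟩, hlt2, by rw [gr, hr']⟩ :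
        Z (Z k) ∈ {k' : ℕ | (1 ≤ k' ∧ k' ≤ 2 * m) ∧ k < k' ∧ rcount V c k' = rcount V c k})
      omega
    omega
  · -- backward case
    obtain ⟨⟨⟨g1, g2⟩, glt, gr⟩, gmax⟩ := (hZ k hk1 hk2).2 hB
    have hnk : ZAux.nval V c (rcount V c k) (k - 1) = 1 :=
      ((ZAux.class_char hV hc hk1 hk2 rfl).2).mp hB
    have hnogap : ∀ j, Z k < j → j ≤ k - 1 → rcount V c j ≠ rcount V c k := by
      intro j hj1 hj2 hrj
      have hmem : j ∈ {k' : ℕ | (1 ≤ k' ∧ k' ≤ 2 * m) ∧ k' < k ∧ rcount V c k' = rcount V c k} :=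
        ⟨⟨by omega, by omega⟩, by omega, hrj⟩
      have := gmax hmem
      omega
    have hconst : ZAux.nval V c (rcount V c k) (k - 1) = ZAux.nval V c (rcount V c k) (Z k) :=
      ZAux.nval_const hV hc _ (by omega) (by omega) hnogap
    have hF' := ((ZAux.class_char hV hc g1 g2 gr).1).mpr (by rw [← hconst]; exact hnk)
    obtain ⟨⟨⟨f1, f2⟩, flt, fr⟩, fmin⟩ := (hZ (Z k) g1 g2).1 hF'
    have hk_ge : Z (Z k) ≤ k := fmin ⟨⟨hk1, hk2⟩, glt, gr.symm⟩
    have hnot : ¬ (Z (Z k) < k) := by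
      intro hlt2
      have := gmax (⟨⟨f1, f2⟩, hlt2, by rw [fr, gr]⟩ :
        Z (Z k) ∈ {k' : ℕ | (1 ≤ k' ∧ k' ≤ 2 * m) ∧ k' < k ∧ rcount V c k' = rcount V c k})
      omega
    omega
end

section
/- Let (V,c) be a 2-colored pair partition of [2m]. Then Z(k) ≠ k for every k ∈ [2m], and the set barV := {(k, Z(k)) : k ∈ [2m], k < Z(k)} is itself a pair partition of [2m] (its m pairs have pairwise distinct entries exhausting [2m]). -/
open Finset

namespace BarVAux

open Classical in
noncomputable def ocount (V : Finset (ℕ × ℕ)) (c : ℕ → ℤ) (b : ℤ) (u : ℕ) : ℕ :=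
  (V.filter fun p => p.1 ≤ u ∧ u < p.2 ∧ c p.1 = b).card

variable {m : ℕ} {V : Finset (ℕ × ℕ)} {c : ℕ → ℤ}

/-- the unique pair at a point -/
lemma pair_unique (hV : IsPairPartition m V) {k : ℕ} {p q : ℕ × ℕ}
    (hp : p ∈ V) (hpk : p.1 = k ∨ p.2 = k) (hq : q ∈ V) (hqk : q.1 = k ∨ q.2 = k) : p = q := by
  have hb := hV.1 p hp
  have hk1 : 1 ≤ k := by rcases hpk with h | h <;> omega
  have hk2 : k ≤ 2 * m := by rcases hpk with h | h <;> omega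
  obtain ⟨r, _, hr⟩ := hV.2 k hk1 hk2
  rw [hr p ⟨hp, hpk⟩, hr q ⟨hq, hqk⟩]

lemma point_cases (hV : IsPairPartition m V) {k : ℕ} (hk1 : 1 ≤ k) (hk2 : k ≤ 2 * m) :
    (isLeftPt V k ∧ ¬ isRightPt V k) ∨ (isRightPt V k ∧ ¬ isLeftPt V k) := by
  obtain ⟨p, ⟨hp, hpk⟩, _⟩ := hV.2 k hk1 hk2
  have hlt := (hV.1 p hp).1
  rcases hpk with h | h
  · refine Or.inl ⟨⟨p, hp, h⟩, ?_⟩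
    rintro ⟨q, hq, hqk⟩
    have hpq := pair_unique hV hp (Or.inl h) hq (Or.inr hqk)
    rw [← hpq] at hqk
    omega
  · refine Or.inr ⟨⟨p, hp, h⟩, ?_⟩
    rintro ⟨q, hq, hqk⟩
    have hpq := pair_unique hV hp (Or.inr h) hq (Or.inl hqk)
    rw [← hpq] at hqk
    omega

lemma pcount_eq_add_left (hV : IsPairPartition m V) {k : ℕ} (hk1 : 1 ≤ k) (b : ℤ) :
    pcount V c b k = ocount V c b (k - 1) + (V.filter fun p => p.1 = k ∧ c p.1 = b).card := by
  classical
  unfold pcount ocount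
  rw [show (V.filter fun p => p.1 ≤ k ∧ k ≤ p.2 ∧ c p.1 = b) =
      (V.filter fun p => (p.1 ≤ k - 1 ∧ k - 1 < p.2 ∧ c p.1 = b) ∨ (p.1 = k ∧ c p.1 = b)) from
    Finset.filter_congr fun p hp => by
      have h1 := (hV.1 p hp).1
      by_cases hC : c p.1 = b <;> simp [hC] <;> omega]
  rw [Finset.filter_or]
  rw [Finset.card_union_of_disjoint]
  rw [Finset.disjoint_left]
  intro a ha hb'
  simp only [Finset.mem_filter] at ha hb'
  omega

lemma pcount_eq_add_right (hV : IsPairPartition m V) {k : ℕ} (b : ℤ) :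
    pcount V c b k = ocount V c b k + (V.filter fun p => p.2 = k ∧ c p.1 = b).card := by
  classical
  unfold pcount ocount
  rw [show (V.filter fun p => p.1 ≤ k ∧ k ≤ p.2 ∧ c p.1 = b) =
      (V.filter fun p => (p.1 ≤ k ∧ k < p.2 ∧ c p.1 = b) ∨ (p.2 = k ∧ c p.1 = b)) from
    Finset.filter_congr fun p hp => by
      have h1 := (hV.1 p hp).1
      by_cases hC : c p.1 = b <;> simp [hC] <;> omega]
  rw [Finset.filter_or]
  rw [Finset.card_union_of_disjoint]
  rw [Finset.disjoint_left]
  intro a ha hb'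
  simp only [Finset.mem_filter] at ha hb'
  omega


lemma card_start_left (hV : IsPairPartition m V) {k : ℕ} (hL : isLeftPt V k) (b : ℤ) :
    (V.filter fun p => p.1 = k ∧ c p.1 = b).card = if c k = b then 1 else 0 := by
  classical
  obtain ⟨p0, hp0, h0⟩ := hL
  split_ifs with h
  · rw [show (V.filter fun p => p.1 = k ∧ c p.1 = b) = {p0} from ?_]
    · exact Finset.card_singleton _
    · apply Finset.eq_singleton_iff_unique_mem.mpr
      refine ⟨Finset.mem_filter.mpr ⟨hp0, h0, by rw [h0, h]⟩, ?_⟩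
      intro q hq
      simp only [Finset.mem_filter] at hq
      exact pair_unique hV hq.1 (Or.inl hq.2.1) hp0 (Or.inl h0)
  · rw [Finset.card_eq_zero, Finset.eq_empty_iff_forall_notMem]
    intro q hq
    simp only [Finset.mem_filter] at hq
    exact h (by rw [← hq.2.1]; exact hq.2.2)

lemma card_start_right (hV : IsPairPartition m V) {k : ℕ} (hR : isRightPt V k) (b : ℤ) :
    (V.filter fun p => p.1 = k ∧ c p.1 = b).card = 0 := by
  classical
  obtain ⟨p0, hp0, h0⟩ := hR
  rw [Finset.card_eq_zero, Finset.eq_empty_iff_forall_notMem]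
  intro q hq
  simp only [Finset.mem_filter] at hq
  have hpq := pair_unique hV hq.1 (Or.inl hq.2.1) hp0 (Or.inr h0)
  have := (hV.1 p0 hp0).1
  rw [hpq] at hq
  omega

lemma card_end_right (hV : IsPairPartition m V) (hc : IsColoring m V c) {k : ℕ}
    (hR : isRightPt V k) (b : ℤ) :
    (V.filter fun p => p.2 = k ∧ c p.1 = b).card = if c k = b then 1 else 0 := by
  classical
  obtain ⟨p0, hp0, h0⟩ := hR
  have hcc : c p0.1 = c k := by rw [hc.1 p0 hp0, h0]
  split_ifs with h
  · rw [show (V.filter fun p => p.2 = k ∧ c p.1 = b) = {p0} from ?_]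
    · exact Finset.card_singleton _
    · apply Finset.eq_singleton_iff_unique_mem.mpr
      refine ⟨Finset.mem_filter.mpr ⟨hp0, h0, by rw [hcc, h]⟩, ?_⟩
      intro q hq
      simp only [Finset.mem_filter] at hq
      exact pair_unique hV hq.1 (Or.inr hq.2.1) hp0 (Or.inr h0)
  · rw [Finset.card_eq_zero, Finset.eq_empty_iff_forall_notMem]
    intro q hq
    simp only [Finset.mem_filter] at hq
    have hpq := pair_unique hV hq.1 (Or.inr hq.2.1) hp0 (Or.inr h0)
    rw [hpq] at hq
    exact h (by rw [← hcc]; exact hq.2.2)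

lemma card_end_left (hV : IsPairPartition m V) {k : ℕ} (hL : isLeftPt V k) (b : ℤ) :
    (V.filter fun p => p.2 = k ∧ c p.1 = b).card = 0 := by
  classical
  obtain ⟨p0, hp0, h0⟩ := hL
  rw [Finset.card_eq_zero, Finset.eq_empty_iff_forall_notMem]
  intro q hq
  simp only [Finset.mem_filter] at hq
  have hpq := pair_unique hV hq.1 (Or.inr hq.2.1) hp0 (Or.inl h0)
  have := (hV.1 p0 hp0).1
  rw [hpq] at hq
  omega

lemma rcount_pos (hV : IsPairPartition m V) (hc : IsColoring m V c) {k : ℕ}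
    (hk1 : 1 ≤ k) (hk2 : k ≤ 2 * m) : 1 ≤ rcount V c k := by
  classical
  obtain ⟨p0, ⟨hp0, h0⟩, _⟩ := hV.2 k hk1 hk2
  have hlt := (hV.1 p0 hp0).1
  have hcc : c p0.1 = c k := by
    rcases h0 with h | h
    · rw [h]
    · rw [hc.1 p0 hp0, h]
  have : p0 ∈ V.filter fun p => p.1 ≤ k ∧ k ≤ p.2 ∧ c p.1 = c k :=
    Finset.mem_filter.mpr ⟨hp0, by omega, by omega, hcc⟩
  have := Finset.card_pos.mpr ⟨p0, this⟩
  exact this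

/-- own-color crossing values -/
lemma own_vals (hV : IsPairPartition m V) (hc : IsColoring m V c) {k : ℕ}
    (hk1 : 1 ≤ k) (hk2 : k ≤ 2 * m) :
    (ocount V c (c k) (k - 1) + 1 = rcount V c k ∧ ocount V c (c k) k = rcount V c k) ∨
    (ocount V c (c k) (k - 1) = rcount V c k ∧ ocount V c (c k) k + 1 = rcount V c k) := by
  have hL' := pcount_eq_add_left (c := c) hV hk1 (c k)
  have hR' := pcount_eq_add_right (c := c) hV (k := k) (c k)
  rcases point_cases hV hk1 hk2 with ⟨hL, hR⟩ | ⟨hR, hL⟩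
  · left
    have e1 := card_start_left (c := c) hV hL (c k)
    have e2 := card_end_left (c := c) hV hL (c k)
    rw [if_pos rfl] at e1
    unfold rcount
    constructor <;> omega
  · right
    have e1 := card_start_right (c := c) hV hR (c k)
    have e2 := card_end_right hV hc hR (c k)
    rw [if_pos rfl] at e2
    unfold rcount
    constructor <;> omega

/-- off-color constancy -/
lemma off_vals (hV : IsPairPartition m V) (hc : IsColoring m V c) {k : ℕ}
    (hk1 : 1 ≤ k) (hk2 : k ≤ 2 * m) {b : ℤ} (hb : b ≠ c k) :
    ocount V c b (k - 1) = pcount V c b k ∧ ocount V c b k = pcount V c b k := by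
  have hL' := pcount_eq_add_left (c := c) hV hk1 b
  have hR' := pcount_eq_add_right (c := c) hV (k := k) b
  rcases point_cases hV hk1 hk2 with ⟨hL, hR⟩ | ⟨hR, hL⟩
  · have e1 := card_start_left (c := c) hV hL b
    have e2 := card_end_left (c := c) hV hL b
    rw [if_neg (fun h => hb h.symm)] at e1
    constructor <;> omega
  · have e1 := card_start_right (c := c) hV hR b
    have e2 := card_end_right hV hc hR b
    rw [if_neg (fun h => hb h.symm)] at e2
    constructor <;> omega


/-- balancedness of level `j` after point `u` -/
def Bal (V : Finset (ℕ × ℕ)) (c : ℕ → ℤ) (j u : ℕ) : Prop :=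
  (j ≤ ocount V c 1 u ↔ j ≤ ocount V c (-1) u)

lemma ocount_zero (hV : IsPairPartition m V) (b : ℤ) : ocount V c b 0 = 0 := by
  classical
  rw [ocount, Finset.card_eq_zero, Finset.eq_empty_iff_forall_notMem]
  intro q hq
  simp only [Finset.mem_filter] at hq
  have := (hV.1 q hq.1).2.1
  omega

lemma ocount_top (hV : IsPairPartition m V) (b : ℤ) : ocount V c b (2 * m) = 0 := by
  classical
  rw [ocount, Finset.card_eq_zero, Finset.eq_empty_iff_forall_notMem]
  intro q hq
  simp only [Finset.mem_filter] at hq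
  have := (hV.1 q hq.1).2.2
  omega

lemma bal_zero (hV : IsPairPartition m V) {j : ℕ} (hj : 1 ≤ j) : Bal V c j 0 := by
  rw [Bal, ocount_zero hV, ocount_zero hV]

lemma bal_top (hV : IsPairPartition m V) {j : ℕ} (hj : 1 ≤ j) : Bal V c j (2 * m) := by
  rw [Bal, ocount_top hV, ocount_top hV]

lemma neg_ck (hc : IsColoring m V c) {k : ℕ} (hk1 : 1 ≤ k) (hk2 : k ≤ 2 * m) :
    (c k = 1 ∧ -(c k) = -1) ∨ (c k = -1 ∧ -(c k) = 1) := by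
  rcases hc.2 k hk1 hk2 with h | h
  · exact Or.inl ⟨h, by rw [h]⟩
  · exact Or.inr ⟨h, by rw [h]; norm_num⟩

lemma bal_toggle (hV : IsPairPartition m V) (hc : IsColoring m V c) {k : ℕ}
    (hk1 : 1 ≤ k) (hk2 : k ≤ 2 * m) :
    Bal V c (rcount V c k) k ↔ ¬ Bal V c (rcount V c k) (k - 1) := by
  have hpos := rcount_pos hV hc hk1 hk2
  have hown := own_vals hV hc hk1 hk2
  rcases neg_ck hc hk1 hk2 with ⟨h1, h2⟩ | ⟨h1, h2⟩
  · have hoff := off_vals hV hc hk1 hk2 (b := -1) (by rw [h1]; norm_num)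
    rw [h1] at hown
    rw [Bal, Bal, hoff.1, ← hoff.2]
    omega
  · have hoff := off_vals hV hc hk1 hk2 (b := 1) (by rw [h1]; norm_num)
    rw [h1] at hown
    rw [Bal, Bal, hoff.1, ← hoff.2]
    omega

lemma bal_const (hV : IsPairPartition m V) (hc : IsColoring m V c) {k j : ℕ}
    (hk1 : 1 ≤ k) (hk2 : k ≤ 2 * m) (hj : rcount V c k ≠ j) :
    Bal V c j k ↔ Bal V c j (k - 1) := by
  have hpos := rcount_pos hV hc hk1 hk2
  have hown := own_vals hV hc hk1 hk2
  rcases neg_ck hc hk1 hk2 with ⟨h1, h2⟩ | ⟨h1, h2⟩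
  · have hoff := off_vals hV hc hk1 hk2 (b := -1) (by rw [h1]; norm_num)
    rw [h1] at hown
    rw [Bal, Bal, hoff.1, ← hoff.2]
    omega
  · have hoff := off_vals hV hc hk1 hk2 (b := 1) (by rw [h1]; norm_num)
    rw [h1] at hown
    rw [Bal, Bal, hoff.1, ← hoff.2]
    omega

lemma bal_chain (hV : IsPairPartition m V) (hc : IsColoring m V c) {j a : ℕ} :
    ∀ n, n ≤ 2 * m → a ≤ n → (∀ u, a < u → u ≤ n → rcount V c u ≠ j) →
      (Bal V c j a ↔ Bal V c j n) := by
  intro n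
  induction n with
  | zero => intro _ ha _; rw [Nat.le_zero.mp ha]
  | succ n ih =>
    intro hn2 ha h
    rcases Nat.lt_or_ge a (n + 1) with hlt | hge
    · have step : Bal V c j (n + 1) ↔ Bal V c j n := by
        have := bal_const hV hc (k := n + 1) (j := j) (by omega) hn2 (h (n + 1) hlt le_rfl)
        simpa using this
      rw [step]
      exact ih (by omega) (by omega) (fun u hu1 hu2 => h u hu1 (by omega))
    · rw [show a = n + 1 by omega]


lemma bal_iff_left (hV : IsPairPartition m V) (hc : IsColoring m V c) {k : ℕ}
    (hk1 : 1 ≤ k) (hk2 : k ≤ 2 * m) (hL : isLeftPt V k) :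
    Bal V c (rcount V c k) k ↔ ¬ inDom V c k := by
  have hpos := rcount_pos hV hc hk1 hk2
  have hown : ocount V c (c k) k = rcount V c k := by
    have hP := pcount_eq_add_right (c := c) hV (k := k) (c k)
    have e2 := card_end_left (c := c) hV hL (c k)
    unfold rcount
    omega
  unfold inDom
  rcases neg_ck hc hk1 hk2 with ⟨h1, h2⟩ | ⟨h1, h2⟩
  · have hoff := off_vals hV hc hk1 hk2 (b := -1) (by rw [h1]; norm_num)
    rw [h1] at hown
    rw [h2, Bal]
    omega
  · have hoff := off_vals hV hc hk1 hk2 (b := 1) (by rw [h1]; norm_num)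
    rw [h1] at hown
    rw [h2, Bal]
    omega

lemma bal_iff_right (hV : IsPairPartition m V) (hc : IsColoring m V c) {k : ℕ}
    (hk1 : 1 ≤ k) (hk2 : k ≤ 2 * m) (hR : isRightPt V k) :
    Bal V c (rcount V c k) k ↔ inDom V c k := by
  have hpos := rcount_pos hV hc hk1 hk2
  have hown : ocount V c (c k) k + 1 = rcount V c k := by
    have hP := pcount_eq_add_right (c := c) hV (k := k) (c k)
    have e2 := card_end_right hV hc hR (c k)
    rw [if_pos rfl] at e2
    unfold rcount
    omega
  unfold inDom
  rcases neg_ck hc hk1 hk2 with ⟨h1, h2⟩ | ⟨h1, h2⟩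
  · have hoff := off_vals hV hc hk1 hk2 (b := -1) (by rw [h1]; norm_num)
    rw [h1] at hown
    rw [h2, Bal]
    omega
  · have hoff := off_vals hV hc hk1 hk2 (b := 1) (by rw [h1]; norm_num)
    rw [h1] at hown
    rw [h2, Bal]
    omega

lemma fwd_not_bal (hV : IsPairPartition m V) (hc : IsColoring m V c) {k : ℕ}
    (hk1 : 1 ≤ k) (hk2 : k ≤ 2 * m)
    (hF : (isLeftPt V k ∧ inDom V c k) ∨ (isRightPt V k ∧ ¬ inDom V c k)) :
    ¬ Bal V c (rcount V c k) k := by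
  rcases hF with ⟨hL, hD⟩ | ⟨hR, hS⟩
  · rw [bal_iff_left hV hc hk1 hk2 hL]
    exact fun h => h hD
  · rw [bal_iff_right hV hc hk1 hk2 hR]
    exact hS

lemma bwd_bal (hV : IsPairPartition m V) (hc : IsColoring m V c) {k : ℕ}
    (hk1 : 1 ≤ k) (hk2 : k ≤ 2 * m)
    (hB : (isRightPt V k ∧ inDom V c k) ∨ (isLeftPt V k ∧ ¬ inDom V c k)) :
    Bal V c (rcount V c k) k := by
  rcases hB with ⟨hR, hD⟩ | ⟨hL, hS⟩
  · exact (bal_iff_right hV hc hk1 hk2 hR).mpr hD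
  · exact (bal_iff_left hV hc hk1 hk2 hL).mpr hS

lemma fwd_or_bwd (hV : IsPairPartition m V) {k : ℕ} (hk1 : 1 ≤ k) (hk2 : k ≤ 2 * m) :
    ((isLeftPt V k ∧ inDom V c k) ∨ (isRightPt V k ∧ ¬ inDom V c k)) ∨
    ((isRightPt V k ∧ inDom V c k) ∨ (isLeftPt V k ∧ ¬ inDom V c k)) := by
  rcases point_cases hV hk1 hk2 with ⟨hL, _⟩ | ⟨hR, _⟩ <;>
    rcases Classical.em (inDom V c k) with hD | hD <;> tauto

lemma bwd_of_bal (hV : IsPairPartition m V) (hc : IsColoring m V c) {k : ℕ}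
    (hk1 : 1 ≤ k) (hk2 : k ≤ 2 * m) (hb : Bal V c (rcount V c k) k) :
    (isRightPt V k ∧ inDom V c k) ∨ (isLeftPt V k ∧ ¬ inDom V c k) := by
  rcases fwd_or_bwd hV hk1 hk2 with h | h
  · exact absurd hb (fwd_not_bal hV hc hk1 hk2 h)
  · exact h

lemma fwd_of_not_bal (hV : IsPairPartition m V) (hc : IsColoring m V c) {k : ℕ}
    (hk1 : 1 ≤ k) (hk2 : k ≤ 2 * m) (hb : ¬ Bal V c (rcount V c k) k) :
    (isLeftPt V k ∧ inDom V c k) ∨ (isRightPt V k ∧ ¬ inDom V c k) := by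
  rcases fwd_or_bwd hV hk1 hk2 with h | h
  · exact h
  · exact absurd (bwd_bal hV hc hk1 hk2 h) hb


lemma Z_flip_F (hV : IsPairPartition m V) (hc : IsColoring m V c) {Z : ℕ → ℕ}
    (hZ : IsZmap m V c Z) {k : ℕ} (hk1 : 1 ≤ k) (hk2 : k ≤ 2 * m)
    (hF : (isLeftPt V k ∧ inDom V c k) ∨ (isRightPt V k ∧ ¬ inDom V c k)) :
    (1 ≤ Z k ∧ Z k ≤ 2 * m) ∧ k < Z k ∧ rcount V c (Z k) = rcount V c k ∧
    ((isRightPt V (Z k) ∧ inDom V c (Z k)) ∨ (isLeftPt V (Z k) ∧ ¬ inDom V c (Z k))) ∧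
    Z (Z k) = k := by
  obtain ⟨hmem, hlb⟩ := (hZ k hk1 hk2).1 hF
  simp only [Set.mem_setOf_eq] at hmem
  obtain ⟨⟨hz1, hz2⟩, hz3, hz4⟩ := hmem
  have hnb : ¬ Bal V c (rcount V c k) k := fwd_not_bal hV hc hk1 hk2 hF
  have hchain : Bal V c (rcount V c k) k ↔ Bal V c (rcount V c k) (Z k - 1) := by
    refine bal_chain hV hc (Z k - 1) (by omega) (by omega) ?_
    intro u h1 h2 hr
    have := hlb ⟨⟨by omega, by omega⟩, h1, hr⟩
    omega
  have htog := bal_toggle hV hc hz1 hz2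
  rw [hz4] at htog
  have hbZ : Bal V c (rcount V c k) (Z k) := htog.mpr (fun h => hnb (hchain.mpr h))
  have hBwd : (isRightPt V (Z k) ∧ inDom V c (Z k)) ∨ (isLeftPt V (Z k) ∧ ¬ inDom V c (Z k)) := by
    refine bwd_of_bal hV hc hz1 hz2 ?_
    rw [hz4]
    exact hbZ
  obtain ⟨hmem2, hub⟩ := (hZ (Z k) hz1 hz2).2 hBwd
  simp only [Set.mem_setOf_eq] at hmem2
  have hkle : k ≤ Z (Z k) := hub ⟨⟨hk1, hk2⟩, hz3, hz4.symm⟩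
  have hle : Z (Z k) ≤ k := by
    by_contra hgt
    have hZZ : Z k ≤ Z (Z k) := hlb ⟨⟨hmem2.1.1, hmem2.1.2⟩, by omega, by rw [hmem2.2.2, hz4]⟩
    omega
  exact ⟨⟨hz1, hz2⟩, hz3, hz4, hBwd, by omega⟩

lemma Z_flip_B (hV : IsPairPartition m V) (hc : IsColoring m V c) {Z : ℕ → ℕ}
    (hZ : IsZmap m V c Z) {k : ℕ} (hk1 : 1 ≤ k) (hk2 : k ≤ 2 * m)
    (hB : (isRightPt V k ∧ inDom V c k) ∨ (isLeftPt V k ∧ ¬ inDom V c k)) :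
    (1 ≤ Z k ∧ Z k ≤ 2 * m) ∧ Z k < k ∧ rcount V c (Z k) = rcount V c k ∧
    ((isLeftPt V (Z k) ∧ inDom V c (Z k)) ∨ (isRightPt V (Z k) ∧ ¬ inDom V c (Z k))) ∧
    Z (Z k) = k := by
  obtain ⟨hmem, hub⟩ := (hZ k hk1 hk2).2 hB
  simp only [Set.mem_setOf_eq] at hmem
  obtain ⟨⟨hz1, hz2⟩, hz3, hz4⟩ := hmem
  have hb : Bal V c (rcount V c k) k := bwd_bal hV hc hk1 hk2 hB
  have hnb : ¬ Bal V c (rcount V c k) (k - 1) := (bal_toggle hV hc hk1 hk2).mp hb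
  have hchain : Bal V c (rcount V c k) (Z k) ↔ Bal V c (rcount V c k) (k - 1) := by
    refine bal_chain hV hc (k - 1) (by omega) (by omega) ?_
    intro u h1 h2 hr
    have := hub ⟨⟨by omega, by omega⟩, by omega, hr⟩
    omega
  have hnbZ : ¬ Bal V c (rcount V c k) (Z k) := fun h => hnb (hchain.mp h)
  have hFwd : (isLeftPt V (Z k) ∧ inDom V c (Z k)) ∨ (isRightPt V (Z k) ∧ ¬ inDom V c (Z k)) := by
    refine fwd_of_not_bal hV hc hz1 hz2 ?_
    rw [hz4]
    exact hnbZ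
  obtain ⟨hmem2, hlb⟩ := (hZ (Z k) hz1 hz2).1 hFwd
  simp only [Set.mem_setOf_eq] at hmem2
  have hkge : Z (Z k) ≤ k := hlb ⟨⟨hk1, hk2⟩, hz3, hz4.symm⟩
  have hge : k ≤ Z (Z k) := by
    by_contra hlt
    have hZZ : Z (Z k) ≤ Z k := hub ⟨⟨hmem2.1.1, hmem2.1.2⟩, by omega, by rw [hmem2.2.2, hz4]⟩
    omega
  exact ⟨⟨hz1, hz2⟩, hz3, hz4, hFwd, by omega⟩

end BarVAux

/-- `Z(k) ≠ k` for all `k ∈ [2m]`, and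
`barV := {(k, Z(k)) : k ∈ [2m], k < Z(k)}` is a pair partition of `[2m]`. -/
theorem barV_isPairPartition (m : ℕ) (hm : 1 ≤ m) (V : Finset (ℕ × ℕ)) (c : ℕ → ℤ)
    (hV : IsPairPartition m V) (hc : IsColoring m V c)
    (Z : ℕ → ℕ) (hZ : IsZmap m V c Z) :
    (∀ k : ℕ, 1 ≤ k → k ≤ 2 * m → Z k ≠ k) ∧
    IsPairPartition m
      (((Finset.Icc 1 (2 * m)).filter fun k => k < Z k).image fun k => (k, Z k)) := by
  classical
  have hFk : ∀ k : ℕ, 1 ≤ k → k ≤ 2 * m → k < Z k →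
      ((isLeftPt V k ∧ inDom V c k) ∨ (isRightPt V k ∧ ¬ inDom V c k)) := by
    intro k h1 h2 hlt
    rcases BarVAux.fwd_or_bwd (c := c) hV h1 h2 with hF | hB
    · exact hF
    · have := (BarVAux.Z_flip_B hV hc hZ h1 h2 hB).2.1
      omega
  constructor
  · intro k h1 h2
    rcases BarVAux.fwd_or_bwd (c := c) hV h1 h2 with hF | hB
    · have := (BarVAux.Z_flip_F hV hc hZ h1 h2 hF).2.1
      omega
    · have := (BarVAux.Z_flip_B hV hc hZ h1 h2 hB).2.1
      omega
  constructor
  · intro p hp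
    simp only [Finset.mem_image, Finset.mem_filter, Finset.mem_Icc] at hp
    obtain ⟨k, ⟨⟨h1, h2⟩, hlt⟩, rfl⟩ := hp
    have h := BarVAux.Z_flip_F hV hc hZ h1 h2 (hFk k h1 h2 hlt)
    exact ⟨hlt, h1, h.1.2⟩
  · intro j hj1 hj2
    rcases BarVAux.fwd_or_bwd (c := c) hV hj1 hj2 with hF | hB
    · obtain ⟨⟨hz1, hz2⟩, hz3, hz4, hBwd, hzz⟩ := BarVAux.Z_flip_F hV hc hZ hj1 hj2 hF
      refine ⟨(j, Z j), ⟨?_, Or.inl rfl⟩, ?_⟩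
      · simp only [Finset.mem_image, Finset.mem_filter, Finset.mem_Icc]
        exact ⟨j, ⟨⟨hj1, hj2⟩, hz3⟩, rfl⟩
      · rintro q ⟨hq, hqk⟩
        simp only [Finset.mem_image, Finset.mem_filter, Finset.mem_Icc] at hq
        obtain ⟨k, ⟨⟨h1, h2⟩, hlt⟩, rfl⟩ := hq
        rcases hqk with h | h
        · have hkj : k = j := h
          rw [hkj]
        · have hkj : Z k = j := h
          obtain ⟨_, _, _, _, hzzk⟩ := BarVAux.Z_flip_F hV hc hZ h1 h2 (hFk k h1 h2 hlt)
          rw [hkj] at hzzk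
          omega
    · obtain ⟨⟨hz1, hz2⟩, hz3, hz4, hFwd, hzz⟩ := BarVAux.Z_flip_B hV hc hZ hj1 hj2 hB
      refine ⟨(Z j, j), ⟨?_, Or.inr rfl⟩, ?_⟩
      · simp only [Finset.mem_image, Finset.mem_filter, Finset.mem_Icc]
        exact ⟨Z j, ⟨⟨hz1, hz2⟩, by omega⟩, by rw [hzz]⟩
      · rintro q ⟨hq, hqk⟩
        simp only [Finset.mem_image, Finset.mem_filter, Finset.mem_Icc] at hq
        obtain ⟨k, ⟨⟨h1, h2⟩, hlt⟩, rfl⟩ := hq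
        rcases hqk with h | h
        · have hkj : k = j := h
          have hFj := hFk k h1 h2 hlt
          rw [hkj] at hFj
          exact absurd (BarVAux.bwd_bal hV hc hj1 hj2 hB)
            (BarVAux.fwd_not_bal hV hc hj1 hj2 hFj)
        · have hkj : Z k = j := h
          obtain ⟨_, _, _, _, hzzk⟩ := BarVAux.Z_flip_F hV hc hZ h1 h2 (hFk k h1 h2 hlt)
          rw [hkj] at hzzk
          rw [← hzzk, hzz]
end

section
/- Let (V,c) be a 2-colored pair partition of [2m]. Then the sets of arcs F and barF are disjoint: F ∩ barF = ∅. -/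
open Finset

instance (V : Finset (ℕ × ℕ)) (c : ℕ → ℤ) (k : ℕ) : Decidable (inDom V c k) :=
  inferInstanceAs (Decidable (_ < _))

/-- The arcs `F := {(l,r)^{(c(l,r))} : (l,r) ∈ V}`, where `(u,v)^{(1)} = (u,v)` and
`(u,v)^{(-1)} = (v,u)`. -/
def arcsF (V : Finset (ℕ × ℕ)) (c : ℕ → ℤ) : Finset (ℕ × ℕ) :=
  V.image fun p => if c p.1 = 1 then p else (p.2, p.1)

/-- The color `bar_c` of the pair `(k, Z(k))` of `barV` (with `k < Z(k)`):
`c(k)` if `k ∈ S` and `-c(k)` if `k ∈ D`. -/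
def barColor (V : Finset (ℕ × ℕ)) (c : ℕ → ℤ) (k : ℕ) : ℤ :=
  if inDom V c k then -(c k) else c k

/-- The arcs `barF := {(k,k')^{(bar_c(k,k'))} : (k,k') ∈ barV}`. -/
def arcsBarF (m : ℕ) (V : Finset (ℕ × ℕ)) (c : ℕ → ℤ) (Z : ℕ → ℕ) : Finset (ℕ × ℕ) :=
  ((Finset.Icc 1 (2 * m)).filter fun k => k < Z k).image fun k =>
    if barColor V c k = 1 then (k, Z k) else (Z k, k)

/-- the arc sets `F` and `barF` are disjoint. -/
theorem arcsF_inter_arcsBarF (m : ℕ) (hm : 1 ≤ m) (V : Finset (ℕ × ℕ)) (c : ℕ → ℤ)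
    (hV : IsPairPartition m V) (hc : IsColoring m V c)
    (Z : ℕ → ℕ) (hZ : IsZmap m V c Z) :
    arcsF V c ∩ arcsBarF m V c Z = ∅ := by
  rw [Finset.eq_empty_iff_forall_notMem]
  intro x hx
  simp only [Finset.mem_inter, arcsF, arcsBarF, Finset.mem_image, Finset.mem_filter,
    Finset.mem_Icc] at hx
  obtain ⟨⟨p, hp, hxp⟩, ⟨k, ⟨⟨hk1, hk2⟩, hkZ⟩, hxk⟩⟩ := hx
  obtain ⟨hlr, hl1, hr2⟩ := hV.1 p hp
  have hl2 : p.1 ≤ 2 * m := le_of_lt (lt_of_lt_of_le hlr hr2)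
  by_cases hc1 : c p.1 = 1 <;> by_cases hb : barColor V c k = 1 <;>
      simp only [hc1, hb, if_pos, if_neg, ite_true, ite_false] at hxp hxk
  · -- x = p, x = (k, Z k)
    have hpk : p.1 = k ∧ p.2 = Z k := by
      have h := hxp.trans hxk.symm; rw [Prod.ext_iff] at h; exact h
    have hck : c k = 1 := hpk.1 ▸ hc1
    have hnd : ¬ inDom V c k := by
      intro hd
      rw [barColor, if_pos hd, hck] at hb
      norm_num at hb
    have hleft : isLeftPt V k := ⟨p, hp, hpk.1⟩
    have := ((hZ k hk1 hk2).2 (Or.inr ⟨hleft, hnd⟩)).1.2.1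
    omega
  · -- x = p, x = (Z k, k)
    have h := hxp.trans hxk.symm; rw [Prod.ext_iff] at h; simp at h
    omega
  · -- x = (p.2, p.1), x = (k, Z k)
    have h := hxp.trans hxk.symm; rw [Prod.ext_iff] at h; simp at h
    omega
  · -- x = (p.2, p.1), x = (Z k, k)
    have hpk : p.2 = Z k ∧ p.1 = k := by
      have h := hxp.trans hxk.symm; rw [Prod.ext_iff] at h; exact h
    have hck : c k = -1 := by
      have := hc.2 k hk1 hk2
      rcases this with h | h
      · exact absurd (hpk.2 ▸ h) hc1
      · exact h
    have hnd : ¬ inDom V c k := by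
      intro hd
      rw [barColor, if_pos hd, hck] at hb
      norm_num at hb
    have hleft : isLeftPt V k := ⟨p, hp, hpk.2⟩
    have := ((hZ k hk1 hk2).2 (Or.inr ⟨hleft, hnd⟩)).1.2.1
    omega
end

section
/- Let (V,c) be a 2-colored pair partition of [2m]. In the directed graph G_{V,c}, every vertex k ∈ [2m] is the starting point (tail) of exactly one arc and the end point (head) of exactly one arc; consequently G_{V,c} is a union of vertex-disjoint directed cycles. -/
open Finset

attribute [local instance] Classical.propDecidable

namespace StmtTwelve

variable {m : ℕ} {V : Finset (ℕ × ℕ)} {c : ℕ → ℤ}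

/-- pairs of color b strictly covering the gap (u, u+1) -/
def qcount (V : Finset (ℕ × ℕ)) (c : ℕ → ℤ) (b : ℤ) (u : ℕ) : ℕ :=
  (V.filter fun p => p.1 ≤ u ∧ u < p.2 ∧ c p.1 = b).card

lemma pt_range1 (hV : IsPairPartition m V) {p : ℕ × ℕ} (hp : p ∈ V) :
    1 ≤ p.1 ∧ p.1 ≤ 2 * m := by
  obtain ⟨h1, h2, h3⟩ := hV.1 p hp
  exact ⟨h2, by omega⟩

lemma pt_range2 (hV : IsPairPartition m V) {p : ℕ × ℕ} (hp : p ∈ V) :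
    1 ≤ p.2 ∧ p.2 ≤ 2 * m := by
  obtain ⟨h1, h2, h3⟩ := hV.1 p hp
  exact ⟨by omega, h3⟩

lemma pair_eq (hV : IsPairPartition m V) {k : ℕ} {p q : ℕ × ℕ} (hp : p ∈ V) (hq : q ∈ V)
    (hpk : p.1 = k ∨ p.2 = k) (hqk : q.1 = k ∨ q.2 = k) : p = q := by
  have hk : 1 ≤ k ∧ k ≤ 2 * m := by
    rcases hpk with h | h
    · rw [← h]; exact pt_range1 hV hp
    · rw [← h]; exact pt_range2 hV hp
  obtain ⟨r, _, hru⟩ := hV.2 k hk.1 hk.2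
  rw [hru p ⟨hp, hpk⟩, hru q ⟨hq, hqk⟩]

lemma left_not_right (hV : IsPairPartition m V) {k : ℕ}
    (hl : isLeftPt V k) (hr : isRightPt V k) : False := by
  obtain ⟨p, hp, hp1⟩ := hl
  obtain ⟨q, hq, hq2⟩ := hr
  have := pair_eq hV hp hq (Or.inl hp1) (Or.inr hq2)
  subst this
  have := (hV.1 p hp).1
  omega

lemma left_or_right (hV : IsPairPartition m V) {k : ℕ} (h1 : 1 ≤ k) (h2 : k ≤ 2 * m) :
    isLeftPt V k ∨ isRightPt V k := by
  obtain ⟨p, ⟨hp, hpk⟩, _⟩ := hV.2 k h1 h2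
  rcases hpk with h | h
  · exact Or.inl ⟨p, hp, h⟩
  · exact Or.inr ⟨p, hp, h⟩

lemma left_range (hV : IsPairPartition m V) {k : ℕ} (h : isLeftPt V k) :
    1 ≤ k ∧ k ≤ 2 * m := by
  obtain ⟨p, hp, h1⟩ := h; rw [← h1]; exact pt_range1 hV hp

lemma right_range (hV : IsPairPartition m V) {k : ℕ} (h : isRightPt V k) :
    1 ≤ k ∧ k ≤ 2 * m := by
  obtain ⟨p, hp, h1⟩ := h; rw [← h1]; exact pt_range2 hV hp

lemma card_left_at (hV : IsPairPartition m V) (hc : IsColoring m V c) (b : ℤ) (u : ℕ) :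
    (V.filter fun p => p.1 = u ∧ c p.1 = b).card
      = if isLeftPt V u ∧ c u = b then 1 else 0 := by
  split_ifs with h
  · obtain ⟨⟨p0, hp0, hp01⟩, hcb⟩ := h
    have : (V.filter fun p => p.1 = u ∧ c p.1 = b) = {p0} := by
      ext q
      simp only [mem_filter, mem_singleton]
      constructor
      · rintro ⟨hq, hq1, _⟩
        exact pair_eq hV hq hp0 (Or.inl hq1) (Or.inl hp01)
      · rintro rfl
        exact ⟨hp0, hp01, by rw [hp01]; exact hcb⟩
    rw [this, card_singleton]
  · rw [card_eq_zero, filter_eq_empty_iff]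
    rintro q hq ⟨hq1, hq2⟩
    exact h ⟨⟨q, hq, hq1⟩, by rw [← hq1]; exact hq2⟩

lemma card_right_at (hV : IsPairPartition m V) (hc : IsColoring m V c) (b : ℤ) (u : ℕ) :
    (V.filter fun p => p.2 = u ∧ c p.1 = b).card
      = if isRightPt V u ∧ c u = b then 1 else 0 := by
  split_ifs with h
  · obtain ⟨⟨p0, hp0, hp02⟩, hcb⟩ := h
    have : (V.filter fun p => p.2 = u ∧ c p.1 = b) = {p0} := by
      ext q
      simp only [mem_filter, mem_singleton]
      constructor
      · rintro ⟨hq, hq1, _⟩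
        exact pair_eq hV hq hp0 (Or.inr hq1) (Or.inr hp02)
      · rintro rfl
        exact ⟨hp0, hp02, by rw [hc.1 _ hp0, hp02]; exact hcb⟩
    rw [this, card_singleton]
  · rw [card_eq_zero, filter_eq_empty_iff]
    rintro q hq ⟨hq1, hq2⟩
    exact h ⟨⟨q, hq, hq1⟩, by rw [← hq1, ← hc.1 q hq]; exact hq2⟩

lemma p_eq_q_right (hV : IsPairPartition m V) (hc : IsColoring m V c) (b : ℤ) (u : ℕ) :
    pcount V c b u = qcount V c b u + if isRightPt V u ∧ c u = b then 1 else 0 := by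
  rw [← card_right_at hV hc b u]
  rw [pcount, qcount, ← card_union_of_disjoint]
  · congr 1
    ext p
    simp only [mem_union, mem_filter]
    constructor
    · rintro ⟨hp, h1, h2, h3⟩
      rcases eq_or_lt_of_le h2 with h | h
      · exact Or.inr ⟨hp, h.symm, h3⟩
      · exact Or.inl ⟨hp, h1, h, h3⟩
    · rintro (⟨hp, h1, h2, h3⟩ | ⟨hp, h1, h2⟩)
      · exact ⟨hp, h1, le_of_lt h2, h3⟩
      · have := (hV.1 p hp).1
        exact ⟨hp, by omega, by omega, h2⟩
  · rw [disjoint_left]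
    rintro p hp1 hp2
    simp only [mem_filter] at hp1 hp2
    omega

lemma p_succ_eq_q (hV : IsPairPartition m V) (hc : IsColoring m V c) (b : ℤ) (u : ℕ) :
    pcount V c b (u + 1) = qcount V c b u + if isLeftPt V (u+1) ∧ c (u+1) = b then 1 else 0 := by
  rw [← card_left_at hV hc b (u+1)]
  rw [pcount, qcount, ← card_union_of_disjoint]
  · congr 1
    ext p
    simp only [mem_union, mem_filter]
    constructor
    · rintro ⟨hp, h1, h2, h3⟩
      rcases eq_or_lt_of_le h1 with h | h
      · exact Or.inr ⟨hp, h, h3⟩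
      · exact Or.inl ⟨hp, by omega, by omega, h3⟩
    · rintro (⟨hp, h1, h2, h3⟩ | ⟨hp, h1, h2⟩)
      · exact ⟨hp, by omega, by omega, h3⟩
      · have := (hV.1 p hp).1
        exact ⟨hp, by omega, by omega, h2⟩
  · rw [disjoint_left]
    rintro p hp1 hp2
    simp only [mem_filter] at hp1 hp2
    omega

lemma qstep (hV : IsPairPartition m V) (hc : IsColoring m V c) (b : ℤ) (u : ℕ) :
    qcount V c b (u+1) + (if isRightPt V (u+1) ∧ c (u+1) = b then 1 else 0)
      = qcount V c b u + (if isLeftPt V (u+1) ∧ c (u+1) = b then 1 else 0) := by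
  rw [← p_eq_q_right hV hc b (u+1), p_succ_eq_q hV hc b u]


def Fwd (V : Finset (ℕ × ℕ)) (c : ℕ → ℤ) (k : ℕ) : Prop :=
  (isLeftPt V k ∧ inDom V c k) ∨ (isRightPt V k ∧ ¬ inDom V c k)

def Bwd (V : Finset (ℕ × ℕ)) (c : ℕ → ℤ) (k : ℕ) : Prop :=
  (isRightPt V k ∧ inDom V c k) ∨ (isLeftPt V k ∧ ¬ inDom V c k)

noncomputable def Nst (V : Finset (ℕ × ℕ)) (c : ℕ → ℤ) (v : ℕ) (u : ℕ) : ℕ :=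
  (if v ≤ qcount V c 1 u then 1 else 0) + (if v ≤ qcount V c (-1) u then 1 else 0)

def StOK (V : Finset (ℕ × ℕ)) (c : ℕ → ℤ) (v u : ℕ) : Prop :=
  ¬ (v ≤ qcount V c 1 u) ∧ (v ≤ qcount V c (-1) u)

lemma flip_event (hV : IsPairPartition m V) (hc : IsColoring m V c) {v : ℕ} {b : ℤ} {u : ℕ}
    (h : ¬ ((v ≤ qcount V c b (u+1)) ↔ (v ≤ qcount V c b u))) :
    rcount V c (u+1) = v := by
  have hs := qstep hV hc b u
  by_cases hL : isLeftPt V (u+1) ∧ c (u+1) = b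
  · by_cases hR : isRightPt V (u+1) ∧ c (u+1) = b
    · exact absurd hR.1 (fun hr => left_not_right hV hL.1 hr)
    · rw [if_pos hL, if_neg hR] at hs
      have h1 := p_succ_eq_q hV hc b u
      rw [if_pos hL] at h1
      rw [rcount, hL.2]
      omega
  · by_cases hR : isRightPt V (u+1) ∧ c (u+1) = b
    · rw [if_pos hR, if_neg hL] at hs
      have h1 := p_eq_q_right hV hc b (u+1)
      rw [if_pos hR] at h1
      rw [rcount, hR.2]
      omega
    · rw [if_neg hR, if_neg hL] at hs
      omega

lemma state_const (hV : IsPairPartition m V) (hc : IsColoring m V c) {v : ℕ} (b : ℤ)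
    {w1 w2 : ℕ} (h12 : w1 ≤ w2) (H : ∀ u, w1 < u → u ≤ w2 → rcount V c u ≠ v) :
    ((v ≤ qcount V c b w2) ↔ (v ≤ qcount V c b w1)) := by
  induction w2, h12 using Nat.le_induction with
  | base => exact Iff.rfl
  | succ n hn ih =>
    have h1 : (v ≤ qcount V c b (n+1)) ↔ (v ≤ qcount V c b n) := by
      by_contra hcon
      exact H (n+1) (by omega) le_rfl (flip_event hV hc hcon)
    rw [h1]
    exact ih (fun u hu1 hu2 => H u hu1 (by omega))

lemma rcount_pos (hV : IsPairPartition m V) (hc : IsColoring m V c) {k : ℕ}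
    (h1 : 1 ≤ k) (h2 : k ≤ 2 * m) : 1 ≤ rcount V c k := by
  obtain ⟨p, ⟨hp, hpk⟩, _⟩ := hV.2 k h1 h2
  have hlt := (hV.1 p hp).1
  rw [rcount, pcount, Nat.succ_le_iff, Finset.card_pos]
  refine ⟨p, mem_filter.mpr ⟨hp, ?_, ?_, ?_⟩⟩
  · omega
  · omega
  · rcases hpk with h | h
    · rw [h]
    · rw [hc.1 p hp, h]

lemma event_main (hV : IsPairPartition m V) (hc : IsColoring m V c) {v w : ℕ}
    (h2 : w + 1 ≤ 2 * m) (hr : rcount V c (w+1) = v) (hv : 1 ≤ v) :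
    (Fwd V c (w+1) ↔ Nst V c v (w+1) = 1) ∧
    (Bwd V c (w+1) ↔ Nst V c v w = 1) ∧
    (Fwd V c (w+1) → (barColor V c (w+1) = 1 ↔ StOK V c v (w+1))) ∧
    (Bwd V c (w+1) → (barColor V c (w+1) = 1 ↔ StOK V c v w)) := by
  have hb : c (w+1) = 1 ∨ c (w+1) = -1 := hc.2 _ (by omega) h2
  rcases left_or_right hV (by omega : 1 ≤ w+1) h2 with hL | hR
  · have hnR : ¬ isRightPt V (w+1) := fun h => left_not_right hV hL h
    rcases hb with hb | hb
    · -- left point, color 1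
      have hpv : pcount V c 1 (w+1) = v := by rw [← hb, ← rcount]; exact hr
      have hA : qcount V c 1 w + 1 = v := by
        have h1 := p_succ_eq_q hV hc 1 w
        rw [if_pos ⟨hL, hb⟩] at h1
        omega
      have hB : qcount V c 1 (w+1) = v := by
        have h1 := p_eq_q_right hV hc 1 (w+1)
        rw [if_neg (fun h => hnR h.1)] at h1
        omega
      have hC : qcount V c (-1) (w+1) = qcount V c (-1) w := by
        have h1 := qstep hV hc (-1) w
        rw [if_neg (fun h => by rw [hb] at h; exact absurd h.2 (by decide)),
            if_neg (fun h => by rw [hb] at h; exact absurd h.2 (by decide))] at h1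
        omega
      have hD : inDom V c (w+1) ↔ qcount V c (-1) (w+1) < v := by
        have h1 := p_eq_q_right hV hc (-1) (w+1)
        rw [if_neg (fun h => by rw [hb] at h; exact absurd h.2 (by decide))] at h1
        simp only [inDom, hr, hb]
        omega
      refine ⟨?_, ?_, ?_, ?_⟩
      · simp only [Fwd, Nst]
        constructor
        · rintro (⟨_, hd⟩ | ⟨hr', _⟩)
          · rw [hD] at hd
            rw [if_pos (show v ≤ qcount V c 1 (w+1) by omega),
                if_neg (show ¬ v ≤ qcount V c (-1) (w+1) by omega)]
          · exact absurd hr' hnR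
        · intro hN
          left
          refine ⟨hL, hD.mpr ?_⟩
          by_contra hcon
          rw [if_pos (show v ≤ qcount V c 1 (w+1) by omega),
              if_pos (show v ≤ qcount V c (-1) (w+1) by omega)] at hN
          omega
      · simp only [Bwd, Nst]
        rw [if_neg (show ¬ v ≤ qcount V c 1 w by omega)]
        constructor
        · rintro (⟨hr', _⟩ | ⟨_, hnd⟩)
          · exact absurd hr' hnR
          · rw [hD] at hnd
            rw [if_pos (show v ≤ qcount V c (-1) w by omega)]
        · intro hN
          have hyw : v ≤ qcount V c (-1) w := by
            by_contra hcon
            rw [if_neg hcon] at hN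
            omega
          exact Or.inr ⟨hL, by rw [hD]; omega⟩
      · rintro (⟨_, hd⟩ | ⟨hr', _⟩)
        · have hd' := hD.mp hd
          rw [barColor, if_pos hd, hb]
          simp only [StOK]
          constructor
          · intro hcontra; exact absurd hcontra (by decide)
          · rintro ⟨hX, hY⟩; omega
        · exact absurd hr' hnR
      · rintro (⟨hr', _⟩ | ⟨_, hnd⟩)
        · exact absurd hr' hnR
        · rw [barColor, if_neg hnd, hb]
          simp only [StOK]
          rw [hD] at hnd
          constructor
          · intro _; exact ⟨by omega, by omega⟩
          · intro _; trivial
    · -- left point, color -1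
      have hpv : pcount V c (-1) (w+1) = v := by rw [← hb, ← rcount]; exact hr
      have hA : qcount V c (-1) w + 1 = v := by
        have h1 := p_succ_eq_q hV hc (-1) w
        rw [if_pos ⟨hL, hb⟩] at h1
        omega
      have hB : qcount V c (-1) (w+1) = v := by
        have h1 := p_eq_q_right hV hc (-1) (w+1)
        rw [if_neg (fun h => hnR h.1)] at h1
        omega
      have hC : qcount V c 1 (w+1) = qcount V c 1 w := by
        have h1 := qstep hV hc 1 w
        rw [if_neg (fun h => by rw [hb] at h; exact absurd h.2 (by decide)),
            if_neg (fun h => by rw [hb] at h; exact absurd h.2 (by decide))] at h1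
        omega
      have hD : inDom V c (w+1) ↔ qcount V c 1 (w+1) < v := by
        have h1 := p_eq_q_right hV hc 1 (w+1)
        rw [if_neg (fun h => by rw [hb] at h; exact absurd h.2 (by decide))] at h1
        simp only [inDom, hr, hb, neg_neg]
        omega
      refine ⟨?_, ?_, ?_, ?_⟩
      · simp only [Fwd, Nst]
        rw [if_pos (show v ≤ qcount V c (-1) (w+1) by omega)]
        constructor
        · rintro (⟨_, hd⟩ | ⟨hr', _⟩)
          · rw [hD] at hd
            rw [if_neg (show ¬ v ≤ qcount V c 1 (w+1) by omega)]
          · exact absurd hr' hnR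
        · intro hN
          left
          refine ⟨hL, hD.mpr ?_⟩
          by_contra hcon
          rw [if_pos (show v ≤ qcount V c 1 (w+1) by omega)] at hN
          omega
      · simp only [Bwd, Nst]
        rw [if_neg (show ¬ v ≤ qcount V c (-1) w by omega)]
        constructor
        · rintro (⟨hr', _⟩ | ⟨_, hnd⟩)
          · exact absurd hr' hnR
          · rw [hD] at hnd
            rw [if_pos (show v ≤ qcount V c 1 w by omega)]
        · intro hN
          have hyw : v ≤ qcount V c 1 w := by
            by_contra hcon
            rw [if_neg hcon] at hN
            omega
          exact Or.inr ⟨hL, by rw [hD]; omega⟩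
      · rintro (⟨_, hd⟩ | ⟨hr', _⟩)
        · have hd' := hD.mp hd
          rw [barColor, if_pos hd, hb]
          simp only [StOK]
          constructor
          · intro _; exact ⟨by omega, by omega⟩
          · intro _; decide
        · exact absurd hr' hnR
      · rintro (⟨hr', _⟩ | ⟨_, hnd⟩)
        · exact absurd hr' hnR
        · rw [barColor, if_neg hnd, hb]
          simp only [StOK]
          rw [hD] at hnd
          constructor
          · intro hcontra; exact absurd hcontra (by decide)
          · rintro ⟨hX, hY⟩; omega
  · have hnL : ¬ isLeftPt V (w+1) := fun h => left_not_right hV h hR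
    rcases hb with hb | hb
    · -- right point, color 1
      have hpv : pcount V c 1 (w+1) = v := by rw [← hb, ← rcount]; exact hr
      have hA : qcount V c 1 w = v := by
        have h1 := p_succ_eq_q hV hc 1 w
        rw [if_neg (fun h => hnL h.1)] at h1
        omega
      have hB : qcount V c 1 (w+1) + 1 = v := by
        have h1 := p_eq_q_right hV hc 1 (w+1)
        rw [if_pos ⟨hR, hb⟩] at h1
        omega
      have hC : qcount V c (-1) (w+1) = qcount V c (-1) w := by
        have h1 := qstep hV hc (-1) w
        rw [if_neg (fun h => by rw [hb] at h; exact absurd h.2 (by decide)),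
            if_neg (fun h => by rw [hb] at h; exact absurd h.2 (by decide))] at h1
        omega
      have hD : inDom V c (w+1) ↔ qcount V c (-1) (w+1) < v := by
        have h1 := p_eq_q_right hV hc (-1) (w+1)
        rw [if_neg (fun h => by rw [hb] at h; exact absurd h.2 (by decide))] at h1
        simp only [inDom, hr, hb]
        omega
      refine ⟨?_, ?_, ?_, ?_⟩
      · simp only [Fwd, Nst]
        rw [if_neg (show ¬ v ≤ qcount V c 1 (w+1) by omega)]
        constructor
        · rintro (⟨hl', _⟩ | ⟨_, hnd⟩)
          · exact absurd hl' hnL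
          · rw [hD] at hnd
            rw [if_pos (show v ≤ qcount V c (-1) (w+1) by omega)]
        · intro hN
          right
          refine ⟨hR, ?_⟩
          rw [hD]
          have : v ≤ qcount V c (-1) (w+1) := by
            by_contra hcon
            rw [if_neg hcon] at hN
            omega
          omega
      · simp only [Bwd, Nst]
        rw [if_pos (show v ≤ qcount V c 1 w by omega)]
        constructor
        · rintro (⟨_, hd⟩ | ⟨hl', _⟩)
          · rw [hD] at hd
            rw [if_neg (show ¬ v ≤ qcount V c (-1) w by omega)]
          · exact absurd hl' hnL
        · intro hN
          left
          refine ⟨hR, hD.mpr ?_⟩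
          by_contra hcon
          rw [if_pos (show v ≤ qcount V c (-1) w by omega)] at hN
          omega
      · rintro (⟨hl', _⟩ | ⟨_, hnd⟩)
        · exact absurd hl' hnL
        · rw [barColor, if_neg hnd, hb]
          simp only [StOK]
          rw [hD] at hnd
          constructor
          · intro _; exact ⟨by omega, by omega⟩
          · intro _; trivial
      · rintro (⟨_, hd⟩ | ⟨hl', _⟩)
        · rw [barColor, if_pos hd, hb]
          simp only [StOK]
          constructor
          · intro hcontra; exact absurd hcontra (by decide)
          · rintro ⟨hX, hY⟩; omega
        · exact absurd hl' hnL
    · -- right point, color -1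
      have hpv : pcount V c (-1) (w+1) = v := by rw [← hb, ← rcount]; exact hr
      have hA : qcount V c (-1) w = v := by
        have h1 := p_succ_eq_q hV hc (-1) w
        rw [if_neg (fun h => hnL h.1)] at h1
        omega
      have hB : qcount V c (-1) (w+1) + 1 = v := by
        have h1 := p_eq_q_right hV hc (-1) (w+1)
        rw [if_pos ⟨hR, hb⟩] at h1
        omega
      have hC : qcount V c 1 (w+1) = qcount V c 1 w := by
        have h1 := qstep hV hc 1 w
        rw [if_neg (fun h => by rw [hb] at h; exact absurd h.2 (by decide)),
            if_neg (fun h => by rw [hb] at h; exact absurd h.2 (by decide))] at h1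
        omega
      have hD : inDom V c (w+1) ↔ qcount V c 1 (w+1) < v := by
        have h1 := p_eq_q_right hV hc 1 (w+1)
        rw [if_neg (fun h => by rw [hb] at h; exact absurd h.2 (by decide))] at h1
        simp only [inDom, hr, hb, neg_neg]
        omega
      refine ⟨?_, ?_, ?_, ?_⟩
      · simp only [Fwd, Nst]
        rw [if_neg (show ¬ v ≤ qcount V c (-1) (w+1) by omega)]
        constructor
        · rintro (⟨hl', _⟩ | ⟨_, hnd⟩)
          · exact absurd hl' hnL
          · rw [hD] at hnd
            rw [if_pos (show v ≤ qcount V c 1 (w+1) by omega)]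
        · intro hN
          right
          refine ⟨hR, ?_⟩
          rw [hD]
          have : v ≤ qcount V c 1 (w+1) := by
            by_contra hcon
            rw [if_neg hcon] at hN
            omega
          omega
      · simp only [Bwd, Nst]
        rw [if_pos (show v ≤ qcount V c (-1) w by omega)]
        constructor
        · rintro (⟨_, hd⟩ | ⟨hl', _⟩)
          · rw [hD] at hd
            rw [if_neg (show ¬ v ≤ qcount V c 1 w by omega)]
          · exact absurd hl' hnL
        · intro hN
          left
          refine ⟨hR, hD.mpr ?_⟩
          by_contra hcon
          rw [if_pos (show v ≤ qcount V c 1 w by omega)] at hN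
          omega
      · rintro (⟨hl', _⟩ | ⟨_, hnd⟩)
        · exact absurd hl' hnL
        · rw [barColor, if_neg hnd, hb]
          simp only [StOK]
          constructor
          · intro hcontra; exact absurd hcontra (by decide)
          · rintro ⟨hX, hY⟩; omega
      · rintro (⟨_, hd⟩ | ⟨hl', _⟩)
        · rw [barColor, if_pos hd, hb]
          rw [hD] at hd
          simp only [StOK]
          constructor
          · intro _; exact ⟨by omega, by omega⟩
          · intro _; decide
        · exact absurd hl' hnL

lemma fwd_or_bwd (hV : IsPairPartition m V) {k : ℕ} (h1 : 1 ≤ k) (h2 : k ≤ 2 * m) :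
    Fwd V c k ∨ Bwd V c k := by
  rcases left_or_right hV h1 h2 with h | h
  · by_cases hd : inDom V c k
    · exact Or.inl (Or.inl ⟨h, hd⟩)
    · exact Or.inr (Or.inr ⟨h, hd⟩)
  · by_cases hd : inDom V c k
    · exact Or.inr (Or.inl ⟨h, hd⟩)
    · exact Or.inl (Or.inr ⟨h, hd⟩)

lemma barColor_pm (hc : IsColoring m V c) {k : ℕ} (h1 : 1 ≤ k) (h2 : k ≤ 2 * m) :
    barColor V c k = 1 ∨ barColor V c k = -1 := by
  have := hc.2 k h1 h2
  rw [barColor]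
  split_ifs <;> omega

lemma pack_fwd (hV : IsPairPartition m V) (hc : IsColoring m V c) {Z : ℕ → ℕ}
    (hZ : IsZmap m V c Z) {k : ℕ} (h1 : 1 ≤ k) (h2 : k ≤ 2 * m) (hf : Fwd V c k) :
    k < Z k ∧ 1 ≤ Z k ∧ Z k ≤ 2 * m ∧ Bwd V c (Z k) ∧ Z (Z k) = k ∧
      barColor V c (Z k) = barColor V c k ∧ rcount V c (Z k) = rcount V c k := by
  have hleast := (hZ k h1 h2).1 hf
  obtain ⟨hmem, hlb⟩ := hleast
  simp only [Set.mem_setOf_eq] at hmem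
  obtain ⟨⟨hz1, hz2⟩, hzk, hzr⟩ := hmem
  have hnomid : ∀ u, k < u → u < Z k → rcount V c u ≠ rcount V c k := by
    intro u hu1 hu2 hru
    have hmemu : u ∈ {k' : ℕ | (1 ≤ k' ∧ k' ≤ 2 * m) ∧ k < k' ∧ rcount V c k' = rcount V c k} :=
      ⟨⟨by omega, by omega⟩, hu1, hru⟩
    have := hlb hmemu
    omega
  have hv : 1 ≤ rcount V c k := rcount_pos hV hc h1 h2
  obtain ⟨wk, rfl⟩ : ∃ wk, k = wk + 1 := ⟨k - 1, by omega⟩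
  obtain ⟨wz, hwz⟩ : ∃ wz, Z (wk + 1) = wz + 1 := ⟨Z (wk+1) - 1, by omega⟩
  have Ek := event_main hV hc h2 (rfl : rcount V c (wk+1) = rcount V c (wk+1)) hv
  have hNk : Nst V c (rcount V c (wk+1)) (wk+1) = 1 := Ek.1.mp hf
  have hle : wk + 1 ≤ wz := by omega
  have H : ∀ u, wk + 1 < u → u ≤ wz → rcount V c u ≠ rcount V c (wk+1) := by
    intro u hu1 hu2
    exact hnomid u hu1 (by omega)
  have hs1 := state_const hV hc (v := rcount V c (wk+1)) 1 hle H
  have hs2 := state_const hV hc (v := rcount V c (wk+1)) (-1) hle H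
  have hNz : Nst V c (rcount V c (wk+1)) wz = 1 := by
    rw [Nst] at hNk ⊢
    rw [if_congr hs1 rfl rfl, if_congr hs2 rfl rfl]
    exact hNk
  have hrz : rcount V c (wz + 1) = rcount V c (wk+1) := by rw [← hwz]; exact hzr
  have Ez := event_main hV hc (show wz + 1 ≤ 2 * m by omega) hrz hv
  have hbz : Bwd V c (Z (wk+1)) := by rw [hwz]; exact Ez.2.1.mpr hNz
  have hzz := (hZ (Z (wk+1)) hz1 hz2).2 hbz
  obtain ⟨hzzmem, hzzub⟩ := hzz
  simp only [Set.mem_setOf_eq] at hzzmem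
  obtain ⟨⟨hq1, hq2⟩, hqlt, hqr⟩ := hzzmem
  have hkmem : (wk+1) ∈ {k' : ℕ | (1 ≤ k' ∧ k' ≤ 2 * m) ∧ k' < Z (wk+1) ∧
      rcount V c k' = rcount V c (Z (wk+1))} := ⟨⟨h1, h2⟩, hzk, by rw [hzr]⟩
  have hge : wk + 1 ≤ Z (Z (wk+1)) := hzzub hkmem
  have hzzk : Z (Z (wk+1)) = wk + 1 := by
    rcases eq_or_lt_of_le hge with h | h
    · omega
    · exfalso
      exact hnomid (Z (Z (wk+1))) h hqlt (by rw [hqr, hzr])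
  refine ⟨hzk, hz1, hz2, hbz, hzzk, ?_, hzr⟩
  have hbck := Ek.2.2.1 hf
  have hbcz : barColor V c (Z (wk+1)) = 1 ↔ StOK V c (rcount V c (wk+1)) wz := by
    rw [hwz]
    exact Ez.2.2.2 (by rw [← hwz]; exact hbz)
  have hstiff : StOK V c (rcount V c (wk+1)) wz ↔ StOK V c (rcount V c (wk+1)) (wk+1) := by
    simp only [StOK]
    rw [hs1, hs2]
  have hiff : barColor V c (Z (wk+1)) = 1 ↔ barColor V c (wk+1) = 1 := by
    rw [hbcz, hstiff, hbck]
  have hp1 := barColor_pm hc h1 h2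
  have hp2 := barColor_pm hc hz1 hz2
  omega

lemma pack_bwd (hV : IsPairPartition m V) (hc : IsColoring m V c) {Z : ℕ → ℕ}
    (hZ : IsZmap m V c Z) {k : ℕ} (h1 : 1 ≤ k) (h2 : k ≤ 2 * m) (hf : Bwd V c k) :
    Z k < k ∧ 1 ≤ Z k ∧ Z k ≤ 2 * m ∧ Fwd V c (Z k) ∧ Z (Z k) = k ∧
      barColor V c (Z k) = barColor V c k ∧ rcount V c (Z k) = rcount V c k := by
  have hgreat := (hZ k h1 h2).2 hf
  obtain ⟨hmem, hub⟩ := hgreat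
  simp only [Set.mem_setOf_eq] at hmem
  obtain ⟨⟨hz1, hz2⟩, hzk, hzr⟩ := hmem
  have hnomid : ∀ u, Z k < u → u < k → rcount V c u ≠ rcount V c k := by
    intro u hu1 hu2 hru
    have hmemu : u ∈ {k' : ℕ | (1 ≤ k' ∧ k' ≤ 2 * m) ∧ k' < k ∧ rcount V c k' = rcount V c k} :=
      ⟨⟨by omega, by omega⟩, hu2, hru⟩
    have := hub hmemu
    omega
  have hv : 1 ≤ rcount V c k := rcount_pos hV hc h1 h2
  obtain ⟨wk, rfl⟩ : ∃ wk, k = wk + 1 := ⟨k - 1, by omega⟩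
  obtain ⟨wz, hwz⟩ : ∃ wz, Z (wk + 1) = wz + 1 := ⟨Z (wk+1) - 1, by omega⟩
  have Ek := event_main hV hc h2 (rfl : rcount V c (wk+1) = rcount V c (wk+1)) hv
  have hNk : Nst V c (rcount V c (wk+1)) wk = 1 := Ek.2.1.mp hf
  have hle : wz + 1 ≤ wk := by omega
  have H : ∀ u, wz + 1 < u → u ≤ wk → rcount V c u ≠ rcount V c (wk+1) := by
    intro u hu1 hu2
    exact hnomid u (by omega) (by omega)
  have hs1 := state_const hV hc (v := rcount V c (wk+1)) 1 hle H
  have hs2 := state_const hV hc (v := rcount V c (wk+1)) (-1) hle H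
  have hNz : Nst V c (rcount V c (wk+1)) (wz + 1) = 1 := by
    rw [Nst] at hNk ⊢
    rw [if_congr hs1 rfl rfl, if_congr hs2 rfl rfl] at hNk
    exact hNk
  have hrz : rcount V c (wz + 1) = rcount V c (wk+1) := by rw [← hwz]; exact hzr
  have Ez := event_main hV hc (show wz + 1 ≤ 2 * m by omega) hrz hv
  have hfz : Fwd V c (Z (wk+1)) := by rw [hwz]; exact Ez.1.mpr hNz
  have hzz := (hZ (Z (wk+1)) hz1 hz2).1 hfz
  obtain ⟨hzzmem, hzzlb⟩ := hzz
  simp only [Set.mem_setOf_eq] at hzzmem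
  obtain ⟨⟨hq1, hq2⟩, hqlt, hqr⟩ := hzzmem
  have hkmem : (wk+1) ∈ {k' : ℕ | (1 ≤ k' ∧ k' ≤ 2 * m) ∧ Z (wk+1) < k' ∧
      rcount V c k' = rcount V c (Z (wk+1))} := ⟨⟨h1, h2⟩, hzk, by rw [hzr]⟩
  have hge : Z (Z (wk+1)) ≤ wk + 1 := hzzlb hkmem
  have hzzk : Z (Z (wk+1)) = wk + 1 := by
    rcases eq_or_lt_of_le hge with h | h
    · omega
    · exfalso
      exact hnomid (Z (Z (wk+1))) hqlt h (by rw [hqr, hzr])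
  refine ⟨hzk, hz1, hz2, hfz, hzzk, ?_, hzr⟩
  have hbck := Ek.2.2.2 hf
  have hbcz : barColor V c (Z (wk+1)) = 1 ↔ StOK V c (rcount V c (wk+1)) (wz+1) := by
    rw [hwz]
    exact Ez.2.2.1 (by rw [← hwz]; exact hfz)
  have hstiff : StOK V c (rcount V c (wk+1)) (wz+1) ↔ StOK V c (rcount V c (wk+1)) wk := by
    simp only [StOK]
    rw [hs1, hs2]
  have hiff : barColor V c (Z (wk+1)) = 1 ↔ barColor V c (wk+1) = 1 := by
    rw [hbcz, hstiff, hbck]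
  have hp1 := barColor_pm hc h1 h2
  have hp2 := barColor_pm hc hz1 hz2
  omega

lemma KT (hV : IsPairPartition m V) (hc : IsColoring m V c) {k : ℕ} (h1 : 1 ≤ k) (h2 : k ≤ 2*m) :
    (((Fwd V c k ∧ barColor V c k = 1) ∨ (Bwd V c k ∧ barColor V c k = -1)) ↔
      ¬ ((isLeftPt V k ∧ c k = 1) ∨ (isRightPt V k ∧ c k = -1))) := by
  have hck := hc.2 k h1 h2
  rcases left_or_right hV h1 h2 with hL | hR
  · have hnR : ¬ isRightPt V k := fun h => left_not_right hV hL h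
    by_cases hd : inDom V c k
    · simp [Fwd, Bwd, barColor, hL, hnR, hd]
      omega
    · simp [Fwd, Bwd, barColor, hL, hnR, hd]
      omega
  · have hnL : ¬ isLeftPt V k := fun h => left_not_right hV h hR
    by_cases hd : inDom V c k
    · simp [Fwd, Bwd, barColor, hR, hnL, hd]
      omega
    · simp [Fwd, Bwd, barColor, hR, hnL, hd]
      omega

lemma KH (hV : IsPairPartition m V) (hc : IsColoring m V c) {k : ℕ} (h1 : 1 ≤ k) (h2 : k ≤ 2*m) :
    (((Fwd V c k ∧ barColor V c k = -1) ∨ (Bwd V c k ∧ barColor V c k = 1)) ↔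
      ¬ ((isLeftPt V k ∧ c k = -1) ∨ (isRightPt V k ∧ c k = 1))) := by
  have hck := hc.2 k h1 h2
  rcases left_or_right hV h1 h2 with hL | hR
  · have hnR : ¬ isRightPt V k := fun h => left_not_right hV hL h
    by_cases hd : inDom V c k
    · simp [Fwd, Bwd, barColor, hL, hnR, hd]
      omega
    · simp [Fwd, Bwd, barColor, hL, hnR, hd]
      omega
  · have hnL : ¬ isLeftPt V k := fun h => left_not_right hV h hR
    by_cases hd : inDom V c k
    · simp [Fwd, Bwd, barColor, hR, hnL, hd]
      omega
    · simp [Fwd, Bwd, barColor, hR, hnL, hd]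
      omega

lemma barF_shape_tail (hV : IsPairPartition m V) (hc : IsColoring m V c) {Z : ℕ → ℕ}
    (hZ : IsZmap m V c Z) {a : ℕ × ℕ} {k : ℕ}
    (ha : a ∈ arcsBarF m V c Z) (hak : a.1 = k) :
    a = (k, Z k) ∧ ((Fwd V c k ∧ barColor V c k = 1) ∨ (Bwd V c k ∧ barColor V c k = -1)) := by
  rw [arcsBarF, mem_image] at ha
  obtain ⟨j, hj, hae⟩ := ha
  rw [mem_filter, mem_Icc] at hj
  obtain ⟨⟨hj1, hj2⟩, hjz⟩ := hj
  have hfj : Fwd V c j := by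
    rcases fwd_or_bwd hV hj1 hj2 with h | h
    · exact h
    · exfalso
      have := (pack_bwd hV hc hZ hj1 hj2 h).1
      omega
  obtain ⟨hlt, hz1, hz2, hbz, hzz, hbcz, _⟩ := pack_fwd hV hc hZ hj1 hj2 hfj
  by_cases hbc : barColor V c j = 1
  · rw [if_pos hbc] at hae
    have hjk : j = k := by rw [← hae] at hak; exact hak
    subst hjk
    exact ⟨hae.symm, Or.inl ⟨hfj, hbc⟩⟩
  · rw [if_neg hbc] at hae
    have hjk : Z j = k := by rw [← hae] at hak; exact hak
    subst hjk
    have hbc2 : barColor V c (Z j) = -1 := by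
      rcases barColor_pm hc hj1 hj2 with h | h
      · omega
      · omega
    refine ⟨?_, Or.inr ⟨hbz, hbc2⟩⟩
    rw [hzz]
    exact hae.symm

lemma barF_shape_head (hV : IsPairPartition m V) (hc : IsColoring m V c) {Z : ℕ → ℕ}
    (hZ : IsZmap m V c Z) {a : ℕ × ℕ} {k : ℕ}
    (ha : a ∈ arcsBarF m V c Z) (hak : a.2 = k) :
    a = (Z k, k) ∧ ((Fwd V c k ∧ barColor V c k = -1) ∨ (Bwd V c k ∧ barColor V c k = 1)) := by
  rw [arcsBarF, mem_image] at ha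
  obtain ⟨j, hj, hae⟩ := ha
  rw [mem_filter, mem_Icc] at hj
  obtain ⟨⟨hj1, hj2⟩, hjz⟩ := hj
  have hfj : Fwd V c j := by
    rcases fwd_or_bwd hV hj1 hj2 with h | h
    · exact h
    · exfalso
      have := (pack_bwd hV hc hZ hj1 hj2 h).1
      omega
  obtain ⟨hlt, hz1, hz2, hbz, hzz, hbcz, _⟩ := pack_fwd hV hc hZ hj1 hj2 hfj
  by_cases hbc : barColor V c j = 1
  · rw [if_pos hbc] at hae
    have hjk : Z j = k := by rw [← hae] at hak; exact hak
    subst hjk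
    have hbc2 : barColor V c (Z j) = 1 := by rw [hbcz]; exact hbc
    refine ⟨?_, Or.inr ⟨hbz, hbc2⟩⟩
    rw [hzz]
    exact hae.symm
  · rw [if_neg hbc] at hae
    have hjk : j = k := by rw [← hae] at hak; exact hak
    subst hjk
    have hbc2 : barColor V c j = -1 := by
      rcases barColor_pm hc hj1 hj2 with h | h
      · omega
      · omega
    exact ⟨hae.symm, Or.inl ⟨hfj, hbc2⟩⟩

lemma barF_tail_exists (hV : IsPairPartition m V) (hc : IsColoring m V c) {Z : ℕ → ℕ}
    (hZ : IsZmap m V c Z) {k : ℕ} (h1 : 1 ≤ k) (h2 : k ≤ 2 * m)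
    (h : (Fwd V c k ∧ barColor V c k = 1) ∨ (Bwd V c k ∧ barColor V c k = -1)) :
    (k, Z k) ∈ arcsBarF m V c Z := by
  rw [arcsBarF, mem_image]
  rcases h with ⟨hf, hbc⟩ | ⟨hb, hbc⟩
  · refine ⟨k, ?_, ?_⟩
    · rw [mem_filter, mem_Icc]
      exact ⟨⟨h1, h2⟩, (pack_fwd hV hc hZ h1 h2 hf).1⟩
    · rw [if_pos hbc]
  · obtain ⟨hlt, hz1, hz2, hfz, hzz, hbcz, _⟩ := pack_bwd hV hc hZ h1 h2 hb
    refine ⟨Z k, ?_, ?_⟩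
    · rw [mem_filter, mem_Icc]
      exact ⟨⟨hz1, hz2⟩, by rw [hzz]; exact hlt⟩
    · rw [if_neg (by omega : ¬ barColor V c (Z k) = 1), hzz]

lemma barF_head_exists (hV : IsPairPartition m V) (hc : IsColoring m V c) {Z : ℕ → ℕ}
    (hZ : IsZmap m V c Z) {k : ℕ} (h1 : 1 ≤ k) (h2 : k ≤ 2 * m)
    (h : (Fwd V c k ∧ barColor V c k = -1) ∨ (Bwd V c k ∧ barColor V c k = 1)) :
    (Z k, k) ∈ arcsBarF m V c Z := by
  rw [arcsBarF, mem_image]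
  rcases h with ⟨hf, hbc⟩ | ⟨hb, hbc⟩
  · refine ⟨k, ?_, ?_⟩
    · rw [mem_filter, mem_Icc]
      exact ⟨⟨h1, h2⟩, (pack_fwd hV hc hZ h1 h2 hf).1⟩
    · rw [if_neg (by omega : ¬ barColor V c k = 1)]
  · obtain ⟨hlt, hz1, hz2, hfz, hzz, hbcz, _⟩ := pack_bwd hV hc hZ h1 h2 hb
    refine ⟨Z k, ?_, ?_⟩
    · rw [mem_filter, mem_Icc]
      exact ⟨⟨hz1, hz2⟩, by rw [hzz]; exact hlt⟩
    · rw [if_pos (by omega : barColor V c (Z k) = 1), hzz]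

lemma arcsF_tail (hV : IsPairPartition m V) (hc : IsColoring m V c) {a : ℕ × ℕ} {k : ℕ}
    (ha : a ∈ arcsF V c) (hak : a.1 = k) :
    ∃ q ∈ V, ((q.1 = k ∧ c k = 1) ∨ (q.2 = k ∧ c k = -1)) ∧
      a = (if c q.1 = 1 then q else (q.2, q.1)) := by
  rw [arcsF, mem_image] at ha
  obtain ⟨q, hq, hae⟩ := ha
  by_cases hcq : c q.1 = 1
  · rw [if_pos hcq] at hae
    refine ⟨q, hq, Or.inl ⟨?_, ?_⟩, by rw [if_pos hcq, hae]⟩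
    · rw [← hae] at hak; exact hak
    · rw [← hae] at hak; rw [← hak]; exact hcq
  · rw [if_neg hcq] at hae
    have hq2 : q.2 = k := by rw [← hae] at hak; exact hak
    have hcq2 : c q.1 = -1 := by
      have hr := pt_range1 hV hq
      rcases hc.2 q.1 hr.1 hr.2 with h | h
      · exact absurd h hcq
      · exact h
    refine ⟨q, hq, Or.inr ⟨hq2, ?_⟩, by rw [if_neg hcq, hae]⟩
    rw [← hq2, ← hc.1 q hq]
    exact hcq2

lemma arcsF_head (hV : IsPairPartition m V) (hc : IsColoring m V c) {a : ℕ × ℕ} {k : ℕ}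
    (ha : a ∈ arcsF V c) (hak : a.2 = k) :
    ∃ q ∈ V, ((q.1 = k ∧ c k = -1) ∨ (q.2 = k ∧ c k = 1)) ∧
      a = (if c q.1 = 1 then q else (q.2, q.1)) := by
  rw [arcsF, mem_image] at ha
  obtain ⟨q, hq, hae⟩ := ha
  by_cases hcq : c q.1 = 1
  · rw [if_pos hcq] at hae
    have hq2 : q.2 = k := by rw [← hae] at hak; exact hak
    refine ⟨q, hq, Or.inr ⟨hq2, ?_⟩, by rw [if_pos hcq, hae]⟩
    rw [← hq2, ← hc.1 q hq]
    exact hcq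
  · rw [if_neg hcq] at hae
    have hq1 : q.1 = k := by rw [← hae] at hak; exact hak
    have hcq2 : c q.1 = -1 := by
      have hr := pt_range1 hV hq
      rcases hc.2 q.1 hr.1 hr.2 with h | h
      · exact absurd h hcq
      · exact h
    refine ⟨q, hq, Or.inl ⟨hq1, ?_⟩, by rw [if_neg hcq, hae]⟩
    rw [← hq1]
    exact hcq2

end StmtTwelve

open StmtTwelve

/-- in the directed graph `G_{V,c}` (vertex set `[2m]`, arc set
`F ∪ barF`), every vertex is the tail of exactly one arc and the head of exactly one
arc; i.e. `G_{V,c}` is a union of vertex-disjoint directed cycles. -/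
theorem graph_degree_one (m : ℕ) (hm : 1 ≤ m) (V : Finset (ℕ × ℕ)) (c : ℕ → ℤ)
    (hV : IsPairPartition m V) (hc : IsColoring m V c)
    (Z : ℕ → ℕ) (hZ : IsZmap m V c Z) :
    ∀ k : ℕ, 1 ≤ k → k ≤ 2 * m →
      (∃! a : ℕ × ℕ, a ∈ arcsF V c ∪ arcsBarF m V c Z ∧ a.1 = k) ∧
      (∃! a : ℕ × ℕ, a ∈ arcsF V c ∪ arcsBarF m V c Z ∧ a.2 = k) := by
  intro k h1 h2
  obtain ⟨p, ⟨hp, hpk⟩, hpu⟩ := hV.2 k h1 h2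
  have hck : c k = 1 ∨ c k = -1 := hc.2 k h1 h2
  have hplt : p.1 < p.2 := (hV.1 p hp).1
  have hcp : c p.1 = c k := by
    rcases hpk with h | h
    · rw [h]
    · rw [hc.1 p hp, h]
  constructor
  · -- tails
    by_cases hTF : (p.1 = k ∧ c k = 1) ∨ (p.2 = k ∧ c k = -1)
    · refine ⟨if c p.1 = 1 then p else (p.2, p.1),
        ⟨mem_union_left _ (mem_image_of_mem _ hp), ?_⟩, ?_⟩
      · rcases hTF with ⟨hk1, hc1⟩ | ⟨hk2, hc2⟩
        · rw [if_pos (by rw [hcp]; exact hc1)]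
          exact hk1
        · rw [if_neg (by rw [hcp, hc2]; decide)]
          exact hk2
      · rintro a ⟨ha, hak⟩
        rcases mem_union.mp ha with haF | haB
        · obtain ⟨q, hq, hqk, hqa⟩ := arcsF_tail hV hc haF hak
          have hqp : q = p := pair_eq hV hq hp
            (by rcases hqk with ⟨h, _⟩ | ⟨h, _⟩; exacts [Or.inl h, Or.inr h]) hpk
          rw [hqa, hqp]
        · exfalso
          have hcontr := (barF_shape_tail hV hc hZ haB hak).2
          rw [KT hV hc h1 h2] at hcontr
          apply hcontr
          rcases hTF with ⟨hk1, hc1⟩ | ⟨hk2, hc2⟩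
          · exact Or.inl ⟨⟨p, hp, hk1⟩, hc1⟩
          · exact Or.inr ⟨⟨p, hp, hk2⟩, hc2⟩
    · have hGO : (Fwd V c k ∧ barColor V c k = 1) ∨ (Bwd V c k ∧ barColor V c k = -1) := by
        rw [KT hV hc h1 h2]
        rintro (⟨⟨q, hq, hq1⟩, hc1⟩ | ⟨⟨q, hq, hq2⟩, hc2⟩)
        · exact hTF (Or.inl ⟨by rw [← pair_eq hV hq hp (Or.inl hq1) hpk]; exact hq1, hc1⟩)
        · exact hTF (Or.inr ⟨by rw [← pair_eq hV hq hp (Or.inr hq2) hpk]; exact hq2, hc2⟩)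
      refine ⟨(k, Z k), ⟨mem_union_right _ (barF_tail_exists hV hc hZ h1 h2 hGO), rfl⟩, ?_⟩
      rintro a ⟨ha, hak⟩
      rcases mem_union.mp ha with haF | haB
      · exfalso
        obtain ⟨q, hq, hqk, hqa⟩ := arcsF_tail hV hc haF hak
        apply hTF
        have hqp : q = p := pair_eq hV hq hp
          (by rcases hqk with ⟨h, _⟩ | ⟨h, _⟩; exacts [Or.inl h, Or.inr h]) hpk
        rw [← hqp]
        exact hqk
      · exact (barF_shape_tail hV hc hZ haB hak).1
  · -- heads
    by_cases hTH : (p.1 = k ∧ c k = -1) ∨ (p.2 = k ∧ c k = 1)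
    · refine ⟨if c p.1 = 1 then p else (p.2, p.1),
        ⟨mem_union_left _ (mem_image_of_mem _ hp), ?_⟩, ?_⟩
      · rcases hTH with ⟨hk1, hc1⟩ | ⟨hk2, hc2⟩
        · rw [if_neg (by rw [hcp, hc1]; decide)]
          exact hk1
        · rw [if_pos (by rw [hcp]; exact hc2)]
          exact hk2
      · rintro a ⟨ha, hak⟩
        rcases mem_union.mp ha with haF | haB
        · obtain ⟨q, hq, hqk, hqa⟩ := arcsF_head hV hc haF hak
          have hqp : q = p := pair_eq hV hq hp
            (by rcases hqk with ⟨h, _⟩ | ⟨h, _⟩; exacts [Or.inl h, Or.inr h]) hpk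
          rw [hqa, hqp]
        · exfalso
          have hcontr := (barF_shape_head hV hc hZ haB hak).2
          rw [KH hV hc h1 h2] at hcontr
          apply hcontr
          rcases hTH with ⟨hk1, hc1⟩ | ⟨hk2, hc2⟩
          · exact Or.inl ⟨⟨p, hp, hk1⟩, hc1⟩
          · exact Or.inr ⟨⟨p, hp, hk2⟩, hc2⟩
    · have hGO : (Fwd V c k ∧ barColor V c k = -1) ∨ (Bwd V c k ∧ barColor V c k = 1) := by
        rw [KH hV hc h1 h2]
        rintro (⟨⟨q, hq, hq1⟩, hc1⟩ | ⟨⟨q, hq, hq2⟩, hc2⟩)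
        · exact hTH (Or.inl ⟨by rw [← pair_eq hV hq hp (Or.inl hq1) hpk]; exact hq1, hc1⟩)
        · exact hTH (Or.inr ⟨by rw [← pair_eq hV hq hp (Or.inr hq2) hpk]; exact hq2, hc2⟩)
      refine ⟨(Z k, k), ⟨mem_union_right _ (barF_head_exists hV hc hZ h1 h2 hGO), rfl⟩, ?_⟩
      rintro a ⟨ha, hak⟩
      rcases mem_union.mp ha with haF | haB
      · exfalso
        obtain ⟨q, hq, hqk, hqa⟩ := arcsF_head hV hc haF hak
        apply hTH
        have hqp : q = p := pair_eq hV hq hp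
          (by rcases hqk with ⟨h, _⟩ | ⟨h, _⟩; exacts [Or.inl h, Or.inr h]) hpk
        rw [← hqp]
        exact hqk
      · exact (barF_shape_head hV hc hZ haB hak).1
end
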